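/- arXiv:2504.12926 — 5 statements merged into one kernel-verified Lean document; each statement's English description precedes it below -/
import Mathlib

section
/- For every initial condition a in the closed unit cube [0,1]^n, the solution x(t,a) of the closed-loop RFM with negative feedback satisfies x(t,a) ∈ (0,1)^n for all t > 0; in particular, [0,1]^n is forward invariant for the dynamics. -/
open scoped BigOperators
open Filter Set Topology

/-- Extend a vector `x : Fin n → ℝ` to a function on `ℕ` (zero outside the range). -/
noncomputable def extVec {n : ℕ} (x : Fin n → ℝ) (j : ℕ) : ℝ :=
  if h : j < n then x ⟨j, h⟩ else 0

/-- The flow from site `j` to site `j+1` (1-based paper indexing of the rates;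
`j = 0` is the initiation flow, `j = n` is the exit flow) in the closed-loop
ribosome flow model with negative feedback `u = k g(y)`. Densities are stored
0-based: Lean index `i` corresponds to the paper's site `i+1`. -/
noncomputable def rfmFlow (n : ℕ) (lam : ℕ → ℝ) (k : ℝ) (g : ℝ → ℝ)
    (x : Fin n → ℝ) (j : ℕ) : ℝ :=
  if j = 0 then lam 0 * k * g (lam n * extVec x (n - 1)) * (1 - extVec x 0)
  else if j = n then lam n * extVec x (n - 1)
  else lam j * extVec x (j - 1) * (1 - extVec x j)

/-- The vector field of the closed-loop RFM with negative feedback. -/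
noncomputable def rfmField (n : ℕ) (lam : ℕ → ℝ) (k : ℝ) (g : ℝ → ℝ)
    (x : Fin n → ℝ) : Fin n → ℝ :=
  fun i => rfmFlow n lam k g x i.val - rfmFlow n lam k g x (i.val + 1)


lemma aux_comp_deriv {n : ℕ} {x : ℝ → Fin n → ℝ} {v : Fin n → ℝ} {t : ℝ}
    (h : HasDerivAt x v t) (i : Fin n) : HasDerivAt (fun s => x s i) (v i) t := by
  have := ((ContinuousLinearMap.proj (R := ℝ) (φ := fun _ : Fin n => ℝ) i).hasFDerivAt).comp_hasDerivAt t h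
  exact this

lemma aux_slope_nonpos (φ : ℝ → ℝ) {d τ : ℝ} (hτ : 0 < τ) (hφ : HasDerivAt φ d τ)
    (hpos : ∀ s, 0 ≤ s → s < τ → 0 < φ s) (h0 : φ τ = 0) : d ≤ 0 := by
  have hs := hasDerivAt_iff_tendsto_slope.mp hφ
  have hs' : Tendsto (slope φ τ) (𝓝[<] τ) (𝓝 d) :=
    hs.mono_left (nhdsWithin_mono τ (fun s hs => ne_of_lt hs))
  refine le_of_tendsto hs' ?_
  filter_upwards [Ioo_mem_nhdsLT_of_mem (Set.mem_Ioc.mpr ⟨hτ, le_refl τ⟩)] with s hsm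
  have hφs : 0 < φ s := hpos s (le_of_lt hsm.1) hsm.2
  rw [slope_def_field, h0, sub_zero]
  exact le_of_lt (div_neg_of_pos_of_neg hφs (by linarith [hsm.2]))

lemma aux_grow (y d : ℝ → ℝ) (c a b : ℝ) (hab : a ≤ b)
    (hy : ∀ s ∈ Set.Icc a b, HasDerivAt y (d s) s)
    (hd : ∀ s ∈ Set.Icc a b, 0 ≤ d s + c * y s) :
    y a * Real.exp (c * a) ≤ y b * Real.exp (c * b) := by
  set ψ : ℝ → ℝ := fun s => y s * Real.exp (c * s) with hψ
  have hψd : ∀ s ∈ Set.Icc a b, HasDerivAt ψ ((d s + c * y s) * Real.exp (c * s)) s := by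
    intro s hs
    have h1 : HasDerivAt (fun u : ℝ => Real.exp (c * u)) (Real.exp (c * s) * c) s := by
      simpa using ((hasDerivAt_id s).const_mul c).exp
    have := (hy s hs).mul h1
    exact this.congr_deriv (by ring)
  have hmono : MonotoneOn ψ (Set.Icc a b) := by
    apply monotoneOn_of_deriv_nonneg (convex_Icc a b)
    · exact fun s hs => (hψd s hs).continuousAt.continuousWithinAt
    · intro s hs
      rw [interior_Icc] at hs
      exact (hψd s (Set.mem_Icc_of_Ioo hs)).differentiableAt.differentiableWithinAt
    · intro s hs
      rw [interior_Icc] at hs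
      have hs' := Set.mem_Icc_of_Ioo hs
      rw [(hψd s hs').deriv]
      exact mul_nonneg (hd s hs') (Real.exp_nonneg _)
  exact hmono (Set.left_mem_Icc.mpr hab) (Set.right_mem_Icc.mpr hab) hab

lemma aux_pos_of_grow {ya yb ea eb : ℝ} (h : ya * ea ≤ yb * eb) (hya : 0 < ya)
    (hea : 0 < ea) (heb : 0 < eb) : 0 < yb := by
  nlinarith

lemma extVec_lt {n : ℕ} (y : Fin n → ℝ) {j : ℕ} (h : j < n) : extVec y j = y ⟨j, h⟩ := dif_pos h

lemma flow_zero (n : ℕ) (lam : ℕ → ℝ) (k : ℝ) (g : ℝ → ℝ) (y : Fin n → ℝ) :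
    rfmFlow n lam k g y 0 = lam 0 * k * g (lam n * extVec y (n - 1)) * (1 - extVec y 0) := by
  simp [rfmFlow]

lemma flow_mid (n : ℕ) (lam : ℕ → ℝ) (k : ℝ) (g : ℝ → ℝ) (y : Fin n → ℝ) {j : ℕ}
    (h1 : j ≠ 0) (h2 : j ≠ n) :
    rfmFlow n lam k g y j = lam j * extVec y (j - 1) * (1 - extVec y j) := by
  simp [rfmFlow, h1, h2]

lemma flow_n (n : ℕ) (hn : n ≠ 0) (lam : ℕ → ℝ) (k : ℝ) (g : ℝ → ℝ) (y : Fin n → ℝ) :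
    rfmFlow n lam k g y n = lam n * extVec y (n - 1) := by
  simp [rfmFlow, hn]

lemma H1 {l L e p : ℝ} (hl : 0 < l) (hL : l ≤ L) (he : 0 < e) (he1 : e ≤ 1) (hp : -e ≤ p) :
    -(2 * L * e) ≤ l * p * (1 + e) := by nlinarith [mul_nonneg (mul_nonneg hl.le (by linarith : (0:ℝ) ≤ p + e)) (by linarith : (0:ℝ) ≤ 1 + e), mul_nonneg (sub_nonneg.mpr hL) he.le, mul_nonneg hl.le (mul_nonneg he.le (by linarith : (0:ℝ) ≤ 1 - e)), mul_nonneg (sub_nonneg.mpr hL) (mul_nonneg he.le he.le)]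
lemma H2 {l L e q : ℝ} (hl : 0 < l) (hL : l ≤ L) (he : 0 < e) (he1 : e ≤ 1) (hq : q ≤ 1 + e) :
    l * -e * (1 - q) ≤ 2 * L * e := by nlinarith [mul_nonneg (mul_nonneg hl.le he.le) (by linarith : (0:ℝ) ≤ 1 + e - q), mul_nonneg (sub_nonneg.mpr hL) he.le, mul_nonneg hl.le (mul_nonneg he.le (by linarith : (0:ℝ) ≤ 1 - e)), mul_nonneg (sub_nonneg.mpr hL) (mul_nonneg he.le he.le)]
lemma H3 {l L e p : ℝ} (hl : 0 < l) (hL : l ≤ L) (he : 0 < e) (he1 : e ≤ 1) (hp : -e ≤ p) :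
    l * p * (1 - (1 + e)) ≤ 2 * L * e := by nlinarith [mul_nonneg (mul_nonneg hl.le (by linarith : (0:ℝ) ≤ p + e)) he.le, mul_nonneg (sub_nonneg.mpr hL) he.le, mul_nonneg hl.le (mul_nonneg he.le (by linarith : (0:ℝ) ≤ 1 - e)), mul_nonneg (sub_nonneg.mpr hL) (mul_nonneg he.le he.le)]
lemma H4 {l L e q : ℝ} (hl : 0 < l) (hL : l ≤ L) (he : 0 < e) (he1 : e ≤ 1) (hq : q ≤ 1 + e) :
    -(2 * L * e) ≤ l * (1 + e) * (1 - q) := by nlinarith [mul_nonneg (mul_nonneg hl.le (by linarith : (0:ℝ) ≤ 1 + e)) (by linarith : (0:ℝ) ≤ 1 + e - q), mul_nonneg (sub_nonneg.mpr hL) he.le, mul_nonneg hl.le (mul_nonneg he.le (by linarith : (0:ℝ) ≤ 1 - e)), mul_nonneg (sub_nonneg.mpr hL) (mul_nonneg he.le he.le)]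
lemma H5 {l p q : ℝ} (hl : 0 < l) (hp : 0 ≤ p) (hq : q ≤ 1) : 0 ≤ l * p * (1 - q) :=
  mul_nonneg (mul_nonneg hl.le hp) (by linarith)
lemma H6 {l p q : ℝ} (hl : 0 < l) (hp : 0 ≤ p) (hq : 0 ≤ q) : l * p * (1 - q) ≤ l * p := by
  nlinarith [mul_nonneg (mul_nonneg hl.le hp) hq]
lemma H7 {l k gv G li v : ℝ} (hl : 0 < l) (hk : 0 < k) (hgv : gv ≤ G) (hli : 0 < li) (hv : 0 ≤ v) :
    l * k * gv * v ≤ (l * k * G + li) * v := by nlinarith [mul_nonneg (mul_nonneg (mul_nonneg hl.le hk.le) (by linarith : (0:ℝ) ≤ G - gv)) hv, mul_nonneg hli.le hv]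
lemma H8 {l c p v : ℝ} (hl : 0 < l) (hc : 0 ≤ c) (hp : p ≤ 1) (hv : 0 ≤ v) :
    l * p * v ≤ (c + l) * v := by nlinarith [mul_nonneg (mul_nonneg hl.le (by linarith : (0:ℝ) ≤ 1 - p)) hv, mul_nonneg hc hv]

section Bounds

variable {n : ℕ} (hn : 2 ≤ n) {lam : ℕ → ℝ} (hlam : ∀ j, j ≤ n → 0 < lam j)
  {k : ℝ} (hk : 0 < k) {g : ℝ → ℝ}

include hn hlam hk

/-- Lower bound on the field at a lower-touching coordinate. -/
lemma touch_low_bound {Λ η : ℝ} (hΛ : ∀ j, j ≤ n → lam j ≤ Λ) (hη : 0 < η) (hη1 : η ≤ 1)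
    (y : Fin n → ℝ) (hy : ∀ m, -η ≤ y m ∧ y m ≤ 1 + η)
    (hgy : 0 ≤ g (lam n * extVec y (n - 1)))
    (i : Fin n) (hyi : y i = -η) :
    -(4 * Λ * η) ≤ rfmField n lam k g y i := by
  have hΛ0 : 0 < Λ := lt_of_lt_of_le (hlam 0 (by omega)) (hΛ 0 (by omega))
  have hin : i.val < n := i.isLt
  have hexti : extVec y i.val = y i := by rw [extVec_lt y hin]
  have hA : -(2 * Λ * η) ≤ rfmFlow n lam k g y i.val := by
    rcases Nat.eq_zero_or_pos i.val with h0 | h0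
    · rw [h0, flow_zero]
      have he0 : extVec y 0 = y i := by rw [← h0]; exact hexti
      have : (0:ℝ) ≤ lam 0 * k * g (lam n * extVec y (n - 1)) * (1 - extVec y 0) := by
        apply mul_nonneg (mul_nonneg (mul_nonneg (hlam 0 (by omega)).le hk.le) hgy)
        rw [he0, hyi]; linarith
      nlinarith
    · rw [flow_mid n lam k g y (by omega) (by omega)]
      have hj : i.val - 1 < n := by omega
      rw [extVec_lt y hj, hexti, hyi]
      have h1 := (hy ⟨i.val - 1, hj⟩).1
      have hl := hlam i.val (by omega)
      have hl2 := hΛ i.val (by omega)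
      rw [sub_neg_eq_add]
      exact H1 hl hl2 hη hη1 h1
  have hB : rfmFlow n lam k g y (i.val + 1) ≤ 2 * Λ * η := by
    rcases eq_or_ne (i.val + 1) n with h1 | h1
    · rw [h1, flow_n n (by omega)]
      have : extVec y (n - 1) = y i := by
        rw [extVec_lt y (by omega : n - 1 < n)]
        congr 1
        ext
        simp only [Fin.val_mk]
        omega
      rw [this, hyi]
      have hl := hlam n (le_refl n)
      nlinarith
    · rw [flow_mid n lam k g y (by omega) h1]
      have hj : i.val + 1 < n := by omega
      have he : extVec y (i.val + 1 - 1) = y i := by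
        rw [(by omega : i.val + 1 - 1 = i.val)]; exact hexti
      rw [he, extVec_lt y hj, hyi]
      have h3 := (hy ⟨i.val + 1, hj⟩).2
      have hl := hlam (i.val + 1) (by omega)
      have hl2 := hΛ (i.val + 1) (by omega)
      exact H2 hl hl2 hη hη1 h3
  have : rfmField n lam k g y i = rfmFlow n lam k g y i.val - rfmFlow n lam k g y (i.val + 1) := rfl
  rw [this]; linarith

/-- Upper bound on the field at an upper-touching coordinate. -/
lemma touch_high_bound {Λ η : ℝ} (hΛ : ∀ j, j ≤ n → lam j ≤ Λ) (hη : 0 < η) (hη1 : η ≤ 1)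
    (y : Fin n → ℝ) (hy : ∀ m, -η ≤ y m ∧ y m ≤ 1 + η)
    (hgy : 0 ≤ g (lam n * extVec y (n - 1)))
    (i : Fin n) (hyi : y i = 1 + η) :
    rfmField n lam k g y i ≤ 4 * Λ * η := by
  have hΛ0 : 0 < Λ := lt_of_lt_of_le (hlam 0 (by omega)) (hΛ 0 (by omega))
  have hin : i.val < n := i.isLt
  have hexti : extVec y i.val = y i := by rw [extVec_lt y hin]
  have hA : rfmFlow n lam k g y i.val ≤ 2 * Λ * η := by
    rcases Nat.eq_zero_or_pos i.val with h0 | h0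
    · rw [h0, flow_zero]
      have he0 : extVec y 0 = y i := by rw [← h0]; exact hexti
      have : lam 0 * k * g (lam n * extVec y (n - 1)) * (1 - extVec y 0) ≤ 0 := by
        rw [he0, hyi]
        apply mul_nonpos_of_nonneg_of_nonpos
          (mul_nonneg (mul_nonneg (hlam 0 (by omega)).le hk.le) hgy)
        linarith
      nlinarith
    · rw [flow_mid n lam k g y (by omega) (by omega)]
      have hj : i.val - 1 < n := by omega
      rw [extVec_lt y hj, hexti, hyi]
      have h1 := (hy ⟨i.val - 1, hj⟩).1
      have hl := hlam i.val (by omega)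
      have hl2 := hΛ i.val (by omega)
      exact H3 hl hl2 hη hη1 h1
  have hB : -(2 * Λ * η) ≤ rfmFlow n lam k g y (i.val + 1) := by
    rcases eq_or_ne (i.val + 1) n with h1 | h1
    · rw [h1, flow_n n (by omega)]
      have : extVec y (n - 1) = y i := by
        rw [extVec_lt y (by omega : n - 1 < n)]
        congr 1
        ext
        simp only [Fin.val_mk]
        omega
      rw [this, hyi]
      have hl := hlam n (le_refl n)
      have hl2 := hΛ n (le_refl n)
      nlinarith
    · rw [flow_mid n lam k g y (by omega) h1]
      have hj : i.val + 1 < n := by omega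
      have he : extVec y (i.val + 1 - 1) = y i := by
        rw [(by omega : i.val + 1 - 1 = i.val)]; exact hexti
      rw [he, extVec_lt y hj, hyi]
      have h3 := (hy ⟨i.val + 1, hj⟩).2
      have hl := hlam (i.val + 1) (by omega)
      have hl2 := hΛ (i.val + 1) (by omega)
      exact H4 hl hl2 hη hη1 h3
  have : rfmField n lam k g y i = rfmFlow n lam k g y i.val - rfmFlow n lam k g y (i.val + 1) := rfl
  rw [this]; linarith

/-- In the cube, the field is bounded below by minus the outflow rate times the density. -/
lemma cube_field_low (y : Fin n → ℝ) (hy : ∀ m, 0 ≤ y m ∧ y m ≤ 1)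
    (hgy : 0 ≤ g (lam n * extVec y (n - 1))) (i : Fin n) :
    0 ≤ rfmField n lam k g y i + lam (i.val + 1) * y i := by
  have hin : i.val < n := i.isLt
  have hexti : extVec y i.val = y i := by rw [extVec_lt y hin]
  have hA : 0 ≤ rfmFlow n lam k g y i.val := by
    rcases Nat.eq_zero_or_pos i.val with h0 | h0
    · rw [h0, flow_zero]
      have he0 : extVec y 0 = y i := by rw [← h0]; exact hexti
      apply mul_nonneg (mul_nonneg (mul_nonneg (hlam 0 (by omega)).le hk.le) hgy)
      rw [he0]; linarith [(hy i).2]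
    · rw [flow_mid n lam k g y (by omega) (by omega)]
      have hj : i.val - 1 < n := by omega
      rw [extVec_lt y hj, hexti]
      have h1 := (hy ⟨i.val - 1, hj⟩).1
      have h2 := (hy i).2
      have hl := hlam i.val (by omega)
      exact H5 hl h1 h2
  have hB : rfmFlow n lam k g y (i.val + 1) ≤ lam (i.val + 1) * y i := by
    rcases eq_or_ne (i.val + 1) n with h1 | h1
    · rw [h1, flow_n n (by omega)]
      have : extVec y (n - 1) = y i := by
        rw [extVec_lt y (by omega : n - 1 < n)]
        congr 1
        ext
        simp only [Fin.val_mk]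
        omega
      rw [this, ← h1]
    · rw [flow_mid n lam k g y (by omega) h1]
      have hj : i.val + 1 < n := by omega
      have he : extVec y (i.val + 1 - 1) = y i := by
        rw [(by omega : i.val + 1 - 1 = i.val)]; exact hexti
      rw [he, extVec_lt y hj]
      have h2 := (hy ⟨i.val + 1, hj⟩).1
      have h4 := (hy i).1
      have hl := hlam (i.val + 1) (by omega)
      exact H6 hl h4 h2
  have : rfmField n lam k g y i = rfmFlow n lam k g y i.val - rfmFlow n lam k g y (i.val + 1) := rfl
  rw [this]; linarith

/-- In the cube, the field is bounded above by an inflow rate times the vacancy. -/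
lemma cube_field_high {G : ℝ} (hG : ∀ z, 0 ≤ z → z ≤ lam n → g z ≤ G)
    (y : Fin n → ℝ) (hy : ∀ m, 0 ≤ y m ∧ y m ≤ 1)
    (hgy : 0 ≤ g (lam n * extVec y (n - 1))) (i : Fin n) :
    rfmField n lam k g y i ≤ (lam 0 * k * G + lam i.val) * (1 - y i) := by
  have hin : i.val < n := i.isLt
  have hexti : extVec y i.val = y i := by rw [extVec_lt y hin]
  have hGnn : 0 ≤ G := le_trans hgy (by
    apply hG
    · apply mul_nonneg (hlam n (le_refl n)).le
      rw [extVec_lt y (by omega : n - 1 < n)]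
      exact (hy _).1
    · have h2 := (hy (⟨n - 1, by omega⟩ : Fin n)).2
      rw [extVec_lt y (by omega : n - 1 < n)]
      nlinarith [hlam n (le_refl n)])
  have hA : rfmFlow n lam k g y i.val ≤ (lam 0 * k * G + lam i.val) * (1 - y i) := by
    rcases Nat.eq_zero_or_pos i.val with h0 | h0
    · rw [h0, flow_zero]
      have he0 : extVec y 0 = y i := by rw [← h0]; exact hexti
      rw [he0]
      have hgle : g (lam n * extVec y (n - 1)) ≤ G := by
        apply hG
        · apply mul_nonneg (hlam n (le_refl n)).le
          rw [extVec_lt y (by omega : n - 1 < n)]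
          exact (hy _).1
        · have h2 := (hy (⟨n - 1, by omega⟩ : Fin n)).2
          rw [extVec_lt y (by omega : n - 1 < n)]
          nlinarith [hlam n (le_refl n)]
      have h2 := (hy i).2
      have hl0 := hlam 0 (by omega)
      exact H7 hl0 hk hgle hl0 (by linarith)
    · rw [flow_mid n lam k g y (by omega) (by omega)]
      have hj : i.val - 1 < n := by omega
      rw [extVec_lt y hj, hexti]
      have h2 := (hy ⟨i.val - 1, hj⟩).2
      have h3 := (hy i).2
      have hl := hlam i.val (by omega)
      have hl0 := hlam 0 (by omega)
      exact H8 hl (mul_nonneg (mul_nonneg hl0.le hk.le) hGnn) h2 (by linarith)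
  have hB : 0 ≤ rfmFlow n lam k g y (i.val + 1) := by
    rcases eq_or_ne (i.val + 1) n with h1 | h1
    · rw [h1, flow_n n (by omega)]
      apply mul_nonneg (hlam n (le_refl n)).le
      rw [extVec_lt y (by omega : n - 1 < n)]
      exact (hy _).1
    · rw [flow_mid n lam k g y (by omega) h1]
      have hj : i.val + 1 < n := by omega
      have he : extVec y (i.val + 1 - 1) = y i := by
        rw [(by omega : i.val + 1 - 1 = i.val)]; exact hexti
      rw [he, extVec_lt y hj]
      have h2 := (hy ⟨i.val + 1, hj⟩).2
      have h4 := (hy i).1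
      have hl := hlam (i.val + 1) (by omega)
      exact H5 hl h4 h2
  have : rfmField n lam k g y i = rfmFlow n lam k g y i.val - rfmFlow n lam k g y (i.val + 1) := rfl
  rw [this]; linarith

/-- At an interior-zero coordinate whose predecessor is positive (or `i = 0`),
the field is strictly positive. -/
lemma field_pos_at_zero (hgpos : ∀ z, 0 ≤ z → 0 < g z)
    (y : Fin n → ℝ) (hy : ∀ m, 0 ≤ y m ∧ y m ≤ 1)
    (i : Fin n) (hyi : y i = 0)
    (hprev : i.val = 0 ∨ 0 < extVec y (i.val - 1)) :
    0 < rfmField n lam k g y i := by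
  have hin : i.val < n := i.isLt
  have hexti : extVec y i.val = y i := by rw [extVec_lt y hin]
  have hA : 0 < rfmFlow n lam k g y i.val := by
    rcases Nat.eq_zero_or_pos i.val with h0 | h0
    · rw [h0, flow_zero]
      have he0 : extVec y 0 = y i := by rw [← h0]; exact hexti
      have hgp : 0 < g (lam n * extVec y (n - 1)) := by
        apply hgpos
        apply mul_nonneg (hlam n (le_refl n)).le
        rw [extVec_lt y (by omega : n - 1 < n)]
        exact (hy _).1
      rw [he0, hyi]
      have hl0 := hlam 0 (by omega)
      nlinarith [mul_pos (mul_pos hl0 hk) hgp]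
    · rw [flow_mid n lam k g y (by omega) (by omega)]
      have hpv : 0 < extVec y (i.val - 1) := by
        rcases hprev with h | h
        · omega
        · exact h
      rw [hexti, hyi]
      have hl := hlam i.val (by omega)
      nlinarith
  have hB : rfmFlow n lam k g y (i.val + 1) = 0 := by
    rcases eq_or_ne (i.val + 1) n with h1 | h1
    · rw [h1, flow_n n (by omega)]
      have : extVec y (n - 1) = y i := by
        rw [extVec_lt y (by omega : n - 1 < n)]
        congr 1
        ext
        simp only [Fin.val_mk]
        omega
      rw [this, hyi, mul_zero]
    · rw [flow_mid n lam k g y (by omega) h1]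
      have he : extVec y (i.val + 1 - 1) = y i := by
        rw [(by omega : i.val + 1 - 1 = i.val)]; exact hexti
      rw [he, hyi]; ring
  have : rfmField n lam k g y i = rfmFlow n lam k g y i.val - rfmFlow n lam k g y (i.val + 1) := rfl
  rw [this, hB]; linarith

/-- At an upper-saturated coordinate whose successor is strictly below one
(or `i = n-1`), the field is strictly negative. -/
lemma field_neg_at_one (y : Fin n → ℝ) (hy : ∀ m, 0 ≤ y m ∧ y m ≤ 1)
    (i : Fin n) (hyi : y i = 1)
    (hnext : i.val + 1 = n ∨ extVec y (i.val + 1) < 1) :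
    rfmField n lam k g y i < 0 := by
  have hin : i.val < n := i.isLt
  have hexti : extVec y i.val = y i := by rw [extVec_lt y hin]
  have hA : rfmFlow n lam k g y i.val = 0 := by
    rcases Nat.eq_zero_or_pos i.val with h0 | h0
    · rw [h0, flow_zero]
      have he0 : extVec y 0 = y i := by rw [← h0]; exact hexti
      rw [he0, hyi]; ring
    · rw [flow_mid n lam k g y (by omega) (by omega)]
      rw [hexti, hyi]; ring
  have hB : 0 < rfmFlow n lam k g y (i.val + 1) := by
    rcases eq_or_ne (i.val + 1) n with h1 | h1
    · rw [h1, flow_n n (by omega)]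
      have : extVec y (n - 1) = y i := by
        rw [extVec_lt y (by omega : n - 1 < n)]
        congr 1
        ext
        simp only [Fin.val_mk]
        omega
      rw [this, hyi, mul_one]
      exact hlam n (le_refl n)
    · rw [flow_mid n lam k g y (by omega) h1]
      have he : extVec y (i.val + 1 - 1) = y i := by
        rw [(by omega : i.val + 1 - 1 = i.val)]; exact hexti
      rw [he, hyi]
      have hnx : extVec y (i.val + 1) < 1 := by
        rcases hnext with h | h
        · omega
        · exact h
      have hl := hlam (i.val + 1) (by omega)
      nlinarith
  have : rfmField n lam k g y i = rfmFlow n lam k g y i.val - rfmFlow n lam k g y (i.val + 1) := rfl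
  rw [this, hA]; linarith

end Bounds


set_option maxHeartbeats 1600000 in
/-- For every initial condition in the closed unit cube, any
solution of the closed-loop RFM with negative feedback lies in the open cube
`(0,1)^n` for all `t > 0`; in particular `[0,1]^n` is forward invariant. -/
theorem rfm_negfb_forward_invariance
    (n : ℕ) (hn : 2 ≤ n) (lam : ℕ → ℝ) (hlam : ∀ i, i ≤ n → 0 < lam i)
    (k : ℝ) (hk : 0 < k)
    (g : ℝ → ℝ) (hg : ContDiff ℝ 1 g) (hgpos : ∀ z : ℝ, 0 ≤ z → 0 < g z)
    (hgder : ∀ z : ℝ, 0 < z → deriv g z < 0)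
    (x : ℝ → Fin n → ℝ)
    (hsol : ∀ t : ℝ, 0 ≤ t → HasDerivAt x (rfmField n lam k g (x t)) t)
    (hx0 : ∀ i, x 0 i ∈ Set.Icc (0:ℝ) 1) :
    ∀ t : ℝ, 0 < t → ∀ i, x t i ∈ Set.Ioo (0:ℝ) 1 := by
  classical
  have hNe : (Finset.univ : Finset (Fin n)).Nonempty := ⟨⟨0, by omega⟩, Finset.mem_univ _⟩
  -- the sum of the rates
  set Λ : ℝ := ∑ j ∈ Finset.range (n + 1), lam j with hΛdef
  have hΛ : ∀ j, j ≤ n → lam j ≤ Λ := by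
    intro j hj
    exact Finset.single_le_sum (f := lam)
      (fun m hm => (hlam m (by simp at hm; omega)).le) (by simp; omega)
  have hΛ0 : 0 < Λ := lt_of_lt_of_le (hlam 0 (by omega)) (hΛ 0 (by omega))
  set C : ℝ := 4 * Λ + 1 with hCdef
  have hC0 : 0 < C := by linarith
  -- a margin δ on which g is still nonnegative
  obtain ⟨δ, hδ0, hδ1, hgδ⟩ :
      ∃ δ : ℝ, 0 < δ ∧ δ ≤ 1 ∧ ∀ z : ℝ, -(lam n * δ) ≤ z → 0 ≤ g z := by
    have hc : ContinuousAt g 0 := hg.continuous.continuousAt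
    obtain ⟨ρ, hρ0, hρ⟩ := Metric.continuousAt_iff.mp hc (g 0) (hgpos 0 le_rfl)
    have hln : 0 < lam n := hlam n le_rfl
    refine ⟨min 1 (ρ / (2 * (lam n + 1))), ?_, min_le_left _ _, ?_⟩
    · have : 0 < ρ / (2 * (lam n + 1)) := by positivity
      exact lt_min one_pos this
    · intro z hz
      rcases le_or_gt 0 z with h | h
      · exact (hgpos z h).le
      · have h1 : lam n * min 1 (ρ / (2 * (lam n + 1))) < ρ := by
          have h2 : min 1 (ρ / (2 * (lam n + 1))) ≤ ρ / (2 * (lam n + 1)) := min_le_right _ _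
          have h3 : lam n * min 1 (ρ / (2 * (lam n + 1))) ≤ lam n * (ρ / (2 * (lam n + 1))) :=
            mul_le_mul_of_nonneg_left h2 hln.le
          have h4 : lam n * (ρ / (2 * (lam n + 1))) < ρ := by
            rw [div_eq_mul_inv]
            rw [show lam n * (ρ * (2 * (lam n + 1))⁻¹) = ρ * (lam n / (2 * (lam n + 1))) by
              field_simp]
            have : lam n / (2 * (lam n + 1)) < 1 := by
              rw [div_lt_one (by linarith)]; linarith
            nlinarith
          linarith
        have hd : dist z 0 < ρ := by
          rw [Real.dist_eq, sub_zero, abs_of_neg h]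
          linarith
        have := hρ hd
        rw [Real.dist_eq] at this
        have := abs_lt.mp this
        linarith [this.1]
  -- componentwise derivatives and continuity
  have hdX : ∀ (i : Fin n) (t : ℝ), 0 ≤ t →
      HasDerivAt (fun s => x s i) (rfmField n lam k g (x t) i) t :=
    fun i t ht => aux_comp_deriv (hsol t ht) i
  have hcX : ∀ (i : Fin n) (t : ℝ), 0 ≤ t → ContinuousAt (fun s => x s i) t :=
    fun i t ht => (hdX i t ht).continuousAt
  have hexp_d : ∀ (ε t : ℝ), HasDerivAt (fun s => ε * Real.exp (C * s))
      (ε * (Real.exp (C * t) * C)) t := by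
    intro ε t
    have h1 : HasDerivAt (fun s : ℝ => Real.exp (C * s)) (Real.exp (C * t) * C) t := by
      simpa using ((hasDerivAt_id t).const_mul C).exp
    exact h1.const_mul ε
  have hexp_c : ∀ (ε : ℝ), Continuous (fun s : ℝ => ε * Real.exp (C * s)) := by
    intro ε
    exact continuous_const.mul (Real.continuous_exp.comp (continuous_const.mul continuous_id))
  -- the key quantitative barrier estimate
  have key : ∀ T : ℝ, 0 < T → ∀ ε : ℝ, 0 < ε → ε * Real.exp (C * T) ≤ δ →
      ∀ s : ℝ, 0 ≤ s → s ≤ T → ∀ i : Fin n,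
        -(ε * Real.exp (C * s)) < x s i ∧ x s i < 1 + ε * Real.exp (C * s) := by
    intro T hT ε hε hεδ
    by_contra hcon
    push_neg at hcon
    obtain ⟨t1, ht10, ht1T, i1, hbad⟩ := hcon
    set a : ℝ → Fin n → ℝ := fun s i => x s i + ε * Real.exp (C * s) with hadef
    set b : ℝ → Fin n → ℝ := fun s i => 1 + ε * Real.exp (C * s) - x s i with hbdef
    set m : ℝ → ℝ := fun s => Finset.inf' Finset.univ hNe (fun i => min (a s i) (b s i))
      with hmdef
    have hma : ∀ s i, m s ≤ a s i ∧ m s ≤ b s i := by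
      intro s i
      constructor
      · exact le_trans (Finset.inf'_le _ (Finset.mem_univ i)) (min_le_left _ _)
      · exact le_trans (Finset.inf'_le _ (Finset.mem_univ i)) (min_le_right _ _)
    have hmc : ∀ s : ℝ, 0 ≤ s → ContinuousAt m s := by
      intro s hs
      apply ContinuousAt.finset_inf'_apply hNe
      intro i _
      exact ((hcX i s hs).add (hexp_c ε).continuousAt).min
        ((continuous_const.add (hexp_c ε)).continuousAt.sub (hcX i s hs))
    have hm0 : 0 < m 0 := by
      have hall : ∀ i ∈ (Finset.univ : Finset (Fin n)), 0 < min (a 0 i) (b 0 i) := by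
        intro i _
        have h1 := (hx0 i).1
        have h2 := (hx0 i).2
        have he : Real.exp (C * 0) = 1 := by rw [mul_zero, Real.exp_zero]
        have ha : a 0 i = x 0 i + ε * Real.exp (C * 0) := rfl
        have hb : b 0 i = 1 + ε * Real.exp (C * 0) - x 0 i := rfl
        apply lt_min
        · rw [ha, he]; linarith
        · rw [hb, he]; linarith
      exact (Finset.lt_inf'_iff hNe).mpr hall
    set Bm : Set ℝ := {s | 0 ≤ s ∧ s ≤ T ∧ m s ≤ 0} with hBmdef
    have ht1Bm : t1 ∈ Bm := by
      refine ⟨ht10, ht1T, ?_⟩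
      rcases le_or_gt (a t1 i1) 0 with h | h
      · exact le_trans (hma t1 i1).1 h
      · have hx1 : -(ε * Real.exp (C * t1)) < x t1 i1 := by
          have : a t1 i1 = x t1 i1 + ε * Real.exp (C * t1) := rfl
          rw [this] at h; linarith
        have := hbad hx1
        have hb1 : b t1 i1 ≤ 0 := by
          show 1 + ε * Real.exp (C * t1) - x t1 i1 ≤ 0
          linarith
        exact le_trans (hma t1 i1).2 hb1
    have hBmne : Bm.Nonempty := ⟨t1, ht1Bm⟩
    have hBmbdd : BddBelow Bm := ⟨0, fun s hs => hs.1⟩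
    set τ : ℝ := sInf Bm with hτdef
    have hτ0 : 0 ≤ τ := le_csInf hBmne (fun s hs => hs.1)
    have hτT : τ ≤ T := le_trans (csInf_le hBmbdd ht1Bm) ht1T
    have hmτ : m τ ≤ 0 := by
      by_contra hmp
      push_neg at hmp
      have hev : ∀ᶠ s in 𝓝 τ, 0 < m s := (hmc τ hτ0).eventually (eventually_gt_nhds hmp)
      obtain ⟨ρ, hρ0, hρ⟩ := Metric.eventually_nhds_iff.mp hev
      obtain ⟨s, hsBm, hsρ⟩ := (csInf_lt_iff hBmbdd hBmne).mp
        (show sInf Bm < τ + ρ by rw [← hτdef]; linarith)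
      have hτs : τ ≤ s := csInf_le hBmbdd hsBm
      have : dist s τ < ρ := by
        rw [Real.dist_eq, abs_of_nonneg (by linarith)]
        rw [hτdef] at hsρ ⊢
        linarith
      exact absurd hsBm.2.2 (not_le.mpr (hρ this))
    have hτpos : 0 < τ := by
      rcases eq_or_lt_of_le hτ0 with h | h
      · exfalso; rw [← h] at hmτ; linarith
      · exact h
    have hpre : ∀ s, 0 ≤ s → s < τ → 0 < m s := by
      intro s hs0 hsτ
      by_contra hns
      push_neg at hns
      have : s ∈ Bm := ⟨hs0, by linarith, hns⟩
      have := csInf_le hBmbdd this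
      rw [← hτdef] at this
      linarith
    have left_lim : ∀ φ : ℝ → ℝ, ContinuousAt φ τ →
        (∀ s, 0 ≤ s → s < τ → 0 < φ s) → 0 ≤ φ τ := by
      intro φ hφc hφp
      have h1 : Tendsto φ (𝓝[<] τ) (𝓝 (φ τ)) := hφc.tendsto.mono_left nhdsWithin_le_nhds
      refine ge_of_tendsto h1 ?_
      filter_upwards [Ioo_mem_nhdsLT_of_mem (Set.mem_Ioc.mpr ⟨hτpos, le_refl τ⟩)] with s hs
      exact (hφp s hs.1.le hs.2).le
    have ha_nn : ∀ i, 0 ≤ a τ i := by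
      intro i
      apply left_lim _ ((hcX i τ hτ0).add (hexp_c ε).continuousAt)
      intro s hs0 hsτ
      exact lt_of_lt_of_le (hpre s hs0 hsτ) (hma s i).1
    have hb_nn : ∀ i, 0 ≤ b τ i := by
      intro i
      apply left_lim _ ((continuous_const.add (hexp_c ε)).continuousAt.sub (hcX i τ hτ0))
      intro s hs0 hsτ
      exact lt_of_lt_of_le (hpre s hs0 hsτ) (hma s i).2
    obtain ⟨i, _, hieq⟩ := Finset.exists_mem_eq_inf' hNe (fun i => min (a τ i) (b τ i))
    have hmin0 : min (a τ i) (b τ i) ≤ 0 := by rw [← hieq]; exact hmτ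
    set η : ℝ := ε * Real.exp (C * τ) with hηdef
    have hη0 : 0 < η := mul_pos hε (Real.exp_pos _)
    have hηδ : η ≤ δ := by
      have : Real.exp (C * τ) ≤ Real.exp (C * T) :=
        Real.exp_le_exp.mpr (mul_le_mul_of_nonneg_left hτT hC0.le)
      calc η ≤ ε * Real.exp (C * T) := by
              rw [hηdef]; exact mul_le_mul_of_nonneg_left this hε.le
        _ ≤ δ := hεδ
    have hη1 : η ≤ 1 := le_trans hηδ hδ1
    have hbnds : ∀ m : Fin n, -η ≤ x τ m ∧ x τ m ≤ 1 + η := by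
      intro j
      have h1 := ha_nn j
      have h2 := hb_nn j
      have ha' : a τ j = x τ j + η := rfl
      have hb' : b τ j = 1 + η - x τ j := rfl
      rw [ha'] at h1; rw [hb'] at h2
      constructor <;> linarith
    have hgy : 0 ≤ g (lam n * extVec (x τ) (n - 1)) := by
      apply hgδ
      rw [extVec_lt (x τ) (show n - 1 < n by omega)]
      have := (hbnds ⟨n - 1, by omega⟩).1
      have hln := hlam n le_rfl
      nlinarith [hηδ]
    rcases le_total (a τ i) (b τ i) with hab | hab
    · -- lower touch
      have ha0 : a τ i = 0 := le_antisymm (by rw [min_eq_left hab] at hmin0; exact hmin0) (ha_nn i)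
      have hxi : x τ i = -η := by
        have : a τ i = x τ i + η := rfl
        rw [this] at ha0; linarith
      have hφd : HasDerivAt (fun s => a s i)
          (rfmField n lam k g (x τ) i + ε * (Real.exp (C * τ) * C)) τ :=
        (hdX i τ hτ0).add (hexp_d ε τ)
      have hφpos : ∀ s, 0 ≤ s → s < τ → 0 < a s i :=
        fun s hs0 hsτ => lt_of_lt_of_le (hpre s hs0 hsτ) (hma s i).1
      have hd0 := aux_slope_nonpos (fun s => a s i) hτpos hφd hφpos ha0
      have hlow := touch_low_bound hn hlam hk hΛ hη0 hη1 (x τ) hbnds hgy i hxi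
      have hCη : ε * (Real.exp (C * τ) * C) = C * η := by rw [hηdef]; ring
      rw [hCη] at hd0
      nlinarith
    · -- upper touch
      have hb0 : b τ i = 0 := le_antisymm (by rw [min_eq_right hab] at hmin0; exact hmin0) (hb_nn i)
      have hxi : x τ i = 1 + η := by
        have : b τ i = 1 + η - x τ i := rfl
        rw [this] at hb0; linarith
      have hφd : HasDerivAt (fun s => b s i)
          (ε * (Real.exp (C * τ) * C) - rfmField n lam k g (x τ) i) τ := by
        have h1 : HasDerivAt (fun s => 1 + ε * Real.exp (C * s))
            (ε * (Real.exp (C * τ) * C)) τ := by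
          simpa using (hexp_d ε τ).const_add 1
        exact h1.sub (hdX i τ hτ0)
      have hφpos : ∀ s, 0 ≤ s → s < τ → 0 < b s i :=
        fun s hs0 hsτ => lt_of_lt_of_le (hpre s hs0 hsτ) (hma s i).2
      have hd0 := aux_slope_nonpos (fun s => b s i) hτpos hφd hφpos hb0
      have hhigh := touch_high_bound hn hlam hk hΛ hη0 hη1 (x τ) hbnds hgy i hxi
      have hCη : ε * (Real.exp (C * τ) * C) = C * η := by rw [hηdef]; ring
      rw [hCη] at hd0
      nlinarith
  -- the closed cube is invariant
  have hcube : ∀ t : ℝ, 0 ≤ t → ∀ i : Fin n, 0 ≤ x t i ∧ x t i ≤ 1 := by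
    intro t ht i
    rcases eq_or_lt_of_le ht with h | hT
    · rw [← h]; exact ⟨(hx0 i).1, (hx0 i).2⟩
    have hee : Real.exp (-(C * t)) * Real.exp (C * t) = 1 := by
      rw [← Real.exp_add]; simp
    have hexppos := Real.exp_pos (C * t)
    have hexpnegpos := Real.exp_pos (-(C * t))
    constructor
    · by_contra hneg
      push_neg at hneg
      set ε : ℝ := min (δ * Real.exp (-(C * t))) (-(x t i) * Real.exp (-(C * t))) with hεdef
      have hε0 : 0 < ε := lt_min (mul_pos hδ0 hexpnegpos) (mul_pos (by linarith) hexpnegpos)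
      have hεδ : ε * Real.exp (C * t) ≤ δ := by
        have h1 : ε ≤ δ * Real.exp (-(C * t)) := min_le_left _ _
        calc ε * Real.exp (C * t) ≤ δ * Real.exp (-(C * t)) * Real.exp (C * t) :=
              mul_le_mul_of_nonneg_right h1 hexppos.le
          _ = δ := by rw [mul_assoc, hee, mul_one]
      have hεx : ε * Real.exp (C * t) ≤ -(x t i) := by
        have h1 : ε ≤ -(x t i) * Real.exp (-(C * t)) := min_le_right _ _
        calc ε * Real.exp (C * t) ≤ -(x t i) * Real.exp (-(C * t)) * Real.exp (C * t) :=
              mul_le_mul_of_nonneg_right h1 hexppos.le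
          _ = -(x t i) := by rw [mul_assoc, hee, mul_one]
      have := (key t hT ε hε0 hεδ t ht le_rfl i).1
      linarith
    · by_contra hgt
      push_neg at hgt
      set ε : ℝ := min (δ * Real.exp (-(C * t))) ((x t i - 1) * Real.exp (-(C * t))) with hεdef
      have hε0 : 0 < ε := lt_min (mul_pos hδ0 hexpnegpos) (mul_pos (by linarith) hexpnegpos)
      have hεδ : ε * Real.exp (C * t) ≤ δ := by
        have h1 : ε ≤ δ * Real.exp (-(C * t)) := min_le_left _ _
        calc ε * Real.exp (C * t) ≤ δ * Real.exp (-(C * t)) * Real.exp (C * t) :=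
              mul_le_mul_of_nonneg_right h1 hexppos.le
          _ = δ := by rw [mul_assoc, hee, mul_one]
      have hεx : ε * Real.exp (C * t) ≤ x t i - 1 := by
        have h1 : ε ≤ (x t i - 1) * Real.exp (-(C * t)) := min_le_right _ _
        calc ε * Real.exp (C * t) ≤ (x t i - 1) * Real.exp (-(C * t)) * Real.exp (C * t) :=
              mul_le_mul_of_nonneg_right h1 hexppos.le
          _ = x t i - 1 := by rw [mul_assoc, hee, mul_one]
      have := (key t hT ε hε0 hεδ t ht le_rfl i).2
      linarith
  -- g is nonnegative along the trajectory
  have hgy_cube : ∀ s : ℝ, 0 ≤ s → 0 ≤ g (lam n * extVec (x s) (n - 1)) := by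
    intro s hs
    apply (hgpos _ _).le
    apply mul_nonneg (hlam n le_rfl).le
    rw [extVec_lt (x s) (show n - 1 < n by omega)]
    exact (hcube s hs _).1
  -- an upper bound for g on the relevant compact range
  obtain ⟨z0, hz0mem, hz0⟩ := IsCompact.exists_isMaxOn (isCompact_Icc (a := (0:ℝ)) (b := lam n))
    (Set.nonempty_Icc.mpr (hlam n le_rfl).le) (hg.continuous.continuousOn)
  set G : ℝ := g z0 with hGdef
  have hG : ∀ z : ℝ, 0 ≤ z → z ≤ lam n → g z ≤ G := fun z h1 h2 => hz0 ⟨h1, h2⟩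
  -- persistence of strict positivity
  have pers_low : ∀ (i : Fin n) (s t : ℝ), 0 ≤ s → s ≤ t → 0 < x s i → 0 < x t i := by
    intro i s t hs hst hxs
    have hgrow := aux_grow (fun u => x u i) (fun u => rfmField n lam k g (x u) i)
      (lam (i.val + 1)) s t hst
      (fun u hu => hdX i u (le_trans hs hu.1))
      (fun u hu => by
        have := cube_field_low hn hlam hk (x u) (hcube u (le_trans hs hu.1))
          (hgy_cube u (le_trans hs hu.1)) i
        linarith)
    exact aux_pos_of_grow hgrow hxs (Real.exp_pos _) (Real.exp_pos _)
  have pers_high : ∀ (i : Fin n) (s t : ℝ), 0 ≤ s → s ≤ t → x s i < 1 → x t i < 1 := by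
    intro i s t hs hst hxs
    have hgrow := aux_grow (fun u => 1 - x u i) (fun u => -(rfmField n lam k g (x u) i))
      (lam 0 * k * G + lam i.val) s t hst
      (fun u hu => (hdX i u (le_trans hs hu.1)).const_sub 1)
      (fun u hu => by
        have h := cube_field_high hn hlam hk hG (x u) (hcube u (le_trans hs hu.1))
          (hgy_cube u (le_trans hs hu.1)) i
        show 0 ≤ -rfmField n lam k g (x u) i + (lam 0 * k * G + lam i.val) * (1 - x u i)
        linarith)
    have hgrow' : (1 - x s i) * Real.exp ((lam 0 * k * G + lam i.val) * s) ≤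
        (1 - x t i) * Real.exp ((lam 0 * k * G + lam i.val) * t) := hgrow
    have hfin : 0 < 1 - x t i :=
      aux_pos_of_grow hgrow' (by linarith) (Real.exp_pos _) (Real.exp_pos _)
    linarith
  -- if a coordinate vanishes at a positive time, it vanished on the whole interval
  have zero_all : ∀ (i : Fin n) (t : ℝ), 0 < t → x t i = 0 →
      ∀ s, 0 ≤ s → s ≤ t → x s i = 0 := by
    intro i t ht hxt s hs0 hst
    by_contra hne
    have h1 : 0 < x s i := lt_of_le_of_ne (hcube s hs0 i).1 (Ne.symm hne)
    have := pers_low i s t hs0 hst h1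
    rw [hxt] at this; linarith
  have one_all : ∀ (i : Fin n) (t : ℝ), 0 < t → x t i = 1 →
      ∀ s, 0 ≤ s → s ≤ t → x s i = 1 := by
    intro i t ht hxt s hs0 hst
    by_contra hne
    have h1 : x s i < 1 := lt_of_le_of_ne (hcube s hs0 i).2 hne
    have := pers_high i s t hs0 hst h1
    rw [hxt] at this; linarith
  -- if a coordinate is constant on [0, t], the field vanishes at t/2
  have const_field : ∀ (i : Fin n) (c : ℝ) (t : ℝ), 0 < t →
      (∀ s, 0 ≤ s → s ≤ t → x s i = c) → rfmField n lam k g (x (t / 2)) i = 0 := by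
    intro i c t ht hconst
    have hmem : Set.Ioo (0:ℝ) t ∈ 𝓝 (t / 2) := Ioo_mem_nhds (by linarith) (by linarith)
    have heq : (fun s => x s i) =ᶠ[𝓝 (t / 2)] (fun _ => c) :=
      Filter.eventuallyEq_of_mem hmem (fun s hs => hconst s hs.1.le hs.2.le)
    have h1 : HasDerivAt (fun s => x s i) (rfmField n lam k g (x (t / 2)) i) (t / 2) :=
      hdX i (t / 2) (by linarith)
    have h2 : HasDerivAt (fun _ : ℝ => c) (rfmField n lam k g (x (t / 2)) i) (t / 2) :=
      h1.congr_of_eventuallyEq heq.symm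
    exact ((hasDerivAt_const (t / 2) c).unique h2).symm
  -- strict positivity, by induction along the chain
  have low : ∀ (j : ℕ) (hj : j < n), ∀ t : ℝ, 0 < t → 0 < x t ⟨j, hj⟩ := by
    intro j
    induction j with
    | zero =>
      intro hj t ht
      by_contra hle
      push_neg at hle
      have hx0' : x t ⟨0, hj⟩ = 0 := le_antisymm hle (hcube t ht.le _).1
      have hconst := zero_all _ t ht hx0'
      have hfz := const_field _ 0 t ht hconst
      have hfp := field_pos_at_zero hn hlam hk hgpos (x (t / 2))
        (hcube (t / 2) (by linarith)) ⟨0, hj⟩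
        (hconst (t / 2) (by linarith) (by linarith)) (Or.inl rfl)
      rw [hfz] at hfp; linarith
    | succ p ih =>
      intro hj t ht
      by_contra hle
      push_neg at hle
      have hx0' : x t ⟨p + 1, hj⟩ = 0 := le_antisymm hle (hcube t ht.le _).1
      have hconst := zero_all _ t ht hx0'
      have hfz := const_field _ 0 t ht hconst
      have hprev : 0 < extVec (x (t / 2)) ((⟨p + 1, hj⟩ : Fin n).val - 1) := by
        have hp : p < n := by omega
        have : ((⟨p + 1, hj⟩ : Fin n).val - 1) = p := by simp
        rw [this, extVec_lt (x (t / 2)) hp]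
        exact ih hp (t / 2) (by linarith)
      have hfp := field_pos_at_zero hn hlam hk hgpos (x (t / 2))
        (hcube (t / 2) (by linarith)) ⟨p + 1, hj⟩
        (hconst (t / 2) (by linarith) (by linarith)) (Or.inr hprev)
      rw [hfz] at hfp; linarith
  -- strict sub-unity, by downward induction along the chain
  have high : ∀ (m : ℕ) (j : ℕ) (hj : j < n), j + m = n - 1 → ∀ t : ℝ, 0 < t →
      x t ⟨j, hj⟩ < 1 := by
    intro m
    induction m with
    | zero =>
      intro j hj hjm t ht
      by_contra hge
      push_neg at hge
      have hx1' : x t ⟨j, hj⟩ = 1 := le_antisymm (hcube t ht.le _).2 hge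
      have hconst := one_all _ t ht hx1'
      have hfz := const_field _ 1 t ht hconst
      have hfn := field_neg_at_one (g := g) hn hlam hk (x (t / 2))
        (hcube (t / 2) (by linarith)) ⟨j, hj⟩
        (hconst (t / 2) (by linarith) (by linarith)) (Or.inl (by simp; omega))
      rw [hfz] at hfn; linarith
    | succ p ih =>
      intro j hj hjm t ht
      by_contra hge
      push_neg at hge
      have hx1' : x t ⟨j, hj⟩ = 1 := le_antisymm (hcube t ht.le _).2 hge
      have hconst := one_all _ t ht hx1'
      have hfz := const_field _ 1 t ht hconst
      have hnext : extVec (x (t / 2)) ((⟨j, hj⟩ : Fin n).val + 1) < 1 := by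
        have hp : j + 1 < n := by omega
        have : ((⟨j, hj⟩ : Fin n).val + 1) = j + 1 := by simp
        rw [this, extVec_lt (x (t / 2)) hp]
        exact ih (j + 1) hp (by omega) (t / 2) (by linarith)
      have hfn := field_neg_at_one (g := g) hn hlam hk (x (t / 2))
        (hcube (t / 2) (by linarith)) ⟨j, hj⟩
        (hconst (t / 2) (by linarith) (by linarith)) (Or.inr hnext)
      rw [hfz] at hfn; linarith
  -- conclusion
  intro t ht i
  have hieq : (⟨i.val, i.isLt⟩ : Fin n) = i := by ext; simp
  constructor
  · have := low i.val i.isLt t ht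
    rw [hieq] at this; exact this
  · have := high (n - 1 - i.val) i.val i.isLt (by omega) t ht
    rw [hieq] at this; exact this
end

section
/- The vector field of the closed-loop RFM points strictly inward at the boundary faces of the unit cube in the following sense: for any a ∈ [0,1]^n and any index j, (i) if a_j = 0 and either j = 1 or a_{j−1} > 0, then f_j(a) > 0; and (ii) if a_j = 1 and either j = n or a_{j+1} < 1, then f_j(a) < 0. -/
/-!
Each `f_j` is the inflow into site `j` minus the outflow from it. Every flow carries the factor
`x_i (1 - x_{i+1})` of its endpoints (the initiation flow only `1 - x_1`, the exit flow only `x_n`),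
so at `x_j = 0` the outflow vanishes while the inflow is positive, and at `x_j = 1` the inflow
vanishes while the outflow is positive; the feedback term `k g(λ_n x_n)` is positive as `g > 0`.
-/

open scoped BigOperators

section RfmFlow

variable {n : ℕ} {lam : ℕ → ℝ} {k : ℝ} {g : ℝ → ℝ} (x : Fin n → ℝ)

theorem extVec_val (i : Fin n) : extVec x i = x i :=
  dif_pos i.isLt

theorem extVec_of_le {j : ℕ} (hj : n ≤ j) : extVec x j = 0 :=
  dif_neg (not_lt.2 hj)

theorem extVec_nonneg {x : Fin n → ℝ} (hx : ∀ i, 0 ≤ x i) (j : ℕ) : 0 ≤ extVec x j := by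
  unfold extVec
  split_ifs
  exacts [hx _, le_rfl]

theorem rfmFlow_of_val_eq_zero (i : Fin n) (hi : i.val = 0) :
    rfmFlow n lam k g x i = lam 0 * k * g (lam n * extVec x (n - 1)) * (1 - x i) := by
  rw [rfmFlow, if_pos hi, ← extVec_val x i, hi]

theorem rfmFlow_of_val_ne_zero (i : Fin n) (hi : i.val ≠ 0) :
    rfmFlow n lam k g x i = lam i * extVec x (i - 1) * (1 - x i) := by
  rw [rfmFlow, if_neg hi, if_neg i.isLt.ne, extVec_val]

/-- The exit flow `λₙ xₙ` is the generic formula with the phantom density `x_{n+1} = 0`. -/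
theorem rfmFlow_succ (i : Fin n) :
    rfmFlow n lam k g x (i + 1) = lam (i + 1) * x i * (1 - extVec x (i + 1)) := by
  rw [rfmFlow, if_neg i.val.succ_ne_zero]
  split_ifs with hlast
  · rw [extVec_of_le x hlast.ge, hlast, show n - 1 = i by omega, extVec_val]
    ring
  · rw [Nat.add_sub_cancel, extVec_val]

theorem rfmFlow_eq_zero_of_eq_one {i : Fin n} (hx : x i = 1) : rfmFlow n lam k g x i = 0 := by
  rcases eq_or_ne i.val 0 with hi | hi
  · rw [rfmFlow_of_val_eq_zero x i hi, hx, sub_self, mul_zero]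
  · rw [rfmFlow_of_val_ne_zero x i hi, hx, sub_self, mul_zero]

theorem rfmFlow_succ_eq_zero_of_eq_zero {i : Fin n} (hx : x i = 0) :
    rfmFlow n lam k g x (i + 1) = 0 := by
  rw [rfmFlow_succ, hx, mul_zero, zero_mul]

end RfmFlow

/-- Lean index `j` is the paper's site `j+1`, so "`j = 1`" reads `j.val = 0` and "`j = n`" reads
`j.val = n - 1`. -/
theorem rfm_negfb_inward_on_boundary_general
    (n : ℕ) (lam : ℕ → ℝ) (hlam : ∀ i, i ≤ n → 0 < lam i)
    (k : ℝ) (hk : 0 < k)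
    (g : ℝ → ℝ) (hgpos : ∀ z : ℝ, 0 ≤ z → 0 < g z)
    (a : Fin n → ℝ) (ha : ∀ i, a i ∈ Set.Icc (0:ℝ) 1) (j : Fin n) :
    (a j = 0 → (j.val = 0 ∨ 0 < extVec a (j.val - 1)) →
      0 < rfmField n lam k g a j) ∧
    (a j = 1 → (j.val = n - 1 ∨ extVec a (j.val + 1) < 1) →
      rfmField n lam k g a j < 0) := by
  simp only [rfmField]
  refine ⟨fun h0 hprev => ?_, fun h1 hnext => ?_⟩
  · rw [rfmFlow_succ_eq_zero_of_eq_zero a h0, sub_zero]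
    rcases eq_or_ne j.val 0 with hj | hj
    · have hfeedback : 0 < g (lam n * extVec a (n - 1)) :=
        hgpos _ (mul_nonneg (hlam n le_rfl).le (extVec_nonneg (fun i => (ha i).1) _))
      rw [rfmFlow_of_val_eq_zero a j hj, h0, sub_zero, mul_one]
      exact mul_pos (mul_pos (hlam 0 (Nat.zero_le n)) hk) hfeedback
    · rw [rfmFlow_of_val_ne_zero a j hj, h0, sub_zero, mul_one]
      exact mul_pos (hlam j j.isLt.le) (hprev.resolve_left hj)
  · rw [rfmFlow_eq_zero_of_eq_one a h1, zero_sub, neg_lt_zero, rfmFlow_succ, h1, mul_one]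
    have hnext_lt : extVec a (j + 1) < 1 := by
      rcases hnext with hlast | hlt
      · rw [extVec_of_le a (by omega)]
        exact one_pos
      · exact hlt
    exact mul_pos (hlam (j + 1) j.isLt) (sub_pos.2 hnext_lt)

/-- The vector field of the closed-loop RFM points strictly
inward at the boundary faces of the unit cube. (Lean index `j` corresponds to
the paper's site `j+1`, so "`j = 1`" reads `j.val = 0` and "`j = n`" reads
`j.val = n - 1`.) -/
theorem rfm_negfb_inward_on_boundary
    (n : ℕ) (hn : 2 ≤ n) (lam : ℕ → ℝ) (hlam : ∀ i, i ≤ n → 0 < lam i)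
    (k : ℝ) (hk : 0 < k)
    (g : ℝ → ℝ) (hg : ContDiff ℝ 1 g) (hgpos : ∀ z : ℝ, 0 ≤ z → 0 < g z)
    (hgder : ∀ z : ℝ, 0 < z → deriv g z < 0)
    (a : Fin n → ℝ) (ha : ∀ i, a i ∈ Set.Icc (0:ℝ) 1) (j : Fin n) :
    (a j = 0 → (j.val = 0 ∨ 0 < extVec a (j.val - 1)) →
      0 < rfmField n lam k g a j) ∧
    (a j = 1 → (j.val = n - 1 ∨ extVec a (j.val + 1) < 1) →
      rfmField n lam k g a j < 0) :=
  rfm_negfb_inward_on_boundary_general n lam hlam k hk g hgpos a ha j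
end

section
/- The closed-loop RFM with negative feedback admits at least one equilibrium point in the unit cube, i.e., there exists e ∈ [0,1]^n with f(e) = 0, and moreover every such equilibrium lies in the open cube (0,1)^n. -/
open scoped BigOperators



noncomputable def psiAux (n : ℕ) (lam : ℕ → ℝ) : ℕ → ℝ → ℝ
  | 0 => fun s => s
  | (m+1) => fun s => lam n * s / (lam (n - (m+1)) * (1 - psiAux n lam m s))

lemma psiAux_zero (n : ℕ) (lam : ℕ → ℝ) (m : ℕ) : psiAux n lam m 0 = 0 := by
  cases m with
  | zero => rfl
  | succ m => simp [psiAux]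

lemma psiAux_contAt (n : ℕ) (lam : ℕ → ℝ) (hlam : ∀ i, i ≤ n → 0 < lam i)
    (m : ℕ) (s : ℝ) (h : ∀ m' < m, psiAux n lam m' s ≠ 1) :
    ContinuousAt (psiAux n lam m) s := by
  induction m with
  | zero => exact continuousAt_id
  | succ m ih =>
    have hprev : ContinuousAt (psiAux n lam m) s :=
      ih (fun m' hm' => h m' (Nat.lt_succ_of_lt hm'))
    have hne : psiAux n lam m s ≠ 1 := h m (Nat.lt_succ_self m)
    have hlne : lam (n - (m+1)) ≠ 0 := (hlam _ (Nat.sub_le _ _)).ne'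
    have hdenne : lam (n - (m+1)) * (1 - psiAux n lam m s) ≠ 0 :=
      mul_ne_zero hlne (sub_ne_zero.mpr (Ne.symm hne))
    have : ContinuousAt (fun s => lam n * s / (lam (n - (m+1)) * (1 - psiAux n lam m s))) s := by
      exact ((continuousAt_const.mul continuousAt_id).div
        (continuousAt_const.mul (continuousAt_const.sub hprev)) hdenne)
    simpa [psiAux] using this

lemma psiAux_pos (n : ℕ) (lam : ℕ → ℝ) (hlam : ∀ i, i ≤ n → 0 < lam i)
    (m : ℕ) (s : ℝ) (hs : 0 < s) (h : ∀ m' < m, psiAux n lam m' s < 1) :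
    0 < psiAux n lam m s := by
  induction m with
  | zero => exact hs
  | succ m ih =>
    have hlt : psiAux n lam m s < 1 := h m (Nat.lt_succ_self m)
    have : 0 < lam n * s / (lam (n - (m+1)) * (1 - psiAux n lam m s)) :=
      div_pos (mul_pos (hlam n le_rfl) hs)
        (mul_pos (hlam _ (Nat.sub_le _ _)) (by linarith))
    simpa [psiAux] using this

lemma exists_s0 (n : ℕ) (hn : 2 ≤ n) (lam : ℕ → ℝ) (hlam : ∀ i, i ≤ n → 0 < lam i)
    (k : ℝ) (hk : 0 < k) (g : ℝ → ℝ) (hgc : Continuous g)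
    (hgpos : ∀ z : ℝ, 0 ≤ z → 0 < g z) :
    ∃ s₀ : ℝ, 0 < s₀ ∧ (∀ m < n, psiAux n lam m s₀ < 1) ∧
      lam 0 * k * g (lam n * s₀) * (1 - psiAux n lam (n-1) s₀) = lam n * s₀ := by
  set E : Set ℝ := {s | ∀ m < n, psiAux n lam m s < 1} with hE
  -- E is open
  have hEopen : IsOpen E := by
    rw [isOpen_iff_mem_nhds]
    intro s hs
    have hev : ∀ m ∈ Finset.range n, ∀ᶠ x in nhds s, psiAux n lam m x < 1 := by
      intro m hm
      have hc : ContinuousAt (psiAux n lam m) s :=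
        psiAux_contAt n lam hlam m s
          (fun m' hm' => (hs m' (lt_trans hm' (Finset.mem_range.mp hm))).ne)
      exact hc.eventually_lt continuousAt_const (hs m (Finset.mem_range.mp hm))
    have := (Filter.eventually_all_finset (Finset.range n)).mpr hev
    exact this.mono (fun x hx m hm => hx m (Finset.mem_range.mpr hm))
  have h0E : (0:ℝ) ∈ E := by
    intro m _; rw [psiAux_zero]; norm_num
  -- the blocking point s₁
  have hl0 : 0 < lam n := hlam n le_rfl
  have hl1 : 0 < lam (n-1) := hlam _ (Nat.sub_le _ _)
  set s₁ : ℝ := lam (n-1) / (lam n + lam (n-1)) with hs₁def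
  have hs₁pos : 0 < s₁ := div_pos hl1 (by linarith)
  have hs₁lt : s₁ < 1 := by
    rw [hs₁def, div_lt_one (by linarith)]; linarith
  have hpsi1s₁ : psiAux n lam 1 s₁ = 1 := by
    show lam n * s₁ / (lam (n - 1) * (1 - psiAux n lam 0 s₁)) = 1
    show lam n * s₁ / (lam (n - 1) * (1 - s₁)) = 1
    rw [hs₁def]
    have hA : lam n + lam (n-1) ≠ 0 := by positivity
    field_simp
    rw [add_sub_cancel_right, div_self hl0.ne']
  have hs₁notE : s₁ ∉ E := by
    intro h
    have := h 1 (by omega)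
    rw [hpsi1s₁] at this; exact lt_irrefl _ this
  -- the set T and its sup
  set T : Set ℝ := {t | 0 ≤ t ∧ Set.Icc 0 t ⊆ E} with hT
  have h0T : (0:ℝ) ∈ T := ⟨le_rfl, by intro x hx; rw [show x = 0 by exact le_antisymm hx.2 hx.1]; exact h0E⟩
  have hub : ∀ t ∈ T, t ≤ s₁ := by
    intro t ht
    by_contra hc
    push_neg at hc
    exact hs₁notE (ht.2 ⟨le_of_lt hs₁pos, le_of_lt hc⟩)
  have hbdd : BddAbove T := ⟨s₁, hub⟩
  set sS : ℝ := sSup T with hsS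
  have hsSle : sS ≤ s₁ := csSup_le ⟨0, h0T⟩ hub
  have hsSpos : 0 < sS := by
    obtain ⟨ε, hε, hball⟩ := Metric.isOpen_iff.mp hEopen 0 h0E
    have htT : (ε/2) ∈ T := by
      refine ⟨by positivity, fun x hx => hball ?_⟩
      rw [Metric.mem_ball, Real.dist_eq, sub_zero, abs_of_nonneg hx.1]
      linarith [hx.2]
    calc (0:ℝ) < ε/2 := by positivity
    _ ≤ sS := le_csSup hbdd htT
  have hIco : ∀ s, 0 ≤ s → s < sS → s ∈ E := by
    intro s hs0 hslt
    obtain ⟨t, htT, hst⟩ := exists_lt_of_lt_csSup ⟨0, h0T⟩ hslt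
    exact htT.2 ⟨hs0, le_of_lt hst⟩
  have hsSnotE : sS ∉ E := by
    intro hmem
    obtain ⟨ε, hε, hball⟩ := Metric.isOpen_iff.mp hEopen sS hmem
    set t : ℝ := sS + min (ε/2) 1 with htdef
    have htT : t ∈ T := by
      refine ⟨by positivity, fun x hx => ?_⟩
      rcases lt_or_ge x sS with h | h
      · exact hIco x hx.1 h
      rcases eq_or_lt_of_le h with h' | h'
      · rw [← h']; exact hmem
      · apply hball
        rw [Metric.mem_ball, Real.dist_eq, abs_of_nonneg (by linarith)]
        have := hx.2
        have hm : min (ε/2) 1 ≤ ε/2 := min_le_left _ _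
        rw [htdef] at this
        linarith
    have := le_csSup hbdd htT
    have hpos : 0 < min (ε/2) 1 := lt_min (by positivity) one_pos
    rw [htdef] at this
    linarith
  -- minimal failing index
  have hPex : ∃ m, ¬ psiAux n lam m sS < 1 := by
    simp only [hE, Set.mem_setOf_eq, not_forall] at hsSnotE
    push_neg at hsSnotE
    obtain ⟨m, _, hm2⟩ := hsSnotE
    exact ⟨m, not_lt.mpr hm2⟩
  set M : ℕ := Nat.find hPex with hMdef
  have hM1 : 1 ≤ psiAux n lam M sS := not_lt.mp (Nat.find_spec hPex)
  have hMmin : ∀ m' < M, psiAux n lam m' sS < 1 := by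
    intro m' hm'
    exact not_not.mp (Nat.find_min hPex hm')
  have hMlt : M < n := by
    simp only [hE, Set.mem_setOf_eq, not_forall] at hsSnotE
    push_neg at hsSnotE
    obtain ⟨m, hmn, hm2⟩ := hsSnotE
    have : M ≤ m := Nat.find_le (not_lt.mpr hm2)
    omega
  have hcontM : ContinuousAt (psiAux n lam M) sS :=
    psiAux_contAt n lam hlam M sS (fun m' hm' => (hMmin m' hm').ne)
  -- left limit ≤ 1 hence = 1
  have hIooMem : Set.Ioo (0:ℝ) sS ∈ nhdsWithin sS (Set.Iio sS) :=
    Ioo_mem_nhdsLT_of_mem ⟨hsSpos, le_rfl⟩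
  have hMeq : psiAux n lam M sS = 1 := by
    refine le_antisymm ?_ hM1
    have htend : Filter.Tendsto (psiAux n lam M) (nhdsWithin sS (Set.Iio sS))
        (nhds (psiAux n lam M sS)) := hcontM.continuousWithinAt
    refine le_of_tendsto htend ?_
    filter_upwards [hIooMem] with x hx
    exact le_of_lt (hIco x hx.1.le hx.2 M hMlt)
  -- M must be n - 1
  have hMeqn : M = n - 1 := by
    by_contra hMne
    have hM1n : M + 1 < n := by omega
    -- psiAux (M+1) blows up
    have htend1 : Filter.Tendsto (fun x => lam (n - (M+1)) * (1 - psiAux n lam M x))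
        (nhdsWithin sS (Set.Iio sS)) (nhdsWithin 0 (Set.Ioi 0)) := by
      rw [tendsto_nhdsWithin_iff]
      constructor
      · have : Filter.Tendsto (fun x => lam (n - (M+1)) * (1 - psiAux n lam M x))
            (nhds sS) (nhds (lam (n - (M+1)) * (1 - psiAux n lam M sS))) :=
          (continuousAt_const.mul (continuousAt_const.sub hcontM))
        rw [hMeq] at this
        simpa using this.mono_left nhdsWithin_le_nhds
      · filter_upwards [hIooMem] with x hx
        have : psiAux n lam M x < 1 := hIco x hx.1.le hx.2 M hMlt
        have := hlam (n - (M+1)) (Nat.sub_le _ _)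
        exact mul_pos this (by linarith)
    have hinv : Filter.Tendsto (fun x => (lam (n - (M+1)) * (1 - psiAux n lam M x))⁻¹)
        (nhdsWithin sS (Set.Iio sS)) Filter.atTop := htend1.inv_tendsto_nhdsGT_zero
    have hnum : Filter.Tendsto (fun x => lam n * x) (nhdsWithin sS (Set.Iio sS))
        (nhds (lam n * sS)) :=
      ((continuousAt_const.mul continuousAt_id).continuousWithinAt)
    have hprod : Filter.Tendsto (fun x => (lam n * x) * (lam (n - (M+1)) * (1 - psiAux n lam M x))⁻¹)
        (nhdsWithin sS (Set.Iio sS)) Filter.atTop :=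
      Filter.Tendsto.pos_mul_atTop (mul_pos hl0 hsSpos) hnum hinv
    have hgt : ∀ᶠ x in nhdsWithin sS (Set.Iio sS),
        1 < (lam n * x) * (lam (n - (M+1)) * (1 - psiAux n lam M x))⁻¹ :=
      hprod.eventually_gt_atTop 1
    have hlt : ∀ᶠ x in nhdsWithin sS (Set.Iio sS),
        psiAux n lam (M+1) x < 1 := by
      filter_upwards [hIooMem] with x hx
      exact hIco x hx.1.le hx.2 (M+1) hM1n
    have : ∀ᶠ x in nhdsWithin sS (Set.Iio sS), False := by
      filter_upwards [hgt, hlt] with x h1 h2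
      have : psiAux n lam (M+1) x = (lam n * x) * (lam (n - (M+1)) * (1 - psiAux n lam M x))⁻¹ := by
        show lam n * x / _ = _
        rw [div_eq_mul_inv]
      rw [this] at h2
      linarith
    have hne : (nhdsWithin sS (Set.Iio sS)).NeBot := by
      exact nhdsLT_neBot sS
    exact (this.exists).elim (fun _ h => h)
  -- the function F and IVT
  set F : ℝ → ℝ := fun s => lam 0 * k * g (lam n * s) * (1 - psiAux n lam (n-1) s) - lam n * s
    with hF
  have hFcont : ContinuousOn F (Set.Icc 0 sS) := by
    apply continuousOn_of_forall_continuousAt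
    intro x hx
    have hc : ContinuousAt (psiAux n lam (n-1)) x := by
      apply psiAux_contAt n lam hlam
      intro m' hm'
      rcases lt_or_ge x sS with h | h
      · exact (hIco x hx.1 h m' (by omega)).ne
      · have : x = sS := le_antisymm hx.2 h
        rw [this]
        exact (hMmin m' (by omega)).ne
    exact (((continuousAt_const.mul (hgc.continuousAt.comp
      (continuousAt_const.mul continuousAt_id))).mul
      (continuousAt_const.sub hc)).sub (continuousAt_const.mul continuousAt_id))
  have hF0 : 0 < F 0 := by
    rw [hF]
    simp only [mul_zero, psiAux_zero, sub_zero]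
    have := hgpos 0 le_rfl
    have := hlam 0 (by omega)
    positivity
  have hFsS : F sS < 0 := by
    rw [hF]
    simp only []
    rw [← hMeqn, hMeq]
    simp only [sub_self, mul_zero, zero_sub, neg_lt, neg_zero]
    exact mul_pos hl0 hsSpos
  have hmem : (0:ℝ) ∈ Set.Icc (F sS) (F 0) := ⟨le_of_lt hFsS, le_of_lt hF0⟩
  obtain ⟨s₀, hs₀mem, hFs₀⟩ := intermediate_value_Icc' (le_of_lt hsSpos) hFcont hmem
  have hs₀ne0 : s₀ ≠ 0 := by
    intro h; rw [h] at hFs₀; rw [hFs₀] at hF0; exact lt_irrefl _ hF0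
  have hs₀neS : s₀ ≠ sS := by
    intro h; rw [h] at hFs₀; rw [hFs₀] at hFsS; exact lt_irrefl _ hFsS
  have hs₀pos : 0 < s₀ := lt_of_le_of_ne hs₀mem.1 (Ne.symm hs₀ne0)
  have hs₀E : s₀ ∈ E := hIco s₀ hs₀mem.1 (lt_of_le_of_ne hs₀mem.2 hs₀neS)
  refine ⟨s₀, hs₀pos, hs₀E, ?_⟩
  have h2 : lam 0 * k * g (lam n * s₀) * (1 - psiAux n lam (n-1) s₀) - lam n * s₀ = 0 := hFs₀
  linarith

lemma psiAux_succ (n : ℕ) (lam : ℕ → ℝ) (m : ℕ) (s : ℝ) :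
  psiAux n lam (m+1) s = lam n * s / (lam (n - (m+1)) * (1 - psiAux n lam m s)) := rfl

lemma psiAux_zero' (n : ℕ) (lam : ℕ → ℝ) (s : ℝ) : psiAux n lam 0 s = s := rfl

/-- The closed-loop RFM admits at least one equilibrium in the
unit cube, and every equilibrium in the cube lies in the open cube `(0,1)^n`. -/
theorem rfm_negfb_equilibrium_exists_interior
    (n : ℕ) (hn : 2 ≤ n) (lam : ℕ → ℝ) (hlam : ∀ i, i ≤ n → 0 < lam i)
    (k : ℝ) (hk : 0 < k)
    (g : ℝ → ℝ) (hg : ContDiff ℝ 1 g) (hgpos : ∀ z : ℝ, 0 ≤ z → 0 < g z)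
    (hgder : ∀ z : ℝ, 0 < z → deriv g z < 0) :
    (∃ e : Fin n → ℝ, (∀ i, e i ∈ Set.Icc (0:ℝ) 1) ∧ rfmField n lam k g e = 0) ∧
    (∀ e : Fin n → ℝ, (∀ i, e i ∈ Set.Icc (0:ℝ) 1) → rfmField n lam k g e = 0 →
      ∀ i, e i ∈ Set.Ioo (0:ℝ) 1) := by
  constructor
  · -- existence
    obtain ⟨s₀, hs₀pos, hs₀E, heq⟩ :=
      exists_s0 n hn lam hlam k hk g hg.continuous hgpos
    set e : Fin n → ℝ := fun i => psiAux n lam (n - 1 - i.val) s₀ with he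
    have hext : ∀ j, j < n → extVec e j = psiAux n lam (n - 1 - j) s₀ := by
      intro j hj
      rw [extVec, dif_pos hj]
    have hlt1 : ∀ m, m < n → psiAux n lam m s₀ < 1 := hs₀E
    have hpos : ∀ m, m < n → 0 < psiAux n lam m s₀ := fun m hm =>
      psiAux_pos n lam hlam m s₀ hs₀pos (fun m' hm' => hlt1 m' (by omega))
    have hflow : ∀ j, j ≤ n → rfmFlow n lam k g e j = lam n * s₀ := by
      intro j hj
      rcases Nat.eq_zero_or_pos j with hj0 | hj0
      · subst hj0
        rw [rfmFlow, if_pos rfl, hext (n-1) (by omega), hext 0 (by omega)]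
        rw [show n - 1 - (n-1) = 0 by omega, psiAux_zero']
        exact heq
      rcases eq_or_lt_of_le hj with hjn | hjn
      · subst hjn
        rw [rfmFlow, if_neg (by omega), if_pos rfl, hext (j-1) (by omega)]
        rw [show j - 1 - (j-1) = 0 by omega, psiAux_zero']
      · rw [rfmFlow, if_neg (by omega), if_neg (by omega),
          hext (j-1) (by omega), hext j (by omega)]
        rw [show n - 1 - (j-1) = (n - 1 - j) + 1 by omega, psiAux_succ,
          show n - ((n - 1 - j) + 1) = j by omega]
        have hD : (1 : ℝ) - psiAux n lam (n-1-j) s₀ ≠ 0 :=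
          (sub_pos.mpr (hlt1 _ (by omega))).ne'
        have hljne : lam j ≠ 0 := (hlam j (by omega)).ne'
        field_simp
    refine ⟨e, ?_, ?_⟩
    · intro i
      have h1 : n - 1 - i.val < n := by omega
      exact ⟨le_of_lt (hpos _ h1), le_of_lt (hlt1 _ h1)⟩
    · funext i
      rw [rfmField, hflow i.val (le_of_lt (by omega : i.val < n)),
        hflow (i.val + 1) (by omega), sub_self]
      rfl
  · -- interiority
    intro e hbox hfield i
    have hext : ∀ (j : ℕ) (h : j < n), extVec e j = e ⟨j, h⟩ := fun j h => dif_pos h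
    set R : ℝ := rfmFlow n lam k g e 0 with hR
    have hflows : ∀ j, j ≤ n → rfmFlow n lam k g e j = R := by
      intro j
      induction j with
      | zero => intro _; rfl
      | succ j ih =>
        intro hj
        have hi : j < n := by omega
        have := congrFun hfield ⟨j, hi⟩
        have h0 : rfmFlow n lam k g e j - rfmFlow n lam k g e (j+1) = 0 := this
        have := ih (by omega)
        linarith
    have hen1 : extVec e (n-1) = e ⟨n-1, by omega⟩ := hext (n-1) (by omega)
    have hRn : lam n * extVec e (n-1) = R := by
      have := hflows n (le_rfl)
      rw [rfmFlow, if_neg (by omega), if_pos rfl] at this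
      exact this
    have hzarg : 0 ≤ lam n * extVec e (n-1) := by
      rw [hen1]
      exact mul_nonneg (le_of_lt (hlam n le_rfl)) (hbox _).1
    -- R ≠ 0
    have hRne : R ≠ 0 := by
      intro hR0
      have hen10 : extVec e (n-1) = 0 := by
        have h := hRn
        rw [hR0, mul_eq_zero] at h
        rcases h with h | h
        · exact absurd h (hlam n le_rfl).ne'
        · exact h
      have hall1 : ∀ j, j < n → extVec e j = 1 := by
        intro j
        induction j with
        | zero =>
          intro hj
          have h := hflows 0 (by omega)
          rw [rfmFlow, if_pos rfl, hR0] at h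
          have hg0 : 0 < g (lam n * extVec e (n-1)) := hgpos _ hzarg
          have : (1:ℝ) - extVec e 0 = 0 := by
            rcases mul_eq_zero.mp h with h' | h'
            · rcases mul_eq_zero.mp h' with h'' | h''
              · rcases mul_eq_zero.mp h'' with h3 | h3
                · exact absurd h3 (hlam 0 (by omega)).ne'
                · exact absurd h3 hk.ne'
              · exact absurd h'' hg0.ne'
            · exact h'
          linarith
        | succ j ih =>
          intro hj
          have hprev : extVec e j = 1 := ih (by omega)
          have h := hflows (j+1) (by omega)
          rw [rfmFlow, if_neg (by omega), if_neg (by omega), hR0,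
            Nat.add_sub_cancel, hprev, mul_one] at h
          have : (1:ℝ) - extVec e (j+1) = 0 := by
            rcases mul_eq_zero.mp h with h' | h'
            · exact absurd h' (hlam (j+1) (by omega)).ne'
            · exact h'
          linarith
      have := hall1 (n-1) (by omega)
      rw [hen10] at this
      norm_num at this
    have hRpos : 0 < R := lt_of_le_of_ne (hRn ▸ hzarg) (Ne.symm hRne)
    -- upper bound : e i < 1
    have hupper : e i < 1 := by
      rcases Nat.eq_zero_or_pos i.val with h0 | h0
      · have h := hflows 0 (by omega)
        rw [rfmFlow, if_pos rfl] at h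
        have : extVec e 0 ≠ 1 := by
          intro h1
          rw [h1] at h
          simp at h
          exact hRne h.symm
        rw [hext 0 (by omega)] at this
        have : e i ≠ 1 := by
          have hieq : i = ⟨0, by omega⟩ := by
            apply Fin.ext; exact h0
          rw [hieq]; exact this
        exact lt_of_le_of_ne (hbox i).2 this
      · have h := hflows i.val (le_of_lt i.isLt)
        rw [rfmFlow, if_neg (by omega), if_neg (by omega)] at h
        have : extVec e i.val ≠ 1 := by
          intro h1
          rw [h1] at h
          simp at h
          exact hRne h.symm
        rw [hext i.val i.isLt] at this
        have hieq : (⟨i.val, i.isLt⟩ : Fin n) = i := by apply Fin.ext; rfl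
        rw [hieq] at this
        exact lt_of_le_of_ne (hbox i).2 this
    -- lower bound : 0 < e i
    have hlower : 0 < e i := by
      rcases eq_or_lt_of_le (show i.val ≤ n - 1 by omega) with hieq | hilt
      · -- i = n-1
        have hpos : extVec e (n-1) ≠ 0 := by
          intro h0
          rw [h0, mul_zero] at hRn
          exact hRne hRn.symm
        rw [hen1] at hpos
        have : (⟨n-1, by omega⟩ : Fin n) = i := by apply Fin.ext; simp [← hieq]
        rw [this] at hpos
        exact lt_of_le_of_ne (hbox i).1 (Ne.symm hpos)
      · -- i.val + 1 ≤ n - 1, use flow (i.val + 1)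
        have h := hflows (i.val+1) (by omega)
        rw [rfmFlow, if_neg (by omega), if_neg (by omega), Nat.add_sub_cancel] at h
        have : extVec e i.val ≠ 0 := by
          intro h0
          rw [h0] at h
          simp at h
          exact hRne h.symm
        rw [hext i.val i.isLt] at this
        have hieq : (⟨i.val, i.isLt⟩ : Fin n) = i := by apply Fin.ext; rfl
        rw [hieq] at this
        exact lt_of_le_of_ne (hbox i).1 (Ne.symm this)
    exact ⟨hlower, hupper⟩
end

section
/- The equilibrium of the closed-loop RFM with negative feedback is unique in the unit cube: if p, q ∈ [0,1]^n satisfy f(p) = 0 and f(q) = 0, then p = q. -/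
open scoped BigOperators

/-!
At an equilibrium all flows equal the exit flow `R = λₙ xₙ`. Reading the flow equations
`R = λᵢ xᵢ (1 - xᵢ₊₁)` backwards from `xₙ = R / λₙ` shows that every density is an
increasing function of `R`, so the initiation flow `λ₀ k g(R) (1 - x₁)` is strictly
decreasing in `R`. Two equilibria with different exit flows would therefore contradict
`R = λ₀ k g(R) (1 - x₁)`; with equal exit flows the backward recursion makes them equal.
-/

theorem strictAntiOn_Ioi_of_deriv_neg {f : ℝ → ℝ} {a : ℝ}
    (hf : ∀ x, a < x → deriv f x < 0) : StrictAntiOn f (Set.Ioi a) := by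
  refine strictAntiOn_of_deriv_neg (convex_Ioi a) (fun x hx => ?_) ?_
  · exact (differentiableAt_of_deriv_ne_zero (hf x hx).ne).continuousAt.continuousWithinAt
  · rw [interior_Ioi]
    exact hf

namespace RFM

variable {n : ℕ} {lam : ℕ → ℝ} {k : ℝ} {g : ℝ → ℝ} {x : Fin n → ℝ}

@[simp]
theorem extVec_val (i : Fin n) : extVec x i = x i := by
  simp [extVec]

theorem extVec_mem_Icc (hx : ∀ i, x i ∈ Set.Icc (0 : ℝ) 1) (j : ℕ) :
    extVec x j ∈ Set.Icc (0 : ℝ) 1 := by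
  unfold extVec
  split
  · exact hx _
  · norm_num

theorem rfmFlow_self (hn : 0 < n) :
    rfmFlow n lam k g x n = lam n * extVec x (n - 1) := by
  simp [rfmFlow, hn.ne']

theorem rfmFlow_zero (hn : 0 < n) :
    rfmFlow n lam k g x 0 =
      lam 0 * k * g (rfmFlow n lam k g x n) * (1 - extVec x 0) := by
  rw [rfmFlow_self hn]
  simp [rfmFlow]

theorem rfmFlow_succ {j : ℕ} (hj : j + 1 < n) :
    rfmFlow n lam k g x (j + 1) = lam (j + 1) * extVec x j * (1 - extVec x (j + 1)) := by
  simp [rfmFlow, hj.ne]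

theorem rfmFlow_eq_zero_of_extVec_eq_one {j : ℕ} (hj : j < n) (hx : extVec x j = 1) :
    rfmFlow n lam k g x j = 0 := by
  cases j with
  | zero => simp [rfmFlow_zero hj, hx]
  | succ j => simp [rfmFlow_succ hj, hx]

theorem rfmFlow_eq_rfmFlow_self (hx : rfmField n lam k g x = 0) {j : ℕ} (hj : j ≤ n) :
    rfmFlow n lam k g x j = rfmFlow n lam k g x n := by
  induction hj using Nat.decreasingInduction with
  | self => rfl
  | of_succ i hi ih =>
    have := congrFun hx ⟨i, hi⟩
    simp only [rfmField, Pi.zero_apply, sub_eq_zero] at this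
    rw [this, ih]

theorem rfmFlow_self_pos (hlam : ∀ i, i ≤ n → 0 < lam i) (hk : 0 < k)
    (hgpos : ∀ z : ℝ, 0 ≤ z → 0 < g z) (hn : 0 < n)
    (hx : ∀ i, x i ∈ Set.Icc (0 : ℝ) 1) (hxe : rfmField n lam k g x = 0) :
    0 < rfmFlow n lam k g x n := by
  have hexit := rfmFlow_self (lam := lam) (k := k) (g := g) (x := x) hn
  have hR_nonneg : 0 ≤ rfmFlow n lam k g x n :=
    hexit ▸ mul_nonneg (hlam n le_rfl).le (extVec_mem_Icc hx _).1
  by_contra! hR_nonpos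
  have hR : rfmFlow n lam k g x n = 0 := le_antisymm hR_nonpos hR_nonneg
  -- With no flow, the densities are forced to `1` from the first site onwards.
  have hfull : ∀ j < n, extVec x j = 1 := by
    intro j hj
    have hflow := rfmFlow_eq_rfmFlow_self hxe hj.le
    induction j with
    | zero =>
      rw [rfmFlow_zero hn, hR] at hflow
      have hc : lam 0 * k * g 0 ≠ 0 :=
        (mul_pos (mul_pos (hlam 0 (Nat.zero_le n)) hk) (hgpos 0 le_rfl)).ne'
      linarith [(mul_eq_zero.1 hflow).resolve_left hc]
    | succ j ih =>
      rw [rfmFlow_succ hj, ih (by omega) (rfmFlow_eq_rfmFlow_self hxe (by omega)), hR,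
        mul_one] at hflow
      linarith [(mul_eq_zero.1 hflow).resolve_left (hlam _ hj.le).ne']
  rw [hfull (n - 1) (by omega), mul_one, hR] at hexit
  exact (hlam n le_rfl).ne' hexit.symm

theorem extVec_lt_one (hR : 0 < rfmFlow n lam k g x n)
    (hx : ∀ i, x i ∈ Set.Icc (0 : ℝ) 1) (hxe : rfmField n lam k g x = 0) {j : ℕ} (hj : j < n) :
    extVec x j < 1 := by
  refine lt_of_le_of_ne (extVec_mem_Icc hx j).2 fun h => hR.ne' ?_
  rw [← rfmFlow_eq_rfmFlow_self hxe hj.le, rfmFlow_eq_zero_of_extVec_eq_one hj h]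

theorem extVec_le_of_rfmFlow_self_le (hlam : ∀ i, i ≤ n → 0 < lam i) {p q : Fin n → ℝ}
    (hp : ∀ i, p i ∈ Set.Icc (0 : ℝ) 1) (hpe : rfmField n lam k g p = 0)
    (hqe : rfmField n lam k g q = 0) (hq : ∀ j < n, extVec q j < 1)
    (hR : rfmFlow n lam k g p n ≤ rfmFlow n lam k g q n) {j : ℕ} (hj : j < n) :
    extVec p j ≤ extVec q j := by
  have hn : 0 < n := by omega
  induction Nat.le_sub_one_of_lt hj using Nat.decreasingInduction with
  | self =>
    rw [rfmFlow_self hn, rfmFlow_self hn] at hR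
    exact le_of_mul_le_mul_left hR (hlam n le_rfl)
  | of_succ i hi ih =>
    have hi' : i + 1 < n := by omega
    have hpq := ih hi'
    have hP := rfmFlow_eq_rfmFlow_self hpe hi'.le
    have hQ := rfmFlow_eq_rfmFlow_self hqe hi'.le
    rw [rfmFlow_succ hi'] at hP hQ
    have hc : 0 < lam (i + 1) * (1 - extVec q (i + 1)) :=
      mul_pos (hlam (i + 1) hi'.le) (sub_pos.2 (hq (i + 1) hi'))
    -- `λ pᵢ (1 - qᵢ₊₁) ≤ λ pᵢ (1 - pᵢ₊₁) = R_p ≤ R_q = λ qᵢ (1 - qᵢ₊₁)`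
    nlinarith [mul_nonneg (mul_nonneg (hlam (i + 1) hi'.le).le (extVec_mem_Icc hp i).1)
      (sub_nonneg.2 hpq)]

theorem rfmFlow_self_le (hlam : ∀ i, i ≤ n → 0 < lam i) (hk : 0 < k)
    (hgpos : ∀ z : ℝ, 0 ≤ z → 0 < g z) (hgder : ∀ z : ℝ, 0 < z → deriv g z < 0)
    (hn : 0 < n) {p q : Fin n → ℝ}
    (hp : ∀ i, p i ∈ Set.Icc (0 : ℝ) 1) (hq : ∀ i, q i ∈ Set.Icc (0 : ℝ) 1)
    (hpe : rfmField n lam k g p = 0) (hqe : rfmField n lam k g q = 0) :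
    rfmFlow n lam k g q n ≤ rfmFlow n lam k g p n := by
  set Rp := rfmFlow n lam k g p n
  set Rq := rfmFlow n lam k g q n
  by_contra! hlt
  have hRp := rfmFlow_self_pos hlam hk hgpos hn hp hpe
  have hRq := rfmFlow_self_pos hlam hk hgpos hn hq hqe
  have hq0 := extVec_lt_one hRq hq hqe hn
  have hpq0 : extVec p 0 ≤ extVec q 0 :=
    extVec_le_of_rfmFlow_self_le hlam hp hpe hqe (fun _ => extVec_lt_one hRq hq hqe)
      hlt.le hn
  have hg : g Rq < g Rp := strictAntiOn_Ioi_of_deriv_neg hgder hRp hRq hlt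
  have hgq := hgpos Rq hRq.le
  have hc : 0 < lam 0 * k := mul_pos (hlam 0 (Nat.zero_le n)) hk
  have hP := rfmFlow_eq_rfmFlow_self hpe (Nat.zero_le n)
  have hQ := rfmFlow_eq_rfmFlow_self hqe (Nat.zero_le n)
  rw [rfmFlow_zero hn] at hP hQ
  -- In `R = λ₀ k g(R) (1 - x₀)` the right side is smaller at `q` than at `p`, the left side larger.
  nlinarith [mul_pos (mul_pos hc (sub_pos.2 hg)) (sub_pos.2 hq0),
    mul_nonneg (mul_nonneg hc.le hgq.le) (sub_nonneg.2 hpq0)]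

end RFM

open RFM in
theorem rfm_negfb_equilibrium_unique_general
    (n : ℕ) (lam : ℕ → ℝ) (hlam : ∀ i, i ≤ n → 0 < lam i)
    (k : ℝ) (hk : 0 < k)
    (g : ℝ → ℝ) (hgpos : ∀ z : ℝ, 0 ≤ z → 0 < g z)
    (hgder : ∀ z : ℝ, 0 < z → deriv g z < 0)
    (p q : Fin n → ℝ)
    (hp : ∀ i, p i ∈ Set.Icc (0:ℝ) 1) (hq : ∀ i, q i ∈ Set.Icc (0:ℝ) 1)
    (hpe : rfmField n lam k g p = 0) (hqe : rfmField n lam k g q = 0) :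
    p = q := by
  rcases Nat.eq_zero_or_pos n with rfl | hn
  · exact Subsingleton.elim p q
  have hR : rfmFlow n lam k g p n = rfmFlow n lam k g q n :=
    le_antisymm (rfmFlow_self_le hlam hk hgpos hgder hn hq hp hqe hpe)
      (rfmFlow_self_le hlam hk hgpos hgder hn hp hq hpe hqe)
  have hRp := rfmFlow_self_pos hlam hk hgpos hn hp hpe
  have hRq := rfmFlow_self_pos hlam hk hgpos hn hq hqe
  funext i
  simpa using le_antisymm
    (extVec_le_of_rfmFlow_self_le hlam hp hpe hqe (fun _ => extVec_lt_one hRq hq hqe) hR.le i.2)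
    (extVec_le_of_rfmFlow_self_le hlam hq hqe hpe (fun _ => extVec_lt_one hRp hp hpe) hR.ge i.2)

/-- The equilibrium of the closed-loop RFM is unique in the
unit cube. -/
theorem rfm_negfb_equilibrium_unique
    (n : ℕ) (hn : 2 ≤ n) (lam : ℕ → ℝ) (hlam : ∀ i, i ≤ n → 0 < lam i)
    (k : ℝ) (hk : 0 < k)
    (g : ℝ → ℝ) (hg : ContDiff ℝ 1 g) (hgpos : ∀ z : ℝ, 0 ≤ z → 0 < g z)
    (hgder : ∀ z : ℝ, 0 < z → deriv g z < 0)
    (p q : Fin n → ℝ)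
    (hp : ∀ i, p i ∈ Set.Icc (0:ℝ) 1) (hq : ∀ i, q i ∈ Set.Icc (0:ℝ) 1)
    (hpe : rfmField n lam k g p = 0) (hqe : rfmField n lam k g q = 0) :
    p = q :=
  rfm_negfb_equilibrium_unique_general n lam hlam k hk g hgpos hgder p q hp hq hpe hqe
end

section
/- For all sufficiently small feedback gains the unique equilibrium of the closed-loop RFM attracts all trajectories from the unit cube: there exists k* > 0 such that for every 0 < k < k*, the system admits a unique equilibrium e ∈ (0,1)^n and for every initial condition a ∈ [0,1]^n the solution satisfies x(t,a) → e as t → ∞. -/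
open scoped BigOperators

namespace RFMaux
open Filter Set

lemma extVec_lt {n : ℕ} (x : Fin n → ℝ) {j : ℕ} (h : j < n) :
    extVec x j = x ⟨j, h⟩ := dif_pos h

lemma extVec_ge {n : ℕ} (x : Fin n → ℝ) {j : ℕ} (h : n ≤ j) :
    extVec x j = 0 := dif_neg (by omega)

lemma rfmFlow_zero {n : ℕ} (lam : ℕ → ℝ) (k : ℝ) (g : ℝ → ℝ) (x : Fin n → ℝ) :
    rfmFlow n lam k g x 0
      = lam 0 * k * g (lam n * extVec x (n - 1)) * (1 - extVec x 0) := if_pos rfl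

lemma rfmFlow_pos {n : ℕ} (lam : ℕ → ℝ) (k : ℝ) (g : ℝ → ℝ) (x : Fin n → ℝ)
    {j : ℕ} (h1 : 1 ≤ j) (h2 : j ≤ n) :
    rfmFlow n lam k g x j = lam j * extVec x (j - 1) * (1 - extVec x j) := by
  rcases eq_or_lt_of_le h2 with rfl | h2
  · rw [rfmFlow, if_neg (by omega), if_pos rfl, extVec_ge x le_rfl]
    ring
  · rw [rfmFlow, if_neg (by omega), if_neg (by omega)]

/-- The vector field in coordinate `j ≥ 1`. -/
lemma rfmField_pos {n : ℕ} (lam : ℕ → ℝ) (k : ℝ) (g : ℝ → ℝ) (x : Fin n → ℝ)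
    {j : ℕ} (h1 : 1 ≤ j) (h2 : j < n) :
    rfmField n lam k g x ⟨j, h2⟩
      = lam j * extVec x (j - 1) * (1 - extVec x j)
        - lam (j+1) * extVec x j * (1 - extVec x (j+1)) := by
  rw [rfmField]
  simp only
  rw [rfmFlow_pos lam k g x h1 (le_of_lt h2),
      rfmFlow_pos lam k g x (by omega) (by omega)]
  simp

lemma rfmField_zero {n : ℕ} (hn : 2 ≤ n) (lam : ℕ → ℝ) (k : ℝ) (g : ℝ → ℝ)
    (x : Fin n → ℝ) :
    rfmField n lam k g x ⟨0, by omega⟩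
      = lam 0 * k * g (lam n * extVec x (n - 1)) * (1 - extVec x 0)
        - lam 1 * extVec x 0 * (1 - extVec x 1) := by
  rw [rfmField]
  simp only
  rw [rfmFlow_zero, rfmFlow_pos lam k g x le_rfl (by omega)]



lemma contDiff_extVec {n : ℕ} (j : ℕ) :
    ContDiff ℝ 1 (fun x : Fin n → ℝ => extVec x j) := by
  by_cases h : j < n
  · simp only [extVec, dif_pos h]
    exact contDiff_apply ℝ ℝ (⟨j, h⟩ : Fin n)
  · simp only [extVec, dif_neg h]
    exact contDiff_const

lemma contDiff_rfmFlow {n : ℕ} (lam : ℕ → ℝ) (k : ℝ) {g : ℝ → ℝ}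
    (hg : ContDiff ℝ 1 g) (j : ℕ) :
    ContDiff ℝ 1 (fun x : Fin n → ℝ => rfmFlow n lam k g x j) := by
  unfold rfmFlow
  split_ifs with h1 h2
  · exact ((contDiff_const.mul
      (hg.comp (contDiff_const.mul (contDiff_extVec (n-1))))).mul
      (contDiff_const.sub (contDiff_extVec 0)))
  · exact contDiff_const.mul (contDiff_extVec (n-1))
  · exact (contDiff_const.mul (contDiff_extVec (j-1))).mul
      (contDiff_const.sub (contDiff_extVec j))

lemma contDiff_rfmField {n : ℕ} (lam : ℕ → ℝ) (k : ℝ) {g : ℝ → ℝ}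
    (hg : ContDiff ℝ 1 g) :
    ContDiff ℝ 1 (rfmField n lam k g) := by
  rw [contDiff_pi]
  intro i
  exact (contDiff_rfmFlow lam k hg i.val).sub (contDiff_rfmFlow lam k hg (i.val+1))

lemma continuous_rfmField {n : ℕ} (lam : ℕ → ℝ) (k : ℝ) {g : ℝ → ℝ}
    (hg : ContDiff ℝ 1 g) :
    Continuous (rfmField n lam k g) := (contDiff_rfmField lam k hg).continuous



/-- scalar clamp to [0,1] -/
noncomputable def clamp1 (t : ℝ) : ℝ := max 0 (min 1 t)

lemma clamp1_mem (t : ℝ) : clamp1 t ∈ Icc (0:ℝ) 1 := by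
  constructor
  · exact le_max_left _ _
  · rcases le_total t 1 with h | h
    · rw [clamp1, min_eq_right h]; exact max_le zero_le_one h
    · simp [clamp1, min_eq_left h]

lemma clamp1_eq_of_mem {t : ℝ} (h : t ∈ Icc (0:ℝ) 1) : clamp1 t = t := by
  rw [clamp1, min_eq_right h.2, max_eq_right h.1]

lemma abs_sub_clamp1_le {a : ℝ} (ha : a ∈ Icc (0:ℝ) 1) (t : ℝ) :
    |t - clamp1 t| ≤ |t - a| := by
  rcases le_total t 0 with h | h
  · rw [clamp1, min_eq_right (le_trans h zero_le_one), max_eq_left h]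
    rw [abs_of_nonpos (by linarith), abs_of_nonpos (by linarith [ha.1])]
    linarith [ha.1]
  · rcases le_total t 1 with h1 | h1
    · rw [clamp1_eq_of_mem ⟨h, h1⟩]; simp [abs_nonneg]
    · rw [clamp1, min_eq_left h1, max_eq_right zero_le_one]
      rw [abs_of_nonneg (by linarith), abs_of_nonneg (by linarith [ha.2])]
      linarith [ha.2]

lemma continuous_clamp1 : Continuous clamp1 :=
  continuous_const.max (continuous_const.min continuous_id)

noncomputable def clampV {n : ℕ} (q : Fin n → ℝ) : Fin n → ℝ := fun i => clamp1 (q i)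

lemma clampV_mem {n : ℕ} (q : Fin n → ℝ) (i : Fin n) : clampV q i ∈ Icc (0:ℝ) 1 :=
  clamp1_mem _

lemma continuous_clampV {n : ℕ} : Continuous (clampV (n := n)) :=
  continuous_pi fun i => continuous_clamp1.comp (continuous_apply i)

lemma norm_sub_clampV_le {n : ℕ} (q p : Fin n → ℝ) (hp : ∀ i, p i ∈ Icc (0:ℝ) 1) :
    ‖q - clampV q‖ ≤ ‖q - p‖ := by
  rcases Nat.eq_zero_or_pos n with rfl | hn
  · simp [Subsingleton.elim (q - clampV q) 0]
  · apply pi_norm_le_iff_of_nonneg (norm_nonneg _) |>.2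
    intro i
    calc ‖(q - clampV q) i‖ = |q i - clamp1 (q i)| := by simp [clampV]
    _ ≤ |q i - p i| := abs_sub_clamp1_le (hp i) (q i)
    _ = ‖(q - p) i‖ := by simp
    _ ≤ ‖q - p‖ := norm_le_pi_norm _ i

lemma mem_cube_of_norm_sub_clampV {n : ℕ} (q : Fin n → ℝ)
    (h : ‖q - clampV q‖ = 0) : ∀ i, q i ∈ Icc (0:ℝ) 1 := by
  have : q = clampV q := by
    have h2 := norm_sub_eq_zero_iff.mp h
    exact h2
  intro i; rw [this]; exact clampV_mem q i

lemma isClosed_cube {n : ℕ} : IsClosed {p : Fin n → ℝ | ∀ i, p i ∈ Icc (0:ℝ) 1} := by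
  have : {p : Fin n → ℝ | ∀ i, p i ∈ Icc (0:ℝ) 1}
      = ⋂ i, (fun p : Fin n → ℝ => p i) ⁻¹' Icc (0:ℝ) 1 := by
    ext p; simp
  rw [this]
  exact isClosed_iInter fun i => isClosed_Icc.preimage (continuous_apply i)

/-- inwardness gives short-time membership along straight line -/
lemma inward_eventually {n : ℕ} {F : (Fin n → ℝ) → (Fin n → ℝ)} {p : Fin n → ℝ}
    (hp : ∀ i, p i ∈ Icc (0:ℝ) 1)
    (hin : ∀ i, (p i = 0 → 0 ≤ F p i) ∧ (p i = 1 → F p i ≤ 0)) :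
    ∀ᶠ h in nhdsWithin (0:ℝ) (Ioi 0), ∀ i, p i + h * F p i ∈ Icc (0:ℝ) 1 := by
  rw [eventually_all]
  intro i
  have htend : Tendsto (fun h : ℝ => p i + h * F p i) (nhdsWithin 0 (Ioi 0)) (nhds (p i)) := by
    have : Tendsto (fun h : ℝ => p i + h * F p i) (nhds 0) (nhds (p i + 0 * F p i)) := by
      exact (continuous_const.add (continuous_id.mul continuous_const)).tendsto 0
    simpa using this.mono_left nhdsWithin_le_nhds
  have hlow : ∀ᶠ h in nhdsWithin (0:ℝ) (Ioi 0), 0 ≤ p i + h * F p i := by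
    rcases eq_or_lt_of_le (hp i).1 with h0 | h0
    · filter_upwards [self_mem_nhdsWithin] with h hh
      have := (hin i).1 h0.symm
      rw [← h0]
      have hh' : (0:ℝ) < h := mem_Ioi.mp hh
      nlinarith
    · exact (htend.eventually (eventually_ge_nhds h0)).mono (fun _ h => h)
  have hup : ∀ᶠ h in nhdsWithin (0:ℝ) (Ioi 0), p i + h * F p i ≤ 1 := by
    rcases eq_or_lt_of_le (hp i).2 with h1 | h1
    · filter_upwards [self_mem_nhdsWithin] with h hh
      have := (hin i).2 h1
      rw [h1]
      nlinarith [le_of_lt (mem_Ioi.mp hh)]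
    · exact (htend.eventually (eventually_le_nhds h1)).mono (fun _ h => h)
  filter_upwards [hlow, hup] with h h1 h2
  exact ⟨h1, h2⟩


lemma continuousOn_sol {n : ℕ} {F : (Fin n → ℝ) → (Fin n → ℝ)} {x : ℝ → Fin n → ℝ}
    (hx : ∀ t : ℝ, 0 ≤ t → HasDerivAt x (F (x t)) t) {t : ℝ} (ht : 0 ≤ t) :
    ContinuousAt x t := (hx t ht).continuousAt

/-- Forward invariance of the unit cube. -/
lemma cube_invariant {n : ℕ} {F : (Fin n → ℝ) → (Fin n → ℝ)}
    (hF : ContDiff ℝ 1 F)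
    (hin : ∀ p : Fin n → ℝ, (∀ i, p i ∈ Icc (0:ℝ) 1) →
      ∀ i, (p i = 0 → 0 ≤ F p i) ∧ (p i = 1 → F p i ≤ 0))
    {x : ℝ → Fin n → ℝ}
    (hx : ∀ t : ℝ, 0 ≤ t → HasDerivAt x (F (x t)) t)
    (h0 : ∀ i, x 0 i ∈ Icc (0:ℝ) 1) :
    ∀ t, 0 ≤ t → ∀ i, x t i ∈ Icc (0:ℝ) 1 := by
  set Bad : Set ℝ := {t | 0 ≤ t ∧ ¬ (∀ i, x t i ∈ Icc (0:ℝ) 1)} with hBad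
  by_contra hcon
  push_neg at hcon
  obtain ⟨t0, ht0, hbad0⟩ := hcon
  have hBadne : Bad.Nonempty := ⟨t0, ht0, fun h => hbad0.elim (fun i hi => hi (h i))⟩
  have hBadbdd : BddBelow Bad := ⟨0, fun b hb => hb.1⟩
  set T : ℝ := sInf Bad with hT
  have hT0 : 0 ≤ T := le_csInf hBadne (fun b hb => hb.1)
  have hgood : ∀ t, 0 ≤ t → t < T → ∀ i, x t i ∈ Icc (0:ℝ) 1 := by
    intro t ht htT
    by_contra hc
    exact absurd (csInf_le hBadbdd ⟨ht, hc⟩) (not_le.mpr htT)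
  have hxT : ∀ i, x T i ∈ Icc (0:ℝ) 1 := by
    rcases eq_or_lt_of_le hT0 with h | h
    · rw [← h]; exact h0
    · have htd : Filter.Tendsto x (nhdsWithin T (Iio T)) (nhds (x T)) :=
        (continuousOn_sol hx hT0).tendsto.mono_left nhdsWithin_le_nhds
      have hev : ∀ᶠ t in nhdsWithin T (Iio T),
          x t ∈ {p : Fin n → ℝ | ∀ i, p i ∈ Icc (0:ℝ) 1} := by
        filter_upwards [Ioo_mem_nhdsLT_of_mem (show T ∈ Ioc (0:ℝ) T from ⟨h, le_rfl⟩)]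
          with t ht
        exact hgood t (le_of_lt ht.1) ht.2
      exact isClosed_cube.mem_of_tendsto htd hev
  obtain ⟨K, s, hs, hlip⟩ := (hF.contDiffAt (x := x T)).exists_lipschitzOnWith
  obtain ⟨d0, hd0, hball⟩ := Metric.mem_nhds_iff.mp hs
  have hcont : ContinuousAt x T := continuousOn_sol hx hT0
  obtain ⟨d2, hd2, hnear⟩ : ∃ d2 > 0, ∀ t, |t - T| < d2 → dist (x t) (x T) < d0/2 := by
    have := Metric.tendsto_nhds.mp hcont.tendsto (d0/2) (by linarith)
    rw [Metric.eventually_nhds_iff] at this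
    obtain ⟨d2, hd2, hd2'⟩ := this
    exact ⟨d2, hd2, fun t ht => hd2' (by rw [Real.dist_eq]; exact ht)⟩
  set d3 : ℝ := d2/2 with hd3
  have hd3pos : 0 < d3 := by positivity
  set y : ℝ → ℝ := fun t => ‖x t - clampV (x t)‖ with hy
  have hy0 : y T = 0 := by
    have hcl : clampV (x T) = x T := by
      funext i
      exact clamp1_eq_of_mem (hxT i)
    rw [hy]; simp only [hcl, sub_self, norm_zero]
  have hycont : ContinuousOn y (Icc T (T + d3)) := by
    intro t ht
    have hct : ContinuousAt x t := continuousOn_sol hx (le_trans hT0 ht.1)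
    exact ((hct.sub (continuous_clampV.continuousAt.comp hct)).norm).continuousWithinAt
  have hnear' : ∀ t ∈ Icc T (T + d3), dist (x t) (x T) < d0/2 := by
    intro t ht
    apply hnear
    rw [abs_of_nonneg (by linarith [ht.1])]
    linarith [ht.2]
  have hgron : ∀ t ∈ Icc T (T + d3), y t ≤ gronwallBound 0 K 0 (t - T) := by
    apply le_gronwallBound_of_liminf_deriv_right_le (f' := fun t => K * y t) hycont
    · intro t ht r hr
      apply Filter.Eventually.frequently
      have htT : 0 ≤ t := le_trans hT0 ht.1
      have htmem : t ∈ Icc T (T + d3) := ⟨ht.1, le_of_lt ht.2⟩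
      set p : Fin n → ℝ := clampV (x t) with hp
      have hpmem : ∀ i, p i ∈ Icc (0:ℝ) 1 := clampV_mem (x t)
      have hyt : y t = ‖x t - p‖ := rfl
      have hxts : x t ∈ s := by
        apply hball
        rw [Metric.mem_ball]
        exact lt_trans (hnear' t htmem) (by linarith)
      have hytlt : y t < d0/2 := by
        rw [hyt]
        calc ‖x t - p‖ ≤ ‖x t - x T‖ := norm_sub_clampV_le (x t) (x T) hxT
        _ = dist (x t) (x T) := by rw [dist_eq_norm]
        _ < d0/2 := hnear' t htmem
      have hps : p ∈ s := by
        apply hball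
        rw [Metric.mem_ball, dist_comm]
        calc dist (x T) p ≤ dist (x T) (x t) + dist (x t) p := dist_triangle _ _ _
        _ < d0/2 + d0/2 := by
            apply add_lt_add
            · rw [dist_comm]; exact hnear' t htmem
            · rw [dist_eq_norm]; exact hytlt
        _ = d0 := by ring
      have hFlip : ‖F (x t) - F p‖ ≤ (K : ℝ) * y t := by
        have h1 := hlip.dist_le_mul (x t) hxts p hps
        rw [dist_eq_norm, dist_eq_norm] at h1
        rw [hyt]
        exact h1
      set c : ℝ := (r - K * y t)/2 with hc
      have hcpos : 0 < c := by rw [hc]; linarith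
      have hlo := ((hasDerivAt_iff_isLittleO.mp (hx t htT)).def hcpos).filter_mono
        (nhdsWithin_le_nhds (s := Ioi t))
      have hmap : Filter.Tendsto (fun z : ℝ => z - t)
          (nhdsWithin t (Ioi t)) (nhdsWithin 0 (Ioi 0)) := by
        apply tendsto_nhdsWithin_of_tendsto_nhds_of_eventually_within
        · have : Filter.Tendsto (fun z : ℝ => z - t) (nhds t) (nhds (t - t)) :=
            (continuous_id.sub continuous_const).tendsto t
          rw [sub_self] at this
          exact this.mono_left nhdsWithin_le_nhds
        · filter_upwards [self_mem_nhdsWithin] with z hz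
          exact sub_pos.mpr (Set.mem_Ioi.mp hz)
      have hev_in := hmap.eventually (inward_eventually hpmem (hin p hpmem))
      filter_upwards [hlo, hev_in, self_mem_nhdsWithin] with z hz1 hz2 hz3
      have hzt : 0 < z - t := sub_pos.mpr hz3
      have hyz : y z ≤ ‖x z - (p + (z - t) • F p)‖ := by
        apply norm_sub_clampV_le (x z)
        intro i
        have := hz2 i
        simpa using this
      have key : x z - (p + (z - t) • F p)
          = (x z - x t - (z - t) • F (x t)) + (x t - p) + (z - t) • (F (x t) - F p) := by
        rw [smul_sub]; abel
      have hnorm : ‖x z - (p + (z - t) • F p)‖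
          ≤ c * (z - t) + y t + (z - t) * ((K:ℝ) * y t) := by
        rw [key]
        calc ‖(x z - x t - (z - t) • F (x t)) + (x t - p) + (z - t) • (F (x t) - F p)‖
            ≤ ‖x z - x t - (z - t) • F (x t)‖ + ‖x t - p‖ + ‖(z - t) • (F (x t) - F p)‖ :=
              norm_add₃_le
        _ ≤ c * (z - t) + y t + (z - t) * ((K:ℝ) * y t) := by
            apply add_le_add (add_le_add ?_ ?_) ?_
            · have := hz1
              rw [Real.norm_eq_abs, abs_of_pos hzt] at this
              exact this
            · rw [hyt]
            · rw [norm_smul, Real.norm_eq_abs, abs_of_pos hzt]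
              exact mul_le_mul_of_nonneg_left hFlip (le_of_lt hzt)
      have hfinal : y z - y t ≤ (c + (K:ℝ) * y t) * (z - t) := by
        have := hyz.trans hnorm
        nlinarith
      calc (z - t)⁻¹ * (y z - y t) ≤ c + (K:ℝ) * y t := by
            rw [inv_mul_le_iff₀ hzt]
            calc y z - y t ≤ (c + (K:ℝ) * y t) * (z - t) := hfinal
            _ = (z - t) * (c + (K:ℝ) * y t) := by ring
      _ < r := by
            rw [hc]
            have : 0 ≤ (K:ℝ) * y t := mul_nonneg (NNReal.coe_nonneg K) (norm_nonneg _)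
            linarith
    · rw [hy0]
    · intro t ht
      simp
  have hcube2 : ∀ t ∈ Icc T (T + d3), ∀ i, x t i ∈ Icc (0:ℝ) 1 := by
    intro t ht
    have h1 := hgron t ht
    rw [gronwallBound_ε0] at h1
    simp only [zero_mul] at h1
    have h2 : y t = 0 := le_antisymm h1 (norm_nonneg _)
    exact mem_cube_of_norm_sub_clampV (x t) h2
  obtain ⟨b, hbBad, hblt⟩ := exists_lt_of_csInf_lt hBadne (show T < T + d3 by linarith)
  have hbT : T ≤ b := csInf_le hBadbdd hbBad
  exact hbBad.2 (hcube2 b ⟨hbT, le_of_lt hblt⟩)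

lemma exp_decay_to_zero {D : ℝ} (hD : 0 < D) (A : ℝ) :
    Filter.Tendsto (fun t : ℝ => A * Real.exp (-(D * t))) Filter.atTop (nhds 0) := by
  have h1 : Filter.Tendsto (fun t : ℝ => D * t) Filter.atTop Filter.atTop :=
    Filter.Tendsto.const_mul_atTop hD Filter.tendsto_id
  have h2 : Filter.Tendsto (fun t : ℝ => Real.exp (-(D * t))) Filter.atTop (nhds 0) := by
    have := Real.tendsto_exp_neg_atTop_nhds_zero.comp h1
    exact this
  simpa using h2.const_mul A

/-- comparison lemma, upper version -/
lemma limsup_le_div_of_deriv_le {φ dφ : ℝ → ℝ}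
    (hφ : ∀ t : ℝ, 0 ≤ t → HasDerivAt φ (dφ t) t)
    {T C D : ℝ} (hT : 0 ≤ T) (hD : 0 < D)
    (hb : ∀ t : ℝ, T ≤ t → dφ t ≤ C - D * φ t)
    (hbdd : ∀ t : ℝ, 0 ≤ t → -1 ≤ φ t) :
    Filter.limsup φ Filter.atTop ≤ C / D := by
  set u : ℝ → ℝ := fun t => (φ t - C/D) * Real.exp (D * t) with hu
  have hud : ∀ t : ℝ, 0 ≤ t → HasDerivAt u
      (dφ t * Real.exp (D * t) + (φ t - C/D) * (Real.exp (D * t) * D)) t := by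
    intro t ht
    have h1 : HasDerivAt (fun s : ℝ => D * s) D t := by
      simpa using (hasDerivAt_id t).const_mul D
    have h2 : HasDerivAt (fun s : ℝ => Real.exp (D * s)) (Real.exp (D * t) * D) t := h1.exp
    exact ((hφ t ht).sub_const (C/D)).mul h2
  have hanti : AntitoneOn u (Ici T) := by
    apply antitoneOn_of_deriv_nonpos (convex_Ici T)
    · intro t ht
      exact ((hud t (le_trans hT ht)).continuousAt).continuousWithinAt
    · intro t ht
      rw [interior_Ici] at ht
      exact ((hud t (le_trans hT (le_of_lt ht))).differentiableAt).differentiableWithinAt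
    · intro t ht
      rw [interior_Ici] at ht
      have ht' : 0 ≤ t := le_trans hT (le_of_lt ht)
      rw [(hud t ht').deriv]
      have hbt := hb t (le_of_lt ht)
      have hexp : 0 < Real.exp (D * t) := Real.exp_pos _
      have hfield : D ≠ 0 := ne_of_gt hD
      have : dφ t * Real.exp (D * t) + (φ t - C/D) * (Real.exp (D * t) * D)
          = Real.exp (D * t) * (dφ t + D * φ t - C) := by
        field_simp
        ring
      rw [this]
      apply mul_nonpos_of_nonneg_of_nonpos (le_of_lt hexp)
      linarith
  have hub : ∀ t : ℝ, T ≤ t → φ t ≤ C/D + u T * Real.exp (-(D * t)) := by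
    intro t ht
    have h1 : u t ≤ u T := hanti self_mem_Ici ht ht
    have hexp : 0 < Real.exp (D * t) := Real.exp_pos _
    have h2 : φ t - C/D = u t * Real.exp (-(D * t)) := by
      rw [hu]
      simp only
      rw [mul_assoc, ← Real.exp_add]
      simp
    have h3 : u t * Real.exp (-(D * t)) ≤ u T * Real.exp (-(D * t)) :=
      mul_le_mul_of_nonneg_right h1 (le_of_lt (Real.exp_pos _))
    linarith
  have hcb : Filter.IsCoboundedUnder (· ≤ ·) Filter.atTop φ := by
    apply Filter.IsBoundedUnder.isCoboundedUnder_le (α := ℝ)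
    refine ⟨-1, ?_⟩
    rw [Filter.eventually_map]
    filter_upwards [Filter.eventually_ge_atTop (0:ℝ)] with t ht
    exact hbdd t ht
  have key : ∀ ε : ℝ, 0 < ε → Filter.limsup φ Filter.atTop ≤ C/D + ε := by
    intro ε hε
    apply Filter.limsup_le_of_le hcb
    have hev := (exp_decay_to_zero hD (u T)).eventually (eventually_le_nhds hε)
    filter_upwards [hev, Filter.eventually_ge_atTop T] with t h1 h2
    calc φ t ≤ C/D + u T * Real.exp (-(D * t)) := hub t h2
    _ ≤ C/D + ε := by linarith
  by_contra hcon
  push_neg at hcon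
  have := key ((Filter.limsup φ Filter.atTop - C/D)/2) (by linarith)
  linarith

/-- comparison lemma, lower version -/
lemma div_le_liminf_of_deriv_ge {φ dφ : ℝ → ℝ}
    (hφ : ∀ t : ℝ, 0 ≤ t → HasDerivAt φ (dφ t) t)
    {T C D : ℝ} (hT : 0 ≤ T) (hD : 0 < D)
    (hb : ∀ t : ℝ, T ≤ t → C - D * φ t ≤ dφ t)
    (hbdd : ∀ t : ℝ, 0 ≤ t → φ t ≤ 2) :
    C / D ≤ Filter.liminf φ Filter.atTop := by
  set u : ℝ → ℝ := fun t => (φ t - C/D) * Real.exp (D * t) with hu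
  have hud : ∀ t : ℝ, 0 ≤ t → HasDerivAt u
      (dφ t * Real.exp (D * t) + (φ t - C/D) * (Real.exp (D * t) * D)) t := by
    intro t ht
    have h1 : HasDerivAt (fun s : ℝ => D * s) D t := by
      simpa using (hasDerivAt_id t).const_mul D
    have h2 : HasDerivAt (fun s : ℝ => Real.exp (D * s)) (Real.exp (D * t) * D) t := h1.exp
    exact ((hφ t ht).sub_const (C/D)).mul h2
  have hmono : MonotoneOn u (Ici T) := by
    apply monotoneOn_of_deriv_nonneg (convex_Ici T)
    · intro t ht
      exact ((hud t (le_trans hT ht)).continuousAt).continuousWithinAt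
    · intro t ht
      rw [interior_Ici] at ht
      exact ((hud t (le_trans hT (le_of_lt ht))).differentiableAt).differentiableWithinAt
    · intro t ht
      rw [interior_Ici] at ht
      have ht' : 0 ≤ t := le_trans hT (le_of_lt ht)
      rw [(hud t ht').deriv]
      have hbt := hb t (le_of_lt ht)
      have hexp : 0 < Real.exp (D * t) := Real.exp_pos _
      have hfield : D ≠ 0 := ne_of_gt hD
      have : dφ t * Real.exp (D * t) + (φ t - C/D) * (Real.exp (D * t) * D)
          = Real.exp (D * t) * (dφ t + D * φ t - C) := by
        field_simp
        ring
      rw [this]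
      apply mul_nonneg (le_of_lt hexp)
      linarith
  have hub : ∀ t : ℝ, T ≤ t → C/D + u T * Real.exp (-(D * t)) ≤ φ t := by
    intro t ht
    have h1 : u T ≤ u t := hmono self_mem_Ici ht ht
    have h2 : φ t - C/D = u t * Real.exp (-(D * t)) := by
      rw [hu]
      simp only
      rw [mul_assoc, ← Real.exp_add]
      simp
    have h3 : u T * Real.exp (-(D * t)) ≤ u t * Real.exp (-(D * t)) :=
      mul_le_mul_of_nonneg_right h1 (le_of_lt (Real.exp_pos _))
    linarith
  have hcb : Filter.IsCoboundedUnder (· ≥ ·) Filter.atTop φ := by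
    apply Filter.IsBoundedUnder.isCoboundedUnder_ge (α := ℝ)
    refine ⟨2, ?_⟩
    rw [Filter.eventually_map]
    filter_upwards [Filter.eventually_ge_atTop (0:ℝ)] with t ht
    exact hbdd t ht
  have key : ∀ ε : ℝ, 0 < ε → C/D - ε ≤ Filter.liminf φ Filter.atTop := by
    intro ε hε
    apply Filter.le_liminf_of_le hcb
    have hev := (exp_decay_to_zero hD (-(u T))).eventually (eventually_le_nhds hε)
    filter_upwards [hev, Filter.eventually_ge_atTop T] with t h1 h2
    have h3 := hub t h2
    have h4 : -(u T) * Real.exp (-(D * t)) ≤ ε := h1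
    nlinarith [Real.exp_pos (-(D * t))]
  by_contra hcon
  push_neg at hcon
  have := key ((C/D - Filter.liminf φ Filter.atTop)/2) (by linarith)
  linarith

noncomputable def solU {n : ℕ} (x : ℝ → Fin n → ℝ) (j : ℕ) : ℝ :=
  Filter.limsup (fun t => extVec (x t) j) Filter.atTop

noncomputable def solL {n : ℕ} (x : ℝ → Fin n → ℝ) (j : ℕ) : ℝ :=
  Filter.liminf (fun t => extVec (x t) j) Filter.atTop

section Sol

variable {n : ℕ} {lam : ℕ → ℝ} {g : ℝ → ℝ} {k : ℝ} {x : ℝ → Fin n → ℝ}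

lemma hXmem (hcube : ∀ t, 0 ≤ t → ∀ i, x t i ∈ Icc (0:ℝ) 1) :
    ∀ (j : ℕ) (t : ℝ), 0 ≤ t → extVec (x t) j ∈ Icc (0:ℝ) 1 := by
  intro j t ht
  by_cases h : j < n
  · rw [extVec_lt _ h]; exact hcube t ht _
  · rw [extVec_ge _ (by omega)]; exact ⟨le_rfl, zero_le_one⟩

lemma hXbddU (hcube : ∀ t, 0 ≤ t → ∀ i, x t i ∈ Icc (0:ℝ) 1) (j : ℕ) :
    Filter.IsBoundedUnder (· ≤ ·) Filter.atTop (fun t => extVec (x t) j) := by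
  refine ⟨1, ?_⟩
  rw [Filter.eventually_map]
  filter_upwards [Filter.eventually_ge_atTop (0:ℝ)] with t ht
  exact (hXmem hcube j t ht).2

lemma hXbddL (hcube : ∀ t, 0 ≤ t → ∀ i, x t i ∈ Icc (0:ℝ) 1) (j : ℕ) :
    Filter.IsBoundedUnder (· ≥ ·) Filter.atTop (fun t => extVec (x t) j) := by
  refine ⟨0, ?_⟩
  rw [Filter.eventually_map]
  filter_upwards [Filter.eventually_ge_atTop (0:ℝ)] with t ht
  exact (hXmem hcube j t ht).1

lemma solL_le_solU (hcube : ∀ t, 0 ≤ t → ∀ i, x t i ∈ Icc (0:ℝ) 1) (j : ℕ) :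
    solL x j ≤ solU x j :=
  Filter.liminf_le_limsup (hXbddU hcube j) (hXbddL hcube j)

lemma solU_le_one (hcube : ∀ t, 0 ≤ t → ∀ i, x t i ∈ Icc (0:ℝ) 1) (j : ℕ) :
    solU x j ≤ 1 := by
  apply Filter.limsup_le_of_le ((hXbddL hcube j).isCoboundedUnder_le)
  filter_upwards [Filter.eventually_ge_atTop (0:ℝ)] with t ht
  exact (hXmem hcube j t ht).2

lemma solL_nonneg (hcube : ∀ t, 0 ≤ t → ∀ i, x t i ∈ Icc (0:ℝ) 1) (j : ℕ) :
    0 ≤ solL x j := by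
  apply Filter.le_liminf_of_le ((hXbddU hcube j).isCoboundedUnder_ge)
  filter_upwards [Filter.eventually_ge_atTop (0:ℝ)] with t ht
  exact (hXmem hcube j t ht).1

lemma solU_nonneg (hcube : ∀ t, 0 ≤ t → ∀ i, x t i ∈ Icc (0:ℝ) 1) (j : ℕ) :
    0 ≤ solU x j := le_trans (solL_nonneg hcube j) (solL_le_solU hcube j)

lemma solL_le_one (hcube : ∀ t, 0 ≤ t → ∀ i, x t i ∈ Icc (0:ℝ) 1) (j : ℕ) :
    solL x j ≤ 1 := le_trans (solL_le_solU hcube j) (solU_le_one hcube j)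

lemma solU_n : solU (n := n) x n = 0 := by
  have : (fun t => extVec (x t) n) = fun _ => (0:ℝ) := by
    funext t; exact extVec_ge _ le_rfl
  rw [solU, this, Filter.limsup_const]

lemma solL_n : solL (n := n) x n = 0 := by
  have : (fun t => extVec (x t) n) = fun _ => (0:ℝ) := by
    funext t; exact extVec_ge _ le_rfl
  rw [solL, this, Filter.liminf_const]

lemma hXder (hx : ∀ t, 0 ≤ t → HasDerivAt x (rfmField n lam k g (x t)) t)
    {j : ℕ} (hj : j < n) :
    ∀ t, 0 ≤ t → HasDerivAt (fun t => extVec (x t) j)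
      (rfmField n lam k g (x t) ⟨j, hj⟩) t := by
  intro t ht
  have heq : (fun t => extVec (x t) j) = fun t => x t ⟨j, hj⟩ :=
    funext fun t => extVec_lt (x t) hj
  rw [heq]
  exact hasDerivAt_pi.mp (hx t ht) ⟨j, hj⟩

lemma hev_lt (hcube : ∀ t, 0 ≤ t → ∀ i, x t i ∈ Icc (0:ℝ) 1) (j : ℕ)
    {ε : ℝ} (hε : 0 < ε) :
    ∀ᶠ t in Filter.atTop, extVec (x t) j < solU x j + ε :=
  Filter.eventually_lt_of_limsup_lt
    (by rw [show Filter.limsup (fun t => extVec (x t) j) Filter.atTop = solU x j from rfl]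
        linarith) (hXbddU hcube j)

lemma hev_gt (hcube : ∀ t, 0 ≤ t → ∀ i, x t i ∈ Icc (0:ℝ) 1) (j : ℕ)
    {ε : ℝ} (hε : 0 < ε) :
    ∀ᶠ t in Filter.atTop, solL x j - ε < extVec (x t) j :=
  Filter.eventually_lt_of_lt_liminf
    (by rw [show Filter.liminf (fun t => extVec (x t) j) Filter.atTop = solL x j from rfl]
        linarith) (hXbddL hcube j)

end Sol

section Master

variable {n : ℕ} {lam : ℕ → ℝ} {g : ℝ → ℝ} {k : ℝ} {x : ℝ → Fin n → ℝ}
variable (hn : 2 ≤ n) (hlam : ∀ i, i ≤ n → 0 < lam i)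
variable (hx : ∀ t, 0 ≤ t → HasDerivAt x (rfmField n lam k g (x t)) t)
variable (hcube : ∀ t, 0 ≤ t → ∀ i, x t i ∈ Icc (0:ℝ) 1)

include hlam hx hcube

lemma master_upper {j : ℕ} (h1 : 1 ≤ j) (h2 : j < n) :
    lam (j+1) * solU x j * (1 - solU x (j+1)) ≤ lam j * solU x (j-1) * (1 - solU x j) := by
  have hlj : 0 < lam j := hlam j (by omega)
  have hlj1 : 0 < lam (j+1) := hlam (j+1) (by omega)
  set a := solU x (j-1) with ha
  set b := solU x (j+1) with hb
  set Uj := solU x j with hUj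
  have ha0 : 0 ≤ a := solU_nonneg hcube _
  have hb1 : b ≤ 1 := solU_le_one hcube _
  have hU0 : 0 ≤ Uj := solU_nonneg hcube _
  have hU1 : Uj ≤ 1 := solU_le_one hcube _
  have key : ∀ ε : ℝ, 0 < ε →
      Uj * (lam j * (a + ε) + lam (j+1) * max (1 - b - ε) 0) ≤ lam j * (a + ε) := by
    intro ε hε
    set C : ℝ := lam j * (a + ε) with hC
    set D : ℝ := lam j * (a + ε) + lam (j+1) * max (1 - b - ε) 0 with hD
    have hCpos : 0 < C := by
      rw [hC]; apply mul_pos hlj; linarith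
    have hDpos : 0 < D := by
      rw [hD]
      have : 0 ≤ lam (j+1) * max (1 - b - ε) 0 :=
        mul_nonneg (le_of_lt hlj1) (le_max_right _ _)
      linarith
    obtain ⟨T, hT⟩ := Filter.eventually_atTop.mp
      ((hev_lt hcube (j-1) hε).and ((hev_lt hcube (j+1) hε).and
        (Filter.eventually_ge_atTop (0:ℝ))))
    have hUb : Uj ≤ C / D := by
      apply limsup_le_div_of_deriv_le (hXder hx h2) (le_max_right T 0) hDpos
      · intro t ht
        obtain ⟨he1, he2, ht0⟩ := hT t (le_trans (le_max_left T 0) ht)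
        have hXj := hXmem hcube j t ht0
        have hXj1 := hXmem hcube (j+1) t ht0
        have hXjm := hXmem hcube (j-1) t ht0
        rw [rfmField_pos lam k g (x t) h1 h2]
        have hb1' : lam j * extVec (x t) (j-1) * (1 - extVec (x t) j)
            ≤ C * (1 - extVec (x t) j) := by
          apply mul_le_mul_of_nonneg_right _ (by linarith [hXj.2])
          rw [hC]
          apply mul_le_mul_of_nonneg_left (le_of_lt he1) (le_of_lt hlj)
        have hb2' : lam (j+1) * (max (1 - b - ε) 0) * extVec (x t) j
            ≤ lam (j+1) * extVec (x t) j * (1 - extVec (x t) (j+1)) := by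
          have hmax : max (1 - b - ε) 0 ≤ 1 - extVec (x t) (j+1) :=
            max_le (by linarith) (by linarith [hXj1.2])
          calc lam (j+1) * (max (1 - b - ε) 0) * extVec (x t) j
              ≤ lam (j+1) * (1 - extVec (x t) (j+1)) * extVec (x t) j := by
                apply mul_le_mul_of_nonneg_right _ hXj.1
                exact mul_le_mul_of_nonneg_left hmax (le_of_lt hlj1)
          _ = lam (j+1) * extVec (x t) j * (1 - extVec (x t) (j+1)) := by ring
        have hDx : D * extVec (x t) j
            = C * extVec (x t) j + lam (j+1) * (max (1 - b - ε) 0) * extVec (x t) j := by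
          rw [hD, hC]; ring
        nlinarith
      · intro t ht
        linarith [(hXmem hcube j t ht).1]
    rw [le_div_iff₀ hDpos] at hUb
    exact hUb
  have hcont : Filter.Tendsto
      (fun ε : ℝ => lam j * (a + ε)
        - Uj * (lam j * (a + ε) + lam (j+1) * max (1 - b - ε) 0))
      (nhdsWithin 0 (Ioi 0)) (nhds (lam j * (a + 0)
        - Uj * (lam j * (a + 0) + lam (j+1) * max (1 - b - 0) 0))) := by
    apply Filter.Tendsto.mono_left _ nhdsWithin_le_nhds
    apply Continuous.tendsto
    continuity
  have hge : 0 ≤ lam j * (a + 0) - Uj * (lam j * (a + 0) + lam (j+1) * max (1 - b - 0) 0) := by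
    apply ge_of_tendsto hcont
    filter_upwards [self_mem_nhdsWithin] with ε hε
    have := key ε hε
    linarith
  have hmax0 : max (1 - b - 0) 0 = 1 - b := by
    rw [sub_zero]; exact max_eq_left (by linarith)
  rw [hmax0] at hge
  nlinarith
end Master

section Master2

variable {n : ℕ} {lam : ℕ → ℝ} {g : ℝ → ℝ} {k : ℝ} {x : ℝ → Fin n → ℝ}
variable (hn : 2 ≤ n) (hlam : ∀ i, i ≤ n → 0 < lam i)
variable (hx : ∀ t, 0 ≤ t → HasDerivAt x (rfmField n lam k g (x t)) t)
variable (hcube : ∀ t, 0 ≤ t → ∀ i, x t i ∈ Icc (0:ℝ) 1)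

include hlam hx hcube

lemma master_lower {j : ℕ} (h1 : 1 ≤ j) (h2 : j < n) :
    lam j * solL x (j-1) * (1 - solL x j) ≤ lam (j+1) * solL x j * (1 - solL x (j+1)) := by
  have hlj : 0 < lam j := hlam j (by omega)
  have hlj1 : 0 < lam (j+1) := hlam (j+1) (by omega)
  set a := solL x (j-1) with ha
  set b := solL x (j+1) with hb
  set Lj := solL x j with hLj
  have ha0 : 0 ≤ a := solL_nonneg hcube _
  have hb0 : 0 ≤ b := solL_nonneg hcube _
  have hb1 : b ≤ 1 := solL_le_one hcube _
  have hL0 : 0 ≤ Lj := solL_nonneg hcube _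
  have hL1 : Lj ≤ 1 := solL_le_one hcube _
  have key : ∀ ε : ℝ, 0 < ε →
      lam j * max (a - ε) 0
        ≤ Lj * (lam j * max (a - ε) 0 + lam (j+1) * (1 - max (b - ε) 0)) := by
    intro ε hε
    set C : ℝ := lam j * max (a - ε) 0 with hC
    set D : ℝ := lam j * max (a - ε) 0 + lam (j+1) * (1 - max (b - ε) 0) with hD
    have hC0 : 0 ≤ C := mul_nonneg (le_of_lt hlj) (le_max_right _ _)
    have hDpos : 0 < D := by
      rw [hD]
      have h3 : max (b - ε) 0 < 1 := by
        apply max_lt (by linarith) one_pos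
      nlinarith
    obtain ⟨T, hT⟩ := Filter.eventually_atTop.mp
      ((hev_gt hcube (j-1) hε).and ((hev_gt hcube (j+1) hε).and
        (Filter.eventually_ge_atTop (0:ℝ))))
    have hLb : C / D ≤ Lj := by
      apply div_le_liminf_of_deriv_ge (hXder hx h2) (le_max_right T 0) hDpos
      · intro t ht
        obtain ⟨he1, he2, ht0⟩ := hT t (le_trans (le_max_left T 0) ht)
        have hXj := hXmem hcube j t ht0
        have hXj1 := hXmem hcube (j+1) t ht0
        have hXjm := hXmem hcube (j-1) t ht0
        rw [rfmField_pos lam k g (x t) h1 h2]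
        have hmax1 : max (a - ε) 0 ≤ extVec (x t) (j-1) :=
          max_le (le_of_lt he1) hXjm.1
        have hmax2 : extVec (x t) (j+1) ≥ max (b - ε) 0 :=
          max_le (le_of_lt he2) hXj1.1
        have hb1' : C * (1 - extVec (x t) j)
            ≤ lam j * extVec (x t) (j-1) * (1 - extVec (x t) j) := by
          apply mul_le_mul_of_nonneg_right _ (by linarith [hXj.2])
          rw [hC]
          exact mul_le_mul_of_nonneg_left hmax1 (le_of_lt hlj)
        have hb2' : lam (j+1) * extVec (x t) j * (1 - extVec (x t) (j+1))
            ≤ lam (j+1) * (1 - max (b - ε) 0) * extVec (x t) j := by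
          calc lam (j+1) * extVec (x t) j * (1 - extVec (x t) (j+1))
              = lam (j+1) * (1 - extVec (x t) (j+1)) * extVec (x t) j := by ring
          _ ≤ lam (j+1) * (1 - max (b - ε) 0) * extVec (x t) j := by
                apply mul_le_mul_of_nonneg_right _ hXj.1
                apply mul_le_mul_of_nonneg_left (by linarith) (le_of_lt hlj1)
        have hDx : D * extVec (x t) j = C * extVec (x t) j
            + lam (j+1) * (1 - max (b - ε) 0) * extVec (x t) j := by
          rw [hD, hC]; ring
        linarith
      · intro t ht
        linarith [(hXmem hcube j t ht).2]
    rw [div_le_iff₀ hDpos] at hLb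
    exact hLb
  have hcont : Filter.Tendsto
      (fun ε : ℝ => Lj * (lam j * max (a - ε) 0 + lam (j+1) * (1 - max (b - ε) 0))
        - lam j * max (a - ε) 0)
      (nhdsWithin 0 (Ioi 0)) (nhds (Lj * (lam j * max (a - 0) 0
        + lam (j+1) * (1 - max (b - 0) 0)) - lam j * max (a - 0) 0)) := by
    apply Filter.Tendsto.mono_left _ nhdsWithin_le_nhds
    apply Continuous.tendsto
    have cmax : ∀ c : ℝ, Continuous (fun ε : ℝ => max (c - ε) 0) :=
      fun c => (continuous_const.sub continuous_id).max continuous_const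
    exact (continuous_const.mul ((continuous_const.mul (cmax a)).add
      (continuous_const.mul (continuous_const.sub (cmax b))))).sub
      (continuous_const.mul (cmax a))
  have hge : 0 ≤ Lj * (lam j * max (a - 0) 0 + lam (j+1) * (1 - max (b - 0) 0))
      - lam j * max (a - 0) 0 := by
    apply ge_of_tendsto hcont
    filter_upwards [self_mem_nhdsWithin] with ε hε
    have := key ε hε
    linarith
  have hmaxa : max (a - 0) 0 = a := by rw [sub_zero]; exact max_eq_left ha0
  have hmaxb : max (b - 0) 0 = b := by rw [sub_zero]; exact max_eq_left hb0
  rw [hmaxa, hmaxb] at hge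
  nlinarith

end Master2

section Master3

variable {n : ℕ} {lam : ℕ → ℝ} {g : ℝ → ℝ} {k : ℝ} {x : ℝ → Fin n → ℝ}
variable (hn : 2 ≤ n) (hlam : ∀ i, i ≤ n → 0 < lam i) (hk : 0 < k)
variable (hgc : Continuous g) (hgpos : ∀ z : ℝ, 0 ≤ z → 0 < g z)
variable (hganti : AntitoneOn g (Ici 0))
variable (hx : ∀ t, 0 ≤ t → HasDerivAt x (rfmField n lam k g (x t)) t)
variable (hcube : ∀ t, 0 ≤ t → ∀ i, x t i ∈ Icc (0:ℝ) 1)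

include hn hlam hk hgc hgpos hganti hx hcube

lemma master_upper0 :
    lam 1 * solU x 0 * (1 - solU x 1)
      ≤ lam 0 * k * g (lam n * solL x (n-1)) * (1 - solU x 0) := by
  have hl0 : 0 < lam 0 := hlam 0 (by omega)
  have hl1 : 0 < lam 1 := hlam 1 (by omega)
  have hln : 0 < lam n := hlam n le_rfl
  set L := solL x (n-1) with hL
  set b := solU x 1 with hb
  set U0 := solU x 0 with hU0'
  have hL0 : 0 ≤ L := solL_nonneg hcube _
  have hb1 : b ≤ 1 := solU_le_one hcube _
  have hU0 : 0 ≤ U0 := solU_nonneg hcube _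
  have hU1 : U0 ≤ 1 := solU_le_one hcube _
  have key : ∀ ε : ℝ, 0 < ε →
      U0 * (lam 0 * k * g (lam n * max (L - ε) 0) + lam 1 * max (1 - b - ε) 0)
        ≤ lam 0 * k * g (lam n * max (L - ε) 0) := by
    intro ε hε
    set C : ℝ := lam 0 * k * g (lam n * max (L - ε) 0) with hC
    set D : ℝ := C + lam 1 * max (1 - b - ε) 0 with hD
    have hCpos : 0 < C := by
      rw [hC]
      apply mul_pos (mul_pos hl0 hk)
      exact hgpos _ (mul_nonneg (le_of_lt hln) (le_max_right _ _))
    have hDpos : 0 < D := by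
      rw [hD]
      have : 0 ≤ lam 1 * max (1 - b - ε) 0 :=
        mul_nonneg (le_of_lt hl1) (le_max_right _ _)
      linarith
    obtain ⟨T, hT⟩ := Filter.eventually_atTop.mp
      ((hev_gt hcube (n-1) hε).and ((hev_lt hcube 1 hε).and
        (Filter.eventually_ge_atTop (0:ℝ))))
    have hUb : U0 ≤ C / D := by
      apply limsup_le_div_of_deriv_le (hXder hx (show 0 < n by omega))
        (le_max_right T 0) hDpos
      · intro t ht
        obtain ⟨he1, he2, ht0⟩ := hT t (le_trans (le_max_left T 0) ht)
        have hX0 := hXmem hcube 0 t ht0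
        have hX1 := hXmem hcube 1 t ht0
        have hXn := hXmem hcube (n-1) t ht0
        have hfield : rfmField n lam k g (x t) ⟨0, by omega⟩
            = lam 0 * k * g (lam n * extVec (x t) (n - 1)) * (1 - extVec (x t) 0)
              - lam 1 * extVec (x t) 0 * (1 - extVec (x t) 1) :=
          rfmField_zero hn lam k g (x t)
        rw [show (⟨0, by omega⟩ : Fin n) = ⟨0, show 0 < n by omega⟩ from rfl] at hfield
        rw [hfield]
        have hgle : g (lam n * extVec (x t) (n-1)) ≤ g (lam n * max (L - ε) 0) := by
          apply hganti
          · exact mul_nonneg (le_of_lt hln) (le_max_right _ _)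
          · exact mul_nonneg (le_of_lt hln) hXn.1
          · apply mul_le_mul_of_nonneg_left _ (le_of_lt hln)
            exact max_le (le_of_lt he1) hXn.1
        have hb1' : lam 0 * k * g (lam n * extVec (x t) (n-1)) * (1 - extVec (x t) 0)
            ≤ C * (1 - extVec (x t) 0) := by
          apply mul_le_mul_of_nonneg_right _ (by linarith [hX0.2])
          rw [hC]
          exact mul_le_mul_of_nonneg_left hgle (le_of_lt (mul_pos hl0 hk))
        have hb2' : lam 1 * max (1 - b - ε) 0 * extVec (x t) 0
            ≤ lam 1 * extVec (x t) 0 * (1 - extVec (x t) 1) := by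
          have hmax : max (1 - b - ε) 0 ≤ 1 - extVec (x t) 1 :=
            max_le (by linarith) (by linarith [hX1.2])
          calc lam 1 * max (1 - b - ε) 0 * extVec (x t) 0
              ≤ lam 1 * (1 - extVec (x t) 1) * extVec (x t) 0 := by
                apply mul_le_mul_of_nonneg_right _ hX0.1
                exact mul_le_mul_of_nonneg_left hmax (le_of_lt hl1)
          _ = lam 1 * extVec (x t) 0 * (1 - extVec (x t) 1) := by ring
        have hDx : D * extVec (x t) 0 = C * extVec (x t) 0
            + lam 1 * max (1 - b - ε) 0 * extVec (x t) 0 := by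
          rw [hD]; ring
        linarith
      · intro t ht
        linarith [(hXmem hcube 0 t ht).1]
    rw [le_div_iff₀ hDpos] at hUb
    exact hUb
  have cmax : ∀ c : ℝ, Continuous (fun ε : ℝ => max (c - ε) 0) :=
    fun c => (continuous_const.sub continuous_id).max continuous_const
  have cg : Continuous (fun ε : ℝ => lam 0 * k * g (lam n * max (L - ε) 0)) :=
    continuous_const.mul (hgc.comp (continuous_const.mul (cmax L)))
  have hcont : Filter.Tendsto
      (fun ε : ℝ => lam 0 * k * g (lam n * max (L - ε) 0)
        - U0 * (lam 0 * k * g (lam n * max (L - ε) 0) + lam 1 * max (1 - b - ε) 0))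
      (nhdsWithin 0 (Ioi 0)) (nhds (lam 0 * k * g (lam n * max (L - 0) 0)
        - U0 * (lam 0 * k * g (lam n * max (L - 0) 0) + lam 1 * max (1 - b - 0) 0))) := by
    apply Filter.Tendsto.mono_left _ nhdsWithin_le_nhds
    apply Continuous.tendsto
    refine cg.sub (continuous_const.mul (cg.add (continuous_const.mul ?_)))
    exact (continuous_const.sub continuous_id).max continuous_const
  have hge : 0 ≤ lam 0 * k * g (lam n * max (L - 0) 0)
      - U0 * (lam 0 * k * g (lam n * max (L - 0) 0) + lam 1 * max (1 - b - 0) 0) := by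
    apply ge_of_tendsto hcont
    filter_upwards [self_mem_nhdsWithin] with ε hε
    have := key ε hε
    linarith
  have hmaxa : max (L - 0) 0 = L := by rw [sub_zero]; exact max_eq_left hL0
  have hmaxb : max (1 - b - 0) 0 = 1 - b := by rw [sub_zero]; exact max_eq_left (by linarith)
  rw [hmaxa, hmaxb] at hge
  nlinarith

lemma master_lower0 :
    lam 0 * k * g (lam n * solU x (n-1)) * (1 - solL x 0)
      ≤ lam 1 * solL x 0 * (1 - solL x 1) := by
  have hl0 : 0 < lam 0 := hlam 0 (by omega)
  have hl1 : 0 < lam 1 := hlam 1 (by omega)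
  have hln : 0 < lam n := hlam n le_rfl
  set U := solU x (n-1) with hU
  set b := solL x 1 with hb
  set L0 := solL x 0 with hL0'
  have hU0 : 0 ≤ U := solU_nonneg hcube _
  have hU1 : U ≤ 1 := solU_le_one hcube _
  have hb0 : 0 ≤ b := solL_nonneg hcube _
  have hb1 : b ≤ 1 := solL_le_one hcube _
  have hL0 : 0 ≤ L0 := solL_nonneg hcube _
  have hL1 : L0 ≤ 1 := solL_le_one hcube _
  have key : ∀ ε : ℝ, 0 < ε →
      lam 0 * k * g (lam n * min (U + ε) 1)
        ≤ L0 * (lam 0 * k * g (lam n * min (U + ε) 1)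
            + lam 1 * (1 - max (b - ε) 0)) := by
    intro ε hε
    set C : ℝ := lam 0 * k * g (lam n * min (U + ε) 1) with hC
    set D : ℝ := C + lam 1 * (1 - max (b - ε) 0) with hD
    have hCpos : 0 < C := by
      rw [hC]
      apply mul_pos (mul_pos hl0 hk)
      apply hgpos
      apply mul_nonneg (le_of_lt hln)
      exact le_min (by linarith) zero_le_one
    have hDpos : 0 < D := by
      rw [hD]
      have h3 : max (b - ε) 0 < 1 := max_lt (by linarith) one_pos
      nlinarith
    obtain ⟨T, hT⟩ := Filter.eventually_atTop.mp
      ((hev_lt hcube (n-1) hε).and ((hev_gt hcube 1 hε).and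
        (Filter.eventually_ge_atTop (0:ℝ))))
    have hLb : C / D ≤ L0 := by
      apply div_le_liminf_of_deriv_ge (hXder hx (show 0 < n by omega))
        (le_max_right T 0) hDpos
      · intro t ht
        obtain ⟨he1, he2, ht0⟩ := hT t (le_trans (le_max_left T 0) ht)
        have hX0 := hXmem hcube 0 t ht0
        have hX1 := hXmem hcube 1 t ht0
        have hXn := hXmem hcube (n-1) t ht0
        have hfield : rfmField n lam k g (x t) ⟨0, by omega⟩
            = lam 0 * k * g (lam n * extVec (x t) (n - 1)) * (1 - extVec (x t) 0)
              - lam 1 * extVec (x t) 0 * (1 - extVec (x t) 1) :=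
          rfmField_zero hn lam k g (x t)
        rw [show (⟨0, by omega⟩ : Fin n) = ⟨0, show 0 < n by omega⟩ from rfl] at hfield
        rw [hfield]
        have hgle : g (lam n * min (U + ε) 1) ≤ g (lam n * extVec (x t) (n-1)) := by
          apply hganti
          · exact mul_nonneg (le_of_lt hln) hXn.1
          · exact mul_nonneg (le_of_lt hln) (le_min (by linarith) zero_le_one)
          · apply mul_le_mul_of_nonneg_left _ (le_of_lt hln)
            exact le_min (le_of_lt he1) hXn.2
        have hb1' : C * (1 - extVec (x t) 0)
            ≤ lam 0 * k * g (lam n * extVec (x t) (n-1)) * (1 - extVec (x t) 0) := by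
          apply mul_le_mul_of_nonneg_right _ (by linarith [hX0.2])
          rw [hC]
          exact mul_le_mul_of_nonneg_left hgle (le_of_lt (mul_pos hl0 hk))
        have hb2' : lam 1 * extVec (x t) 0 * (1 - extVec (x t) 1)
            ≤ lam 1 * (1 - max (b - ε) 0) * extVec (x t) 0 := by
          have hmax : extVec (x t) 1 ≥ max (b - ε) 0 := max_le (le_of_lt he2) hX1.1
          calc lam 1 * extVec (x t) 0 * (1 - extVec (x t) 1)
              = lam 1 * (1 - extVec (x t) 1) * extVec (x t) 0 := by ring
          _ ≤ lam 1 * (1 - max (b - ε) 0) * extVec (x t) 0 := by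
                apply mul_le_mul_of_nonneg_right _ hX0.1
                apply mul_le_mul_of_nonneg_left (by linarith) (le_of_lt hl1)
        have hDx : D * extVec (x t) 0 = C * extVec (x t) 0
            + lam 1 * (1 - max (b - ε) 0) * extVec (x t) 0 := by
          rw [hD]; ring
        linarith
      · intro t ht
        linarith [(hXmem hcube 0 t ht).2]
    rw [div_le_iff₀ hDpos] at hLb
    exact hLb
  have cmin : Continuous (fun ε : ℝ => min (U + ε) 1) :=
    (continuous_const.add continuous_id).min continuous_const
  have cg : Continuous (fun ε : ℝ => lam 0 * k * g (lam n * min (U + ε) 1)) :=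
    continuous_const.mul (hgc.comp (continuous_const.mul cmin))
  have hcont : Filter.Tendsto
      (fun ε : ℝ => L0 * (lam 0 * k * g (lam n * min (U + ε) 1)
          + lam 1 * (1 - max (b - ε) 0)) - lam 0 * k * g (lam n * min (U + ε) 1))
      (nhdsWithin 0 (Ioi 0)) (nhds (L0 * (lam 0 * k * g (lam n * min (U + 0) 1)
          + lam 1 * (1 - max (b - 0) 0)) - lam 0 * k * g (lam n * min (U + 0) 1))) := by
    apply Filter.Tendsto.mono_left _ nhdsWithin_le_nhds
    apply Continuous.tendsto
    refine (continuous_const.mul (cg.add (continuous_const.mul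
      (continuous_const.sub ?_)))).sub cg
    exact (continuous_const.sub continuous_id).max continuous_const
  have hge : 0 ≤ L0 * (lam 0 * k * g (lam n * min (U + 0) 1)
      + lam 1 * (1 - max (b - 0) 0)) - lam 0 * k * g (lam n * min (U + 0) 1) := by
    apply ge_of_tendsto hcont
    filter_upwards [self_mem_nhdsWithin] with ε hε
    have := key ε hε
    linarith
  have hmina : min (U + 0) 1 = U := by rw [add_zero]; exact min_eq_left hU1
  have hmaxb : max (b - 0) 0 = b := by rw [sub_zero]; exact max_eq_left hb0
  rw [hmina, hmaxb] at hge
  nlinarith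

end Master3

noncomputable def rseq (n : ℕ) (lam : ℕ → ℝ) : ℕ → ℝ
  | 0 => 0
  | (m+1) => lam (n-m-1) / (lam (n-m-1) + lam (n-m) * (1 - rseq n lam m))

lemma rseq_mem {n : ℕ} {lam : ℕ → ℝ} (hlam : ∀ i, i ≤ n → 0 < lam i) :
    ∀ m, 0 ≤ rseq n lam m ∧ rseq n lam m < 1 := by
  intro m
  induction m with
  | zero => exact ⟨le_rfl, one_pos⟩
  | succ m ih =>
    have ha : 0 < lam (n-m-1) := hlam _ (by omega)
    have hc : 0 < lam (n-m) * (1 - rseq n lam m) :=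
      mul_pos (hlam _ (by omega)) (by linarith [ih.2])
    constructor
    · exact div_nonneg (le_of_lt ha) (by linarith)
    · rw [rseq, div_lt_one (by linarith)]
      linarith

section Bounds

variable {n : ℕ} {lam : ℕ → ℝ} {g : ℝ → ℝ} {k : ℝ} {x : ℝ → Fin n → ℝ}
variable (hn : 2 ≤ n) (hlam : ∀ i, i ≤ n → 0 < lam i) (hk : 0 < k)
variable (hgc : Continuous g) (hgpos : ∀ z : ℝ, 0 ≤ z → 0 < g z)
variable (hganti : AntitoneOn g (Ici 0))
variable (hx : ∀ t, 0 ≤ t → HasDerivAt x (rfmField n lam k g (x t)) t)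
variable (hcube : ∀ t, 0 ≤ t → ∀ i, x t i ∈ Icc (0:ℝ) 1)

include hn hlam hx hcube

lemma solU_le_rseq : ∀ m, m ≤ n-1 → solU x (n-m) ≤ rseq n lam m := by
  intro m
  induction m with
  | zero =>
    intro _
    rw [Nat.sub_zero, show rseq n lam 0 = 0 from rfl]
    exact le_of_eq solU_n
  | succ m ih =>
    intro hm
    have ihm := ih (by omega)
    set j := n - m - 1 with hj
    have hj1 : 1 ≤ j := by omega
    have hj2 : j < n := by omega
    have hjn : j + 1 = n - m := by omega
    have hlj : 0 < lam j := hlam _ (by omega)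
    have hljn : 0 < lam (n-m) := hlam _ (by omega)
    have hmas := master_upper hlam hx hcube hj1 hj2
    rw [hjn] at hmas
    have hr := rseq_mem hlam m
    have hU := solU_nonneg (x := x) hcube j
    have hU1 := solU_le_one (x := x) hcube j
    have hUm1 := solU_le_one (x := x) hcube (j-1)
    have hUm0 := solU_nonneg (x := x) hcube (j-1)
    have step1 : lam (n-m) * solU x j * (1 - rseq n lam m)
        ≤ lam (n-m) * solU x j * (1 - solU x (n-m)) := by
      apply mul_le_mul_of_nonneg_left _ (mul_nonneg (le_of_lt hljn) hU)
      linarith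
    have step2 : lam j * solU x (j-1) * (1 - solU x j) ≤ lam j * (1 - solU x j) := by
      have : lam j * solU x (j-1) ≤ lam j * 1 :=
        mul_le_mul_of_nonneg_left hUm1 (le_of_lt hlj)
      apply mul_le_mul_of_nonneg_right _ (by linarith)
      linarith
    have hcomb : lam (n-m) * solU x j * (1 - rseq n lam m) ≤ lam j * (1 - solU x j) := by
      calc lam (n-m) * solU x j * (1 - rseq n lam m)
          ≤ lam (n-m) * solU x j * (1 - solU x (n-m)) := step1
      _ = lam (n-m) * solU x (n-m-1) * (1 - solU x (n-m)) := by rw [← hj]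
      _ ≤ lam j * solU x (j-1) * (1 - solU x j) := by
          rw [hj]
          exact hmas
      _ ≤ lam j * (1 - solU x j) := step2
    show solU x (n - (m+1)) ≤ rseq n lam (m+1)
    have hnm1 : n - (m+1) = j := by omega
    rw [hnm1, rseq, ← hj, ← hjn, hjn]
    rw [le_div_iff₀ (by nlinarith [hr.2])]
    nlinarith
end Bounds

noncomputable def Cseq (n : ℕ) (lam : ℕ → ℝ) (g : ℝ → ℝ) : ℕ → ℝ
  | 0 => lam 0 * g 0 / (lam 1 * (1 - rseq n lam (n-1)))
  | (m+1) => lam (m+1) * Cseq n lam g m / (lam (m+2) * (1 - rseq n lam (n-(m+2))))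

lemma Cseq_pos {n : ℕ} {lam : ℕ → ℝ} {g : ℝ → ℝ} (hn : 2 ≤ n)
    (hlam : ∀ i, i ≤ n → 0 < lam i) (hg0 : 0 < g 0) :
    ∀ m, m ≤ n-1 → 0 < Cseq n lam g m := by
  intro m
  induction m with
  | zero =>
    intro _
    apply div_pos (mul_pos (hlam 0 (by omega)) hg0)
    exact mul_pos (hlam 1 (by omega)) (by linarith [(rseq_mem hlam (n-1)).2])
  | succ m ih =>
    intro hm
    apply div_pos (mul_pos (hlam (m+1) (by omega)) (ih (by omega)))
    exact mul_pos (hlam (m+2) (by omega)) (by linarith [(rseq_mem hlam (n-(m+2))).2])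

section Bounds2

variable {n : ℕ} {lam : ℕ → ℝ} {g : ℝ → ℝ} {k : ℝ} {x : ℝ → Fin n → ℝ}
variable (hn : 2 ≤ n) (hlam : ∀ i, i ≤ n → 0 < lam i) (hk : 0 < k)
variable (hgc : Continuous g) (hgpos : ∀ z : ℝ, 0 ≤ z → 0 < g z)
variable (hganti : AntitoneOn g (Ici 0))
variable (hx : ∀ t, 0 ≤ t → HasDerivAt x (rfmField n lam k g (x t)) t)
variable (hcube : ∀ t, 0 ≤ t → ∀ i, x t i ∈ Icc (0:ℝ) 1)

include hn hlam hk hgc hgpos hganti hx hcube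

lemma solU_le_Cseq : ∀ j, j ≤ n-1 → solU x j ≤ Cseq n lam g j * k := by
  intro j
  induction j with
  | zero =>
    intro _
    have hl0 : 0 < lam 0 := hlam 0 (by omega)
    have hl1 : 0 < lam 1 := hlam 1 (by omega)
    have hln : 0 < lam n := hlam n le_rfl
    have hmas := master_upper0 hn hlam hk hgc hgpos hganti hx hcube
    have hU1r : solU x 1 ≤ rseq n lam (n-1) := by
      have := solU_le_rseq hn hlam hx hcube (n-1) le_rfl
      rwa [show n - (n-1) = 1 by omega] at this
    have hr := rseq_mem hlam (n-1)
    have hU0 := solU_nonneg (x := x) hcube 0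
    have hU01 := solU_le_one (x := x) hcube 0
    have hgle : g (lam n * solL x (n-1)) ≤ g 0 := by
      apply hganti self_mem_Ici
      · exact mul_nonneg (le_of_lt hln) (solL_nonneg hcube _)
      · exact mul_nonneg (le_of_lt hln) (solL_nonneg hcube _)
    have hgnn : 0 ≤ g (lam n * solL x (n-1)) :=
      le_of_lt (hgpos _ (mul_nonneg (le_of_lt hln) (solL_nonneg hcube _)))
    have hstep : lam 1 * solU x 0 * (1 - rseq n lam (n-1)) ≤ lam 0 * k * g 0 := by
      calc lam 1 * solU x 0 * (1 - rseq n lam (n-1))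
          ≤ lam 1 * solU x 0 * (1 - solU x 1) := by
            apply mul_le_mul_of_nonneg_left _ (mul_nonneg (le_of_lt hl1) hU0)
            linarith
      _ ≤ lam 0 * k * g (lam n * solL x (n-1)) * (1 - solU x 0) := hmas
      _ ≤ lam 0 * k * g (lam n * solL x (n-1)) := by
            nlinarith [mul_nonneg (mul_nonneg (mul_nonneg hl0.le hk.le) hgnn) hU0]
      _ ≤ lam 0 * k * g 0 := by
            apply mul_le_mul_of_nonneg_left hgle (le_of_lt (mul_pos hl0 hk))
    rw [Cseq, div_mul_eq_mul_div, le_div_iff₀ (by nlinarith [hr.2])]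
    nlinarith
  | succ j ih =>
    intro hj
    have ihj := ih (by omega)
    have hlj1 : 0 < lam (j+1) := hlam _ (by omega)
    have hlj2 : 0 < lam (j+2) := hlam _ (by omega)
    have hmas := master_upper hlam hx hcube (show 1 ≤ j+1 by omega) (show j+1 < n by omega)
    have hUr : solU x (j+2) ≤ rseq n lam (n-(j+2)) := by
      have h2n : j + 2 ≤ n := by omega
      have := solU_le_rseq hn hlam hx hcube (n-(j+2)) (by omega)
      rwa [show n - (n-(j+2)) = j + 2 by omega] at this
    have hr := rseq_mem hlam (n-(j+2))
    have hU := solU_nonneg (x := x) hcube (j+1)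
    have hU1 := solU_le_one (x := x) hcube (j+1)
    have hUj := solU_nonneg (x := x) hcube j
    have hUj1 := solU_le_one (x := x) hcube j
    have hstep : lam (j+2) * solU x (j+1) * (1 - rseq n lam (n-(j+2)))
        ≤ lam (j+1) * (Cseq n lam g j * k) := by
      calc lam (j+2) * solU x (j+1) * (1 - rseq n lam (n-(j+2)))
          ≤ lam (j+2) * solU x (j+1) * (1 - solU x (j+2)) := by
            apply mul_le_mul_of_nonneg_left _ (mul_nonneg (le_of_lt hlj2) hU)
            linarith
      _ = lam (j+1+1) * solU x (j+1) * (1 - solU x (j+1+1)) := by norm_num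
      _ ≤ lam (j+1) * solU x (j+1-1) * (1 - solU x (j+1)) := hmas
      _ = lam (j+1) * solU x j * (1 - solU x (j+1)) := by norm_num
      _ ≤ lam (j+1) * solU x j := by
            nlinarith [mul_nonneg (mul_nonneg hlj1.le hUj) hU]
      _ ≤ lam (j+1) * (Cseq n lam g j * k) :=
            mul_le_mul_of_nonneg_left ihj (le_of_lt hlj1)
    rw [Cseq, div_mul_eq_mul_div, le_div_iff₀ (by nlinarith [hr.2])]
    nlinarith

end Bounds2

noncomputable def Qseq (lam : ℕ → ℝ) (A Γ : ℝ) : ℕ → ℝ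
  | 0 => A + Γ
  | (m+1) => lam (m+1) * Qseq lam A Γ m / lam (m+2) + A

section Contraction

variable {n : ℕ} {lam : ℕ → ℝ} {g : ℝ → ℝ} {k : ℝ} {x : ℝ → Fin n → ℝ}
variable (hn : 2 ≤ n) (hlam : ∀ i, i ≤ n → 0 < lam i) (hk : 0 < k)
variable (hgc : Continuous g) (hgpos : ∀ z : ℝ, 0 ≤ z → 0 < g z)
variable (hganti : AntitoneOn g (Ici 0))
variable (hx : ∀ t, 0 ≤ t → HasDerivAt x (rfmField n lam k g (x t)) t)
variable (hcube : ∀ t, 0 ≤ t → ∀ i, x t i ∈ Icc (0:ℝ) 1)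

include hn hlam hk hgc hgpos hganti hx hcube

lemma solU_eq_solL_of_small (Chat KG Qhat : ℝ) (hChat0 : 0 ≤ Chat)
    (hCb : ∀ j, solU x j ≤ Chat * k) (hKG0 : 0 ≤ KG)
    (hKG : ∀ a b : ℝ, 0 ≤ a → a ≤ b → b ≤ lam n → g a - g b ≤ KG * (b - a))
    (hQ : ∀ j, j < n → Qseq lam (2*Chat) (lam 0 * lam n * KG / lam 1) j ≤ Qhat)
    (hsmall : Qhat * k < 1) :
    ∀ j, j < n → solU x j = solL x j := by
  have hl0 : 0 < lam 0 := hlam 0 (by omega)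
  have hl1 : 0 < lam 1 := hlam 1 (by omega)
  have hln : 0 < lam n := hlam n le_rfl
  set A : ℝ := 2*Chat with hA
  set Γ : ℝ := lam 0 * lam n * KG / lam 1 with hΓ
  set Dd : ℕ → ℝ := fun j => solU x j - solL x j with hDd
  have hD0 : ∀ j, 0 ≤ Dd j := fun j => by
    simp only [hDd, sub_nonneg]
    exact solL_le_solU hcube j
  have hne : (Finset.range n).Nonempty := Finset.nonempty_range_iff.mpr (by omega)
  set M : ℝ := Finset.sup' (Finset.range n) hne Dd with hM
  have hM0 : 0 ≤ M := le_trans (hD0 0) (Finset.le_sup' Dd (Finset.mem_range.mpr (by omega)))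
  have hDM : ∀ j, j ≤ n → Dd j ≤ M := by
    intro j hj
    rcases eq_or_lt_of_le hj with rfl | hlt
    · have hDn : Dd j = 0 := by
        simp only [hDd]
        rw [solU_n, solL_n]
        ring
      rw [hDn]; exact hM0
    · exact Finset.le_sup' Dd (Finset.mem_range.mpr hlt)
  have hLb : ∀ j, solL x j ≤ Chat * k := fun j =>
    le_trans (solL_le_solU hcube j) (hCb j)
  have hLnn : ∀ j, 0 ≤ solL x j := fun j => solL_nonneg hcube j
  have hUnn : ∀ j, 0 ≤ solU x j := fun j => solU_nonneg hcube j
  have hU1 : ∀ j, solU x j ≤ 1 := fun j => solU_le_one hcube j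
  have key0 : Dd 0 ≤ (A + Γ) * k * M := by
    have h1 := master_upper0 hn hlam hk hgc hgpos hganti hx hcube
    have h2 := master_lower0 hn hlam hk hgc hgpos hganti hx hcube
    set gL := g (lam n * solL x (n-1)) with hgL
    set gU := g (lam n * solU x (n-1)) with hgU
    have hargL : 0 ≤ lam n * solL x (n-1) := mul_nonneg hln.le (hLnn _)
    have hargU : 0 ≤ lam n * solU x (n-1) := mul_nonneg hln.le (hUnn _)
    have hgUL : gU ≤ gL := hganti hargL hargU
      (mul_le_mul_of_nonneg_left (solL_le_solU hcube _) hln.le)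
    have hgLU : gL - gU ≤ KG * (lam n * (Dd (n-1))) := by
      have hh := hKG (lam n * solL x (n-1)) (lam n * solU x (n-1)) hargL
        (mul_le_mul_of_nonneg_left (solL_le_solU hcube _) hln.le)
        (by nlinarith [hU1 (n-1)])
      calc gL - gU ≤ KG * (lam n * solU x (n-1) - lam n * solL x (n-1)) := hh
      _ = KG * (lam n * (Dd (n-1))) := by simp only [hDd]; ring
    have hgUnn : 0 ≤ gU := (hgpos _ hargU).le
    have hsub : lam 1 * ((solU x 0 - solL x 0) - (solU x 0 * solU x 1 - solL x 0 * solL x 1))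
        ≤ lam 0 * k * (gL * (1 - solU x 0) - gU * (1 - solL x 0)) := by
      linarith [h1, h2]
    have hRHS : lam 0 * k * (gL * (1 - solU x 0) - gU * (1 - solL x 0))
        ≤ lam 0 * k * (KG * (lam n * Dd (n-1))) := by
      apply mul_le_mul_of_nonneg_left _ (mul_nonneg hl0.le hk.le)
      have e2 : (gL - gU) * (1 - solU x 0) ≤ gL - gU := by
        nlinarith [hU1 0, hUnn 0]
      have e3 : 0 ≤ gU * (Dd 0) := mul_nonneg hgUnn (hD0 0)
      have e1 : gL * (1 - solU x 0) - gU * (1 - solL x 0)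
          = (gL - gU) * (1 - solU x 0) - gU * (Dd 0) := by
        simp only [hDd]; ring
      rw [e1]
      linarith
    have hprod : solU x 0 * solU x 1 - solL x 0 * solL x 1
        ≤ Chat * k * (Dd 1) + Chat * k * (Dd 0) := by
      have e : solU x 0 * solU x 1 - solL x 0 * solL x 1
          = solU x 0 * (Dd 1) + solL x 1 * (Dd 0) := by
        simp only [hDd]; ring
      rw [e]
      have b1 : solU x 0 * Dd 1 ≤ Chat * k * Dd 1 :=
        mul_le_mul_of_nonneg_right (hCb 0) (hD0 1)
      have b2 : solL x 1 * Dd 0 ≤ Chat * k * Dd 0 :=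
        mul_le_mul_of_nonneg_right (hLb 1) (hD0 0)
      linarith
    have hDn1M : Dd (n-1) ≤ M := hDM (n-1) (by omega)
    have hD1M : Dd 1 ≤ M := hDM 1 (by omega)
    have hD0M : Dd 0 ≤ M := hDM 0 (by omega)
    have s1 : Chat * k * (Dd 1) + Chat * k * (Dd 0) ≤ A * k * M := by
      have b1 : Chat * k * Dd 1 ≤ Chat * k * M :=
        mul_le_mul_of_nonneg_left hD1M (mul_nonneg hChat0 hk.le)
      have b2 : Chat * k * Dd 0 ≤ Chat * k * M :=
        mul_le_mul_of_nonneg_left hD0M (mul_nonneg hChat0 hk.le)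
      rw [hA]; linarith
    have s2 : lam 0 * k * (KG * (lam n * Dd (n-1))) ≤ Γ * lam 1 * k * M := by
      have hΓl : Γ * lam 1 = lam 0 * lam n * KG := by
        rw [hΓ]; field_simp
      rw [hΓl]
      have : lam 0 * k * (KG * (lam n * Dd (n-1))) = (lam 0 * lam n * KG * k) * Dd (n-1) := by
        ring
      rw [this]
      have hcoef : 0 ≤ lam 0 * lam n * KG * k := by positivity
      calc (lam 0 * lam n * KG * k) * Dd (n-1) ≤ (lam 0 * lam n * KG * k) * M :=
        mul_le_mul_of_nonneg_left hDn1M hcoef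
      _ = lam 0 * lam n * KG * k * M := by ring
    have hDd0 : Dd 0 = solU x 0 - solL x 0 := rfl
    have hchain : lam 1 * Dd 0 ≤ lam 1 * (A * k * M) + Γ * lam 1 * k * M := by
      have t1 : lam 1 * (Dd 0 - (solU x 0 * solU x 1 - solL x 0 * solL x 1))
          ≤ lam 0 * k * (KG * (lam n * Dd (n-1))) := by
        rw [hDd0]
        exact le_trans hsub hRHS
      have t2 : lam 1 * (solU x 0 * solU x 1 - solL x 0 * solL x 1)
          ≤ lam 1 * (A * k * M) :=
        mul_le_mul_of_nonneg_left (le_trans hprod s1) hl1.le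
      linarith [t1, t2, s2]
    have hfin : lam 1 * Dd 0 ≤ lam 1 * ((A + Γ) * k * M) := by
      calc lam 1 * Dd 0 ≤ lam 1 * (A * k * M) + Γ * lam 1 * k * M := hchain
      _ = lam 1 * ((A + Γ) * k * M) := by ring
    exact le_of_mul_le_mul_left hfin hl1
  have keyj : ∀ j, 1 ≤ j → j < n →
      lam (j+1) * Dd j ≤ lam j * Dd (j-1) + lam (j+1) * (A * k * M) := by
    intro j hj1 hj2
    have hlj : 0 < lam j := hlam _ (by omega)
    have hlj1 : 0 < lam (j+1) := hlam _ (by omega)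
    have h1 := master_upper hlam hx hcube hj1 hj2
    have h2 := master_lower hlam hx hcube hj1 hj2
    have hP1 : solU x j * solU x (j+1) - solL x j * solL x (j+1)
        ≤ A * k * M := by
      have e : solU x j * solU x (j+1) - solL x j * solL x (j+1)
          = solU x j * (Dd (j+1)) + solL x (j+1) * (Dd j) := by
        simp only [hDd]; ring
      rw [e]
      have hDj1M : Dd (j+1) ≤ M := hDM (j+1) (by omega)
      have hDjM : Dd j ≤ M := hDM j (by omega)
      have b1 : solU x j * Dd (j+1) ≤ Chat * k * M := by
        calc solU x j * Dd (j+1) ≤ (Chat * k) * Dd (j+1) :=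
          mul_le_mul_of_nonneg_right (hCb j) (hD0 (j+1))
        _ ≤ (Chat * k) * M := mul_le_mul_of_nonneg_left hDj1M (mul_nonneg hChat0 hk.le)
      have b2 : solL x (j+1) * Dd j ≤ Chat * k * M := by
        calc solL x (j+1) * Dd j ≤ (Chat * k) * Dd j :=
          mul_le_mul_of_nonneg_right (hLb (j+1)) (hD0 j)
        _ ≤ (Chat * k) * M := mul_le_mul_of_nonneg_left hDjM (mul_nonneg hChat0 hk.le)
      rw [hA]; linarith
    have hP1nn : 0 ≤ solU x j * solU x (j+1) - solL x j * solL x (j+1) := by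
      have : solL x j * solL x (j+1) ≤ solU x j * solU x (j+1) :=
        mul_le_mul (solL_le_solU hcube j) (solL_le_solU hcube (j+1))
          (hLnn (j+1)) (hUnn j)
      linarith
    have hP2nn : 0 ≤ solU x (j-1) * solU x j - solL x (j-1) * solL x j := by
      have : solL x (j-1) * solL x j ≤ solU x (j-1) * solU x j :=
        mul_le_mul (solL_le_solU hcube (j-1)) (solL_le_solU hcube j)
          (hLnn j) (hUnn (j-1))
      linarith
    have hsub : lam (j+1) * (Dd j - (solU x j * solU x (j+1) - solL x j * solL x (j+1)))
        ≤ lam j * (Dd (j-1) - (solU x (j-1) * solU x j - solL x (j-1) * solL x j)) := by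
      simp only [hDd]
      linarith [h1, h2]
    have t1 : lam j * (Dd (j-1) - (solU x (j-1) * solU x j - solL x (j-1) * solL x j))
        ≤ lam j * Dd (j-1) := by
      linarith [mul_nonneg hlj.le hP2nn]
    have t2 : lam (j+1) * (solU x j * solU x (j+1) - solL x j * solL x (j+1))
        ≤ lam (j+1) * (A * k * M) :=
      mul_le_mul_of_nonneg_left hP1 hlj1.le
    linarith [hsub, t1, t2]
  have hQind : ∀ j, j < n → Dd j ≤ Qseq lam A Γ j * k * M := by
    intro j
    induction j with
    | zero =>
      intro _
      exact key0
    | succ j ih =>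
      intro hj
      have ihj := ih (by omega)
      have hlj1 : 0 < lam (j+1) := hlam _ (by omega)
      have hlj2 : 0 < lam (j+2) := hlam _ (by omega)
      have hk1 := keyj (j+1) (by omega) hj
      rw [show j + 1 - 1 = j from rfl] at hk1
      have hstep : lam (j+2) * Dd (j+1)
          ≤ lam (j+1) * (Qseq lam A Γ j * k * M) + lam (j+2) * (A * k * M) := by
        have := mul_le_mul_of_nonneg_left ihj hlj1.le
        calc lam (j+1+1) * Dd (j+1) ≤ lam (j+1) * Dd j + lam (j+1+1) * (A * k * M) := hk1
        _ ≤ lam (j+1) * (Qseq lam A Γ j * k * M) + lam (j+2) * (A * k * M) := by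
            linarith
      have hQs : Qseq lam A Γ (j+1) = lam (j+1) * Qseq lam A Γ j / lam (j+2) + A := rfl
      rw [hQs]
      have hrhs : lam (j+2) * ((lam (j+1) * Qseq lam A Γ j / lam (j+2) + A) * k * M)
          = lam (j+1) * (Qseq lam A Γ j * k * M) + lam (j+2) * (A * k * M) := by
        field_simp
      have hfin2 : lam (j+2) * Dd (j+1)
          ≤ lam (j+2) * ((lam (j+1) * Qseq lam A Γ j / lam (j+2) + A) * k * M) := by
        rw [hrhs]; exact hstep
      exact le_of_mul_le_mul_left hfin2 hlj2
  obtain ⟨j0, hj0mem, hj0⟩ := Finset.exists_mem_eq_sup' hne Dd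
  have hj0n : j0 < n := Finset.mem_range.mp hj0mem
  have hMle : M ≤ Qhat * k * M := by
    calc M = Dd j0 := hj0
    _ ≤ Qseq lam A Γ j0 * k * M := hQind j0 hj0n
    _ ≤ Qhat * k * M := by
        apply mul_le_mul_of_nonneg_right _ hM0
        apply mul_le_mul_of_nonneg_right _ hk.le
        exact hQ j0 hj0n
  have hMz : M ≤ 0 := by
    by_contra hpos
    push_neg at hpos
    have hlt := mul_lt_mul_of_pos_right hsmall hpos
    rw [one_mul] at hlt
    linarith [hMle]
  intro j hj
  have h1 := hD0 j
  have h2 := hDM j (le_of_lt hj)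
  have : Dd j = 0 := le_antisymm (le_trans h2 hMz) h1
  simp only [hDd] at this
  linarith

end Contraction

lemma g_strictAnti {g : ℝ → ℝ} (hg : ContDiff ℝ 1 g)
    (hgder : ∀ z : ℝ, 0 < z → deriv g z < 0) : StrictAntiOn g (Ici 0) := by
  apply strictAntiOn_of_deriv_neg (convex_Ici 0) hg.continuous.continuousOn
  intro z hz
  rw [interior_Ici] at hz
  exact hgder z hz

lemma g_lipschitz {g : ℝ → ℝ} (hg : ContDiff ℝ 1 g) (B : ℝ) :
    ∃ KG : ℝ, 0 ≤ KG ∧ ∀ a b : ℝ, 0 ≤ a → a ≤ b → b ≤ B →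
      g a - g b ≤ KG * (b - a) := by
  have hdc : Continuous (deriv g) := hg.continuous_deriv le_rfl
  obtain ⟨K0, hK0⟩ := (isCompact_Icc (a := (0:ℝ)) (b := B)).exists_bound_of_continuousOn
    hdc.continuousOn
  refine ⟨max K0 0, le_max_right _ _, ?_⟩
  intro a b ha hab hbB
  rcases eq_or_lt_of_le hab with rfl | hlt
  · simp
  · obtain ⟨c, hc, hcder⟩ := exists_hasDerivAt_eq_slope g (deriv g) hlt
      (hg.continuous.continuousOn)
      (fun z _ => ((hg.differentiable one_ne_zero) z).hasDerivAt)
    have hcmem : c ∈ Icc (0:ℝ) B := ⟨le_trans ha hc.1.le, le_trans hc.2.le hbB⟩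
    have hbound := hK0 c hcmem
    have heq1 : g b - g a = deriv g c * (b - a) := by
      rw [hcder, div_mul_cancel₀]
      exact ne_of_gt (sub_pos.mpr hlt)
    have h2 : |deriv g c| ≤ K0 := by rw [← Real.norm_eq_abs]; exact hbound
    have habs := abs_le.mp h2
    have hK0max : K0 ≤ max K0 0 := le_max_left _ _
    nlinarith [sub_pos.mpr hlt]

section Limits

variable {n : ℕ} {lam : ℕ → ℝ} {g : ℝ → ℝ} {k : ℝ} {x : ℝ → Fin n → ℝ}

lemma rfm_inward (hn : 2 ≤ n) (hlam : ∀ i, i ≤ n → 0 < lam i) (hk : 0 < k)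
    (hgpos : ∀ z : ℝ, 0 ≤ z → 0 < g z) :
    ∀ p : Fin n → ℝ, (∀ i, p i ∈ Icc (0:ℝ) 1) →
      ∀ i, (p i = 0 → 0 ≤ rfmField n lam k g p i) ∧
        (p i = 1 → rfmField n lam k g p i ≤ 0) := by
  intro p hp i
  have hX : ∀ j, extVec p j ∈ Icc (0:ℝ) 1 := by
    intro j
    by_cases h : j < n
    · rw [extVec_lt _ h]; exact hp _
    · rw [extVec_ge _ (by omega)]; exact ⟨le_rfl, zero_le_one⟩
  have hflow_nonneg : ∀ j, j ≤ n → 0 ≤ rfmFlow n lam k g p j := by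
    intro j hj
    rcases Nat.eq_zero_or_pos j with rfl | hjpos
    · rw [rfmFlow_zero]
      have harg : 0 ≤ lam n * extVec p (n-1) :=
        mul_nonneg (hlam n le_rfl).le (hX _).1
      exact mul_nonneg (mul_nonneg (mul_nonneg (hlam 0 (by omega)).le hk.le)
        (hgpos _ harg).le) (by linarith [(hX 0).2])
    · rw [rfmFlow_pos lam k g p hjpos hj]
      exact mul_nonneg (mul_nonneg (hlam j hj).le (hX (j-1)).1)
        (by linarith [(hX j).2])
  have hiv : extVec p i.val = p i := by
    rw [extVec_lt _ i.isLt]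
  constructor
  · intro hpi
    have hflow1 : rfmFlow n lam k g p (i.val + 1) = 0 := by
      rw [rfmFlow_pos lam k g p (by omega) (by omega : i.val + 1 ≤ n)]
      rw [show i.val + 1 - 1 = i.val from rfl, hiv, hpi]
      ring
    rw [rfmField, hflow1, sub_zero]
    exact hflow_nonneg i.val (by omega)
  · intro hpi
    have hflow0 : rfmFlow n lam k g p i.val = 0 := by
      rcases Nat.eq_zero_or_pos i.val with h0 | hjpos
      · rw [h0, rfmFlow_zero]
        rw [show extVec p 0 = p i by rw [← h0, hiv], hpi]
        ring
      · rw [rfmFlow_pos lam k g p hjpos (by omega), hiv, hpi]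
        ring
    rw [rfmField, hflow0, zero_sub, neg_nonpos]
    exact hflow_nonneg (i.val + 1) (by omega)

lemma tendsto_sol (hcube : ∀ t, 0 ≤ t → ∀ i, x t i ∈ Icc (0:ℝ) 1)
    (hUL : ∀ j, j < n → solU x j = solL x j) :
    Filter.Tendsto x Filter.atTop (nhds (fun i : Fin n => solU x i.val)) := by
  rw [tendsto_pi_nhds]
  intro i
  have heq : (fun t => x t i) = fun t => extVec (x t) i.val := by
    funext t
    rw [extVec_lt _ i.isLt]
  rw [heq]
  apply tendsto_of_liminf_eq_limsup
  · rw [show Filter.liminf (fun t => extVec (x t) i.val) Filter.atTop = solL x i.val from rfl]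
    exact (hUL i.val i.isLt).symm
  · rfl
  · exact hXbddU hcube i.val
  · exact hXbddL hcube i.val

lemma limit_is_equilibrium
    (hg : ContDiff ℝ 1 g)
    (hx : ∀ t, 0 ≤ t → HasDerivAt x (rfmField n lam k g (x t)) t)
    {p : Fin n → ℝ} (htend : Filter.Tendsto x Filter.atTop (nhds p)) :
    rfmField n lam k g p = 0 := by
  funext i
  have hci : ∀ m : ℕ, ∃ c ∈ Ioo (m:ℝ) ((m:ℝ)+1),
      rfmField n lam k g (x c) i = (x ((m:ℝ)+1) i - x (m:ℝ) i) / (((m:ℝ)+1) - (m:ℝ)) := by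
    intro m
    apply exists_hasDerivAt_eq_slope (fun t => x t i)
      (fun t => rfmField n lam k g (x t) i) (by linarith)
    · intro t ht
      have ht0 : (0:ℝ) ≤ t := le_trans (Nat.cast_nonneg m) ht.1
      exact ((hasDerivAt_pi.mp (hx t ht0) i).continuousAt).continuousWithinAt
    · intro t ht
      have ht0 : (0:ℝ) ≤ t := le_trans (Nat.cast_nonneg m) ht.1.le
      exact hasDerivAt_pi.mp (hx t ht0) i
  choose c hcmem hcslope using hci
  have hctend : Filter.Tendsto c Filter.atTop Filter.atTop := by
    apply Filter.tendsto_atTop_mono (fun m => (hcmem m).1.le)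
    exact tendsto_natCast_atTop_atTop
  have lim2 : Filter.Tendsto (fun m => rfmField n lam k g (x (c m)) i)
      Filter.atTop (nhds (rfmField n lam k g p i)) := by
    have hxc : Filter.Tendsto (fun m => x (c m)) Filter.atTop (nhds p) :=
      htend.comp hctend
    have hFc : Continuous (fun q : Fin n → ℝ => rfmField n lam k g q i) :=
      (continuous_apply i).comp (continuous_rfmField lam k hg)
    exact (hFc.tendsto p).comp hxc
  have lim1 : Filter.Tendsto (fun m : ℕ => (x ((m:ℝ)+1) i - x (m:ℝ) i) / (((m:ℝ)+1) - (m:ℝ)))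
      Filter.atTop (nhds 0) := by
    have e : (fun m : ℕ => (x ((m:ℝ)+1) i - x (m:ℝ) i) / (((m:ℝ)+1) - (m:ℝ)))
        = fun m : ℕ => x ((m:ℝ)+1) i - x (m:ℝ) i := by
      funext m
      rw [show ((m:ℝ)+1) - (m:ℝ) = 1 by ring, div_one]
    rw [e]
    have hpi : Filter.Tendsto (fun t => x t i) Filter.atTop (nhds (p i)) :=
      tendsto_pi_nhds.mp htend i
    have t1 : Filter.Tendsto (fun m : ℕ => x ((m:ℝ)+1) i) Filter.atTop (nhds (p i)) := by
      apply hpi.comp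
      apply Filter.tendsto_atTop_add_const_right
      exact tendsto_natCast_atTop_atTop
    have t2 : Filter.Tendsto (fun m : ℕ => x (m:ℝ) i) Filter.atTop (nhds (p i)) :=
      hpi.comp tendsto_natCast_atTop_atTop
    simpa using t1.sub t2
  have : Filter.Tendsto (fun m => rfmField n lam k g (x (c m)) i) Filter.atTop (nhds 0) := by
    have e : (fun m => rfmField n lam k g (x (c m)) i)
        = fun m : ℕ => (x ((m:ℝ)+1) i - x (m:ℝ) i) / (((m:ℝ)+1) - (m:ℝ)) := by
      funext m
      exact hcslope m
    rw [e]
    exact lim1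
  have := tendsto_nhds_unique lim2 this
  simpa using this

end Limits

section Equilib

variable {n : ℕ} {lam : ℕ → ℝ} {g : ℝ → ℝ} {k : ℝ}

lemma eq_flow_const (hn : 2 ≤ n) {p : Fin n → ℝ}
    (hfp : rfmField n lam k g p = 0) :
    ∀ j, j ≤ n → rfmFlow n lam k g p j = rfmFlow n lam k g p 0 := by
  intro j
  induction j with
  | zero => intro _; rfl
  | succ j ih =>
    intro hj
    have hj' : j < n := by omega
    have := congrFun hfp ⟨j, hj'⟩
    rw [rfmField] at this
    simp only [Pi.zero_apply] at this
    have h2 : rfmFlow n lam k g p (j+1) = rfmFlow n lam k g p j := by linarith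
    rw [h2]
    exact ih (by omega)

lemma eq_X_mem {p : Fin n → ℝ} (hp : ∀ i, p i ∈ Icc (0:ℝ) 1) :
    ∀ j, extVec p j ∈ Icc (0:ℝ) 1 := by
  intro j
  by_cases h : j < n
  · rw [extVec_lt _ h]; exact hp _
  · rw [extVec_ge _ (by omega)]; exact ⟨le_rfl, zero_le_one⟩

lemma eq_R_pos (hn : 2 ≤ n) (hlam : ∀ i, i ≤ n → 0 < lam i) (hk : 0 < k)
    (hgpos : ∀ z : ℝ, 0 ≤ z → 0 < g z)
    {p : Fin n → ℝ} (hp : ∀ i, p i ∈ Icc (0:ℝ) 1)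
    (hfp : rfmField n lam k g p = 0) :
    0 < rfmFlow n lam k g p 0 := by
  have hX := eq_X_mem hp
  have hfl := eq_flow_const (lam := lam) (g := g) (k := k) hn hfp
  set R := rfmFlow n lam k g p 0 with hR
  have hRn : lam n * extVec p (n-1) = R := by
    have := hfl n le_rfl
    rw [rfmFlow_pos lam k g p (by omega) le_rfl, extVec_ge p (le_refl n)] at this
    rw [← this]; ring
  have hRnn : 0 ≤ R := by
    rw [← hRn]
    exact mul_nonneg (hlam n le_rfl).le (hX _).1
  rcases eq_or_lt_of_le hRnn with hR0 | hpos
  · exfalso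
    -- R = 0 leads to contradiction
    have hgp : 0 < lam 0 * k * g (lam n * extVec p (n-1)) :=
      mul_pos (mul_pos (hlam 0 (by omega)) hk)
        (hgpos _ (mul_nonneg (hlam n le_rfl).le (hX _).1))
    have hX0 : extVec p 0 = 1 := by
      have h0 : rfmFlow n lam k g p 0 = 0 := hR0.symm
      rw [rfmFlow_zero] at h0
      have : 1 - extVec p 0 = 0 := by
        rcases mul_eq_zero.mp h0 with h | h
        · exact absurd h (ne_of_gt hgp)
        · exact h
      linarith
    have hone : ∀ j, j ≤ n-2 → extVec p j = 1 := by
      intro j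
      induction j with
      | zero => intro _; exact hX0
      | succ j ih =>
        intro hj
        have hXj : extVec p j = 1 := ih (by omega)
        have hflj := hfl (j+1) (by omega)
        rw [← hR0] at hflj
        rw [rfmFlow_pos lam k g p (by omega) (by omega)] at hflj
        simp only [Nat.add_sub_cancel] at hflj
        rw [hXj, mul_one] at hflj
        have : 1 - extVec p (j+1) = 0 := by
          rcases mul_eq_zero.mp hflj with h | h
          · exact absurd h (ne_of_gt (hlam (j+1) (by omega)))
          · exact h
        linarith
    have hXn1 : extVec p (n-1) = 0 := by
      have h1 : lam n * extVec p (n-1) = 0 := by rw [hRn, ← hR0]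
      rcases mul_eq_zero.mp h1 with h | h
      · exact absurd h (ne_of_gt (hlam n le_rfl))
      · exact h
    have hfln1 := hfl (n-1) (by omega)
    rw [← hR0] at hfln1
    rw [rfmFlow_pos lam k g p (by omega) (by omega)] at hfln1
    rw [show n - 1 - 1 = n - 2 by omega] at hfln1
    rw [hone (n-2) le_rfl, hXn1] at hfln1
    have := hlam (n-1) (by omega)
    simp at hfln1
    linarith
  · exact hpos

lemma eq_lt_one (hn : 2 ≤ n) (hlam : ∀ i, i ≤ n → 0 < lam i) (hk : 0 < k)
    (hgpos : ∀ z : ℝ, 0 ≤ z → 0 < g z)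
    {p : Fin n → ℝ} (hp : ∀ i, p i ∈ Icc (0:ℝ) 1)
    (hfp : rfmField n lam k g p = 0) :
    ∀ j, j ≤ n - 1 → extVec p j < 1 := by
  have hX := eq_X_mem hp
  have hfl := eq_flow_const (lam := lam) (g := g) (k := k) hn hfp
  have hRpos := eq_R_pos hn hlam hk hgpos hp hfp
  intro j hj
  rcases Nat.eq_zero_or_pos j with rfl | hjpos
  · -- j = 0, use flow 0
    by_contra hc
    push_neg at hc
    have hX1 : extVec p 0 = 1 := le_antisymm (hX 0).2 hc
    have h0 : rfmFlow n lam k g p 0 = 0 := by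
      rw [rfmFlow_zero, hX1]
      ring
    rw [h0] at hRpos
    exact lt_irrefl 0 hRpos
  · -- j ≥ 1, use flow j = R > 0
    by_contra hc
    push_neg at hc
    have hX1 : extVec p j = 1 := le_antisymm (hX j).2 hc
    have hflj := hfl j (by omega)
    rw [rfmFlow_pos lam k g p hjpos (by omega), hX1] at hflj
    simp only [sub_self, mul_zero] at hflj
    rw [← hflj] at hRpos
    exact lt_irrefl 0 hRpos

end Equilib

section Equilib2

variable {n : ℕ} {lam : ℕ → ℝ} {g : ℝ → ℝ} {k : ℝ}

lemma eq_flow_n (hn : 2 ≤ n) {p : Fin n → ℝ}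
    (hfp : rfmField n lam k g p = 0) :
    lam n * extVec p (n-1) = rfmFlow n lam k g p 0 := by
  have := eq_flow_const (lam := lam) (g := g) (k := k) hn hfp n le_rfl
  rw [rfmFlow_pos lam k g p (by omega) le_rfl, extVec_ge p (le_refl n)] at this
  rw [← this]; ring

lemma eq_comp (hn : 2 ≤ n) (hlam : ∀ i, i ≤ n → 0 < lam i) (hk : 0 < k)
    (hgpos : ∀ z : ℝ, 0 ≤ z → 0 < g z)
    {p q : Fin n → ℝ} (hp : ∀ i, p i ∈ Icc (0:ℝ) 1) (hq : ∀ i, q i ∈ Icc (0:ℝ) 1)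
    (hfp : rfmField n lam k g p = 0) (hfq : rfmField n lam k g q = 0)
    (hRle : rfmFlow n lam k g p 0 ≤ rfmFlow n lam k g q 0) :
    ∀ m, m ≤ n-1 → extVec p (n-1-m) ≤ extVec q (n-1-m) ∧
      (rfmFlow n lam k g p 0 < rfmFlow n lam k g q 0 →
        extVec p (n-1-m) < extVec q (n-1-m)) := by
  have hXp := eq_X_mem hp
  have hXq := eq_X_mem hq
  have hflp := eq_flow_const (lam := lam) (g := g) (k := k) hn hfp
  have hflq := eq_flow_const (lam := lam) (g := g) (k := k) hn hfq
  have hlt1p := eq_lt_one hn hlam hk hgpos hp hfp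
  have hlt1q := eq_lt_one hn hlam hk hgpos hq hfq
  set Rp := rfmFlow n lam k g p 0 with hRp
  set Rq := rfmFlow n lam k g q 0 with hRq
  have hRppos := eq_R_pos hn hlam hk hgpos hp hfp
  have hRqpos := eq_R_pos hn hlam hk hgpos hq hfq
  intro m
  induction m with
  | zero =>
    intro _
    have h1 : lam n * extVec p (n-1) = Rp := eq_flow_n hn hfp
    have h2 : lam n * extVec q (n-1) = Rq := eq_flow_n hn hfq
    have hln := hlam n le_rfl
    rw [Nat.sub_zero]
    constructor
    · apply le_of_mul_le_mul_left _ hln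
      rw [h1, h2]; exact hRle
    · intro hlt
      apply lt_of_mul_lt_mul_left _ hln.le
      rw [h1, h2]; exact hlt
  | succ m ih =>
    intro hm
    have ihm := ih (by omega)
    set j : ℕ := n - 1 - m with hj
    have hj1 : 1 ≤ j := by omega
    have hjn : j ≤ n - 1 := by omega
    have hlj := hlam j (by omega)
    have hp1 : lam j * extVec p (j-1) * (1 - extVec p j) = Rp := by
      rw [← hflp j (by omega), rfmFlow_pos lam k g p hj1 (by omega)]
    have hq1 : lam j * extVec q (j-1) * (1 - extVec q j) = Rq := by
      rw [← hflq j (by omega), rfmFlow_pos lam k g q hj1 (by omega)]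
    have hplt : extVec p j < 1 := hlt1p j hjn
    have hqlt : extVec q j < 1 := hlt1q j hjn
    have hle : extVec p j ≤ extVec q j := ihm.1
    have hsub : n - 1 - (m+1) = j - 1 := by omega
    rw [hsub]
    have hqm0 : 0 ≤ extVec q (j-1) := (hXq _).1
    have hpm0 : 0 ≤ extVec p (j-1) := (hXp _).1
    constructor
    · by_contra hc
      push_neg at hc
      have c1 : lam j * extVec q (j-1) * (1 - extVec q j)
          < lam j * extVec p (j-1) * (1 - extVec p j) := by
        calc lam j * extVec q (j-1) * (1 - extVec q j)
            ≤ lam j * extVec q (j-1) * (1 - extVec p j) :=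
              mul_le_mul_of_nonneg_left (by linarith) (mul_nonneg hlj.le hqm0)
        _ < lam j * extVec p (j-1) * (1 - extVec p j) := by
            have h1 : 0 < 1 - extVec p j := by linarith
            exact mul_lt_mul_of_pos_right (mul_lt_mul_of_pos_left hc hlj) h1
      rw [hp1, hq1] at c1
      linarith
    · intro hlt
      by_contra hc
      push_neg at hc
      have c1 : lam j * extVec q (j-1) * (1 - extVec q j)
          ≤ lam j * extVec p (j-1) * (1 - extVec p j) := by
        calc lam j * extVec q (j-1) * (1 - extVec q j)
            ≤ lam j * extVec q (j-1) * (1 - extVec p j) :=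
              mul_le_mul_of_nonneg_left (by linarith) (mul_nonneg hlj.le hqm0)
        _ ≤ lam j * extVec p (j-1) * (1 - extVec p j) :=
              mul_le_mul_of_nonneg_right (mul_le_mul_of_nonneg_left hc hlj.le)
                (by linarith)
      rw [hp1, hq1] at c1
      linarith

lemma equilibrium_unique (hn : 2 ≤ n) (hlam : ∀ i, i ≤ n → 0 < lam i) (hk : 0 < k)
    (hgpos : ∀ z : ℝ, 0 ≤ z → 0 < g z) (hganti : AntitoneOn g (Ici 0))
    {p q : Fin n → ℝ} (hp : ∀ i, p i ∈ Icc (0:ℝ) 1) (hq : ∀ i, q i ∈ Icc (0:ℝ) 1)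
    (hfp : rfmField n lam k g p = 0) (hfq : rfmField n lam k g q = 0) :
    p = q := by
  have hnostrict : ∀ p' q' : Fin n → ℝ, (∀ i, p' i ∈ Icc (0:ℝ) 1) →
      (∀ i, q' i ∈ Icc (0:ℝ) 1) → rfmField n lam k g p' = 0 →
      rfmField n lam k g q' = 0 →
      ¬ (rfmFlow n lam k g p' 0 < rfmFlow n lam k g q' 0) := by
    intro p' q' hp' hq' hfp' hfq' hlt
    have hcomp := eq_comp hn hlam hk hgpos hp' hq' hfp' hfq' hlt.le (n-1) le_rfl
    rw [show n - 1 - (n-1) = 0 by omega] at hcomp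
    have hX0 : extVec p' 0 < extVec q' 0 := hcomp.2 hlt
    have hq0lt : extVec q' 0 < 1 := eq_lt_one hn hlam hk hgpos hq' hfq' 0 (by omega)
    have hRp' := eq_R_pos hn hlam hk hgpos hp' hfp'
    have hRq' := eq_R_pos hn hlam hk hgpos hq' hfq'
    have hfl0p : rfmFlow n lam k g p' 0
        = lam 0 * k * g (rfmFlow n lam k g p' 0) * (1 - extVec p' 0) := by
      conv_lhs => rw [rfmFlow_zero]
      rw [eq_flow_n hn hfp']
    have hfl0q : rfmFlow n lam k g q' 0
        = lam 0 * k * g (rfmFlow n lam k g q' 0) * (1 - extVec q' 0) := by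
      conv_lhs => rw [rfmFlow_zero]
      rw [eq_flow_n hn hfq']
    have hgle : g (rfmFlow n lam k g q' 0) ≤ g (rfmFlow n lam k g p' 0) :=
      hganti hRp'.le hRq'.le hlt.le
    have hgq : 0 < g (rfmFlow n lam k g q' 0) := hgpos _ hRq'.le
    have hl0k : 0 < lam 0 * k := mul_pos (hlam 0 (by omega)) hk
    have : rfmFlow n lam k g q' 0 < rfmFlow n lam k g p' 0 := by
      calc rfmFlow n lam k g q' 0
          = lam 0 * k * g (rfmFlow n lam k g q' 0) * (1 - extVec q' 0) := hfl0q
      _ ≤ lam 0 * k * g (rfmFlow n lam k g p' 0) * (1 - extVec q' 0) := by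
          apply mul_le_mul_of_nonneg_right _ (by linarith)
          exact mul_le_mul_of_nonneg_left hgle hl0k.le
      _ < lam 0 * k * g (rfmFlow n lam k g p' 0) * (1 - extVec p' 0) := by
          apply mul_lt_mul_of_pos_left (by linarith)
          exact mul_pos hl0k (hgpos _ hRp'.le)
      _ = rfmFlow n lam k g p' 0 := hfl0p.symm
    linarith
  have hReq : rfmFlow n lam k g p 0 = rfmFlow n lam k g q 0 := by
    rcases lt_trichotomy (rfmFlow n lam k g p 0) (rfmFlow n lam k g q 0) with h | h | h
    · exact absurd h (hnostrict p q hp hq hfp hfq)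
    · exact h
    · exact absurd h (hnostrict q p hq hp hfq hfp)
  funext i
  have h1 := (eq_comp hn hlam hk hgpos hp hq hfp hfq hReq.le (n-1-i.val) (by omega)).1
  have h2 := (eq_comp hn hlam hk hgpos hq hp hfq hfp hReq.ge (n-1-i.val) (by omega)).1
  rw [show n - 1 - (n-1-i.val) = i.val by omega] at h1 h2
  have : extVec p i.val = extVec q i.val := le_antisymm h1 h2
  rw [extVec_lt p i.isLt, extVec_lt q i.isLt] at this
  simpa using this

end Equilib2

noncomputable def Eseq (n : ℕ) (lam : ℕ → ℝ) : ℕ → ℝ → ℝ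
  | 0 => fun R => R / lam n
  | (m+1) => fun R => R / (lam (n-1-m) * (1 - Eseq n lam m R))

section Exist

variable {n : ℕ} {lam : ℕ → ℝ} {g : ℝ → ℝ}

lemma exists_equilibrium (hn : 2 ≤ n) (hlam : ∀ i, i ≤ n → 0 < lam i)
    (hgc : Continuous g) (hgpos : ∀ z : ℝ, 0 ≤ z → 0 < g z)
    (hganti : AntitoneOn g (Ici 0)) :
    ∃ kstar1 : ℝ, 0 < kstar1 ∧ ∀ k : ℝ, 0 < k → k < kstar1 →
      ∃ e : Fin n → ℝ, (∀ i, e i ∈ Ioo (0:ℝ) 1) ∧ rfmField n lam k g e = 0 := by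
  -- a uniform lower bound on the positive rates
  obtain ⟨lmin, hlmin_pos, hlmin⟩ : ∃ lmin : ℝ, 0 < lmin ∧
      ∀ j, 1 ≤ j → j ≤ n → lmin ≤ lam j := by
    have hne : (Finset.Icc 1 n).Nonempty := ⟨1, by simp; omega⟩
    refine ⟨(Finset.Icc 1 n).inf' hne lam, ?_, ?_⟩
    · rw [Finset.lt_inf'_iff]
      intro j hj
      rw [Finset.mem_Icc] at hj
      exact hlam j hj.2
    · intro j h1 h2
      exact Finset.inf'_le lam (Finset.mem_Icc.mpr ⟨h1, h2⟩)
  set ρ : ℝ := lmin / 4 with hρ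
  have hρpos : 0 < ρ := by positivity
  have hg0 : 0 < g 0 := hgpos 0 le_rfl
  have hl0 : 0 < lam 0 := hlam 0 (by omega)
  refine ⟨ρ / (lam 0 * g 0), by positivity, ?_⟩
  intro k hk hksmall
  -- bounds for the recursion
  have hE : ∀ m, m ≤ n-1 → ∀ R ∈ Icc (0:ℝ) ρ,
      0 ≤ Eseq n lam m R ∧ Eseq n lam m R ≤ 1/2 ∧ (0 < R → 0 < Eseq n lam m R) := by
    intro m
    induction m with
    | zero =>
      intro _ R hR
      have hln : 0 < lam n := hlam n le_rfl
      have hlminn : lmin ≤ lam n := hlmin n (by omega) le_rfl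
      refine ⟨div_nonneg hR.1 hln.le, ?_, fun hRpos => div_pos hRpos hln⟩
      rw [Eseq, div_le_iff₀ hln]
      calc R ≤ ρ := hR.2
      _ = lmin/4 := hρ
      _ ≤ lam n / 4 := by linarith
      _ ≤ 1/2 * lam n := by linarith
    | succ m ih =>
      intro hm R hR
      obtain ⟨h0, h12, hpos⟩ := ih (by omega) R hR
      have hj1 : 1 ≤ n-1-m := by omega
      have hjn : n-1-m ≤ n := by omega
      have hlj : 0 < lam (n-1-m) := hlam _ hjn
      have hlminj : lmin ≤ lam (n-1-m) := hlmin _ hj1 hjn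
      have hden : lmin/2 ≤ lam (n-1-m) * (1 - Eseq n lam m R) := by
        calc lmin/2 ≤ lam (n-1-m) * (1/2) := by linarith
        _ ≤ lam (n-1-m) * (1 - Eseq n lam m R) := by
            apply mul_le_mul_of_nonneg_left (by linarith) hlj.le
      have hdenpos : 0 < lam (n-1-m) * (1 - Eseq n lam m R) := by linarith [hlmin_pos]
      refine ⟨div_nonneg hR.1 hdenpos.le, ?_, fun hRpos => div_pos hRpos hdenpos⟩
      rw [Eseq, div_le_iff₀ hdenpos]
      calc R ≤ ρ := hR.2
      _ = lmin/4 := hρ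
      _ = 1/2 * (lmin/2) := by ring
      _ ≤ 1/2 * (lam (n-1-m) * (1 - Eseq n lam m R)) := by linarith
  have hE0 : ∀ m, Eseq n lam m 0 = 0 := by
    intro m
    induction m with
    | zero => rw [Eseq]; exact zero_div _
    | succ m ih => rw [Eseq]; exact zero_div _
  have hEcont : ∀ m, m ≤ n-1 → ContinuousOn (Eseq n lam m) (Icc 0 ρ) := by
    intro m
    induction m with
    | zero =>
      intro _
      exact (continuous_id.div_const _).continuousOn
    | succ m ih =>
      intro hm
      apply ContinuousOn.div continuousOn_id
      · exact continuousOn_const.mul (continuousOn_const.sub (ih (by omega)))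
      · intro R hR
        have := (hE m (by omega) R hR).2.1
        have hlj : 0 < lam (n-1-m) := hlam _ (by omega)
        have : 0 < lam (n-1-m) * (1 - Eseq n lam m R) := by nlinarith
        exact ne_of_gt this
  -- the scalar equation
  set h : ℝ → ℝ := fun R => lam 0 * k * g R * (1 - Eseq n lam (n-1) R) - R with hh
  have hhcont : ContinuousOn h (Icc 0 ρ) := by
    apply ContinuousOn.sub _ continuousOn_id
    exact (continuousOn_const.mul (hgc.continuousOn)).mul
      (continuousOn_const.sub (hEcont (n-1) le_rfl))
  have hh0 : 0 < h 0 := by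
    rw [hh]
    simp only [hE0]
    have : lam 0 * k * g 0 * (1 - 0) - 0 = lam 0 * k * g 0 := by ring
    rw [this]
    positivity
  have hhρ : h ρ < 0 := by
    rw [hh]
    simp only
    have hEρ := hE (n-1) le_rfl ρ ⟨hρpos.le, le_rfl⟩
    have hgρ : g ρ ≤ g 0 := hganti self_mem_Ici hρpos.le hρpos.le
    have hgρpos : 0 < g ρ := hgpos ρ hρpos.le
    have hb : lam 0 * k * g ρ * (1 - Eseq n lam (n-1) ρ) ≤ lam 0 * k * g 0 := by
      calc lam 0 * k * g ρ * (1 - Eseq n lam (n-1) ρ) ≤ lam 0 * k * g ρ * 1 := by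
            apply mul_le_mul_of_nonneg_left _ (by positivity)
            linarith [hEρ.1]
      _ ≤ lam 0 * k * g 0 := by
            rw [mul_one]
            apply mul_le_mul_of_nonneg_left hgρ (by positivity)
    have hklt : lam 0 * k * g 0 < ρ := by
      rw [lt_div_iff₀ (by positivity)] at hksmall
      nlinarith
    linarith
  obtain ⟨R, hRmem, hR0⟩ : ∃ R ∈ Icc (0:ℝ) ρ, h R = 0 := by
    have := intermediate_value_Icc' hρpos.le hhcont
    have h0mem : (0:ℝ) ∈ Icc (h ρ) (h 0) := ⟨hhρ.le, hh0.le⟩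
    obtain ⟨R, hR, hR0⟩ := this h0mem
    exact ⟨R, hR, hR0⟩
  have hRpos : 0 < R := by
    rcases eq_or_lt_of_le hRmem.1 with h0 | h0
    · exfalso; rw [← h0] at hR0; linarith
    · exact h0
  -- define the equilibrium
  refine ⟨fun i => Eseq n lam (n-1-i.val) R, ?_, ?_⟩
  · intro i
    have := hE (n-1-i.val) (by omega) R hRmem
    exact ⟨this.2.2 hRpos, by linarith [this.2.1]⟩
  · -- all flows equal R
    set e : Fin n → ℝ := fun i => Eseq n lam (n-1-i.val) R with he
    have hXe : ∀ j, j < n → extVec e j = Eseq n lam (n-1-j) R := by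
      intro j hj
      rw [extVec_lt _ hj]
    have hfln : rfmFlow n lam k g e n = R := by
      rw [rfmFlow_pos lam k g e (by omega) le_rfl]
      rw [extVec_ge e (le_refl n), hXe (n-1) (by omega)]
      rw [show n - 1 - (n-1) = 0 by omega, Eseq]
      have hln : lam n ≠ 0 := ne_of_gt (hlam n le_rfl)
      field_simp
      norm_num
    have hflj : ∀ j, 1 ≤ j → j ≤ n-1 → rfmFlow n lam k g e j = R := by
      intro j h1 h2
      rw [rfmFlow_pos lam k g e h1 (by omega)]
      rw [hXe j (by omega), hXe (j-1) (by omega)]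
      have hm : n - 1 - (j-1) = (n-1-j) + 1 := by omega
      rw [hm, Eseq]
      rw [show n - 1 - (n-1-j) = j by omega]
      have hEj := hE (n-1-j) (by omega) R hRmem
      have hlj : 0 < lam j := hlam j (by omega)
      have hden : 0 < lam j * (1 - Eseq n lam (n-1-j) R) := by nlinarith [hEj.2.1]
      have hne : 1 - Eseq n lam (n-1-j) R ≠ 0 := by linarith [hEj.2.1]
      field_simp
    have hfl0 : rfmFlow n lam k g e 0 = R := by
      rw [rfmFlow_zero]
      rw [hXe (n-1) (by omega), hXe 0 (by omega)]
      rw [show n - 1 - (n-1) = 0 by omega]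
      have hgarg : lam n * Eseq n lam 0 R = R := by
        rw [Eseq]
        field_simp
        rw [div_self (ne_of_gt (hlam n le_rfl))]
      rw [hgarg, show n - 1 - 0 = n - 1 from rfl]
      have := hR0
      rw [hh] at this
      simp only at this
      linarith
    funext i
    rw [rfmField]
    have hflall : ∀ j, j ≤ n → rfmFlow n lam k g e j = R := by
      intro j hj
      rcases Nat.eq_zero_or_pos j with rfl | hjpos
      · exact hfl0
      · rcases eq_or_lt_of_le hj with rfl | hlt
        · exact hfln
        · exact hflj j hjpos (by omega)
    rw [hflall i.val (by omega), hflall (i.val+1) (by omega)]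
    simp

end Exist
end RFMaux

open RFMaux Set Filter

/-- For all sufficiently small feedback gains, the closed-loop
RFM admits a unique equilibrium `e ∈ (0,1)^n` and every solution starting in
the unit cube converges to `e`. -/
theorem rfm_negfb_small_gain_global_attraction
    (n : ℕ) (hn : 2 ≤ n) (lam : ℕ → ℝ) (hlam : ∀ i, i ≤ n → 0 < lam i)
    (g : ℝ → ℝ) (hg : ContDiff ℝ 1 g) (hgpos : ∀ z : ℝ, 0 ≤ z → 0 < g z)
    (hgder : ∀ z : ℝ, 0 < z → deriv g z < 0) :
    ∃ kstar : ℝ, 0 < kstar ∧ ∀ k : ℝ, 0 < k → k < kstar →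
      ∃ e : Fin n → ℝ, (∀ i, e i ∈ Set.Ioo (0:ℝ) 1) ∧
        rfmField n lam k g e = 0 ∧
        (∀ e' : Fin n → ℝ, (∀ i, e' i ∈ Set.Icc (0:ℝ) 1) →
          rfmField n lam k g e' = 0 → e' = e) ∧
        ∀ x : ℝ → Fin n → ℝ,
          (∀ t : ℝ, 0 ≤ t → HasDerivAt x (rfmField n lam k g (x t)) t) →
          (∀ i, x 0 i ∈ Set.Icc (0:ℝ) 1) →
          Filter.Tendsto x Filter.atTop (nhds e) := by
  have hgc : Continuous g := hg.continuous
  have hganti : AntitoneOn g (Ici 0) := (g_strictAnti hg hgder).antitoneOn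
  obtain ⟨kstar1, hkstar1, hex⟩ := exists_equilibrium hn hlam hgc hgpos hganti
  obtain ⟨KG, hKG0, hKG⟩ := g_lipschitz hg (lam n)
  have hne : (Finset.range n).Nonempty := Finset.nonempty_range_iff.mpr (by omega)
  set Chat : ℝ := (Finset.range n).sup' hne (Cseq n lam g) with hChat
  have hChat0 : 0 ≤ Chat := by
    have h1 : 0 < Cseq n lam g 0 := Cseq_pos hn hlam (hgpos 0 le_rfl) 0 (by omega)
    calc (0:ℝ) ≤ Cseq n lam g 0 := h1.le
    _ ≤ Chat := Finset.le_sup' _ (Finset.mem_range.mpr (by omega))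
  set Qhat : ℝ := (Finset.range n).sup' hne
    (Qseq lam (2*Chat) (lam 0 * lam n * KG / lam 1)) with hQhat
  have hQ : ∀ j, j < n → Qseq lam (2*Chat) (lam 0 * lam n * KG / lam 1) j ≤ Qhat :=
    fun j hj => Finset.le_sup' _ (Finset.mem_range.mpr hj)
  set kstar : ℝ := min kstar1 (1 / (max Qhat 1)) with hkstar
  have hmaxQ : 0 < max Qhat 1 := lt_of_lt_of_le one_pos (le_max_right _ _)
  refine ⟨kstar, lt_min hkstar1 (by positivity), ?_⟩
  intro k hk hklt
  have hk1 : k < kstar1 := lt_of_lt_of_le hklt (min_le_left _ _)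
  have hsmall : Qhat * k < 1 := by
    have h2 : k < 1 / (max Qhat 1) := lt_of_lt_of_le hklt (min_le_right _ _)
    rw [lt_div_iff₀ hmaxQ] at h2
    calc Qhat * k ≤ max Qhat 1 * k :=
      mul_le_mul_of_nonneg_right (le_max_left _ _) hk.le
    _ < 1 := by linarith
  obtain ⟨e, hemem, hfe⟩ := hex k hk hk1
  have hecube : ∀ i, e i ∈ Icc (0:ℝ) 1 := fun i => ⟨(hemem i).1.le, (hemem i).2.le⟩
  refine ⟨e, hemem, hfe, ?_, ?_⟩
  · intro e' he' hfe'
    exact equilibrium_unique hn hlam hk hgpos hganti he' hecube hfe' hfe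
  · intro x hxder hx0
    have hcube : ∀ t, 0 ≤ t → ∀ i, x t i ∈ Icc (0:ℝ) 1 :=
      cube_invariant (contDiff_rfmField lam k hg) (rfm_inward hn hlam hk hgpos) hxder hx0
    have hCb : ∀ j, solU x j ≤ Chat * k := by
      intro j
      by_cases hj : j ≤ n - 1
      · calc solU x j ≤ Cseq n lam g j * k :=
          solU_le_Cseq hn hlam hk hgc hgpos hganti hxder hcube j hj
        _ ≤ Chat * k := by
          apply mul_le_mul_of_nonneg_right _ hk.le
          exact Finset.le_sup' _ (Finset.mem_range.mpr (by omega))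
      · have hz : solU x j = 0 := by
          have heq : (fun t => extVec (x t) j) = fun _ => (0:ℝ) :=
            funext fun t => extVec_ge _ (by omega)
          rw [solU, heq, Filter.limsup_const]
        rw [hz]
        positivity
    have hUL : ∀ j, j < n → solU x j = solL x j :=
      solU_eq_solL_of_small hn hlam hk hgc hgpos hganti hxder hcube Chat KG Qhat
        hChat0 hCb hKG0 hKG hQ hsmall
    have htend : Filter.Tendsto x Filter.atTop (nhds (fun i : Fin n => solU x i.val)) :=
      tendsto_sol hcube hUL
    have hp0 : rfmField n lam k g (fun i : Fin n => solU x i.val) = 0 :=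
      limit_is_equilibrium hg hxder htend
    have hpcube : ∀ i : Fin n, solU x i.val ∈ Icc (0:ℝ) 1 :=
      fun i => ⟨solU_nonneg hcube _, solU_le_one hcube _⟩
    have hpe : (fun i : Fin n => solU x i.val) = e :=
      equilibrium_unique hn hlam hk hgpos hganti hpcube hecube hp0 hfe
    rw [← hpe]
    exact htend
end
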